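/- arXiv:2411.19087 — 10 statements merged into one kernel-verified Lean document; each statement's English description precedes it below -/
import Mathlib

section
/- Let q be a prime power, m,k positive integers, n ≥ k, s ∈ {1,…,m−1}, and X a k×(n−k) matrix over F_{q^m}. Let U be the F_q-span in F_{q^m}^k of the columns of G = [I_k | X], and let r := rank over F_{q^m} of the matrix X^{[s]} − X. Then the F_{q^m}-dimension of the subspace {p ∈ F_s : p(u) = 0 for all u ∈ U} equals the binomial coefficient C(k−r, 2) (natural-number binomial, equal to 0 when k−r < 2). -/
open MvPolynomial

/-- The `F_{q^m}`-space of homogeneous polynomials of degree `d` in `k` variables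
vanishing at every point of `U`. -/
noncomputable def homogVanish (Fqm : Type) [Field Fqm] (k d : ℕ)
    (U : Set (Fin k → Fqm)) : Submodule Fqm (MvPolynomial (Fin k) Fqm) :=
  homogeneousSubmodule (Fin k) Fqm d ⊓
    ⨅ u ∈ U, LinearMap.ker (aeval (R := Fqm) u).toLinearMap

/-- The space `F_s`: the `F_{q^m}`-span of the forms `x_i^Q x_j - x_i x_j^Q` for `i < j`,
where `Q = q^s`. -/
noncomputable def formSpace (Fqm : Type) [Field Fqm] (k Q : ℕ) :
    Submodule Fqm (MvPolynomial (Fin k) Fqm) :=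
  Submodule.span Fqm {p | ∃ i j : Fin k, i < j ∧
    p = X i ^ Q * X j - X i * X j ^ Q}

/-- The `F_q`-span of the columns of the matrix `G = [I_k | X]`. -/
noncomputable def colSpanG (Fq Fqm : Type) [Field Fq] [Field Fqm] [Algebra Fq Fqm]
    (k t : ℕ) (M : Matrix (Fin k) (Fin t) Fqm) : Submodule Fq (Fin k → Fqm) :=
  Submodule.span Fq (Set.range (fun i : Fin k => (Pi.single i 1 : Fin k → Fqm)) ∪
    Set.range (fun j : Fin t => fun i => M i j))

namespace Stmt0Aux

open Matrix

variable {F : Type} [Field F] {k t : ℕ}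

/-- strictly upper-triangular index pairs -/
abbrev IdxPairs (k : ℕ) := {p : Fin k × Fin k // p.1 < p.2}

/-- the alternating matrix with given strictly-upper entries -/
def altMat (a : IdxPairs k → F) : Matrix (Fin k) (Fin k) F :=
  Matrix.of fun i j =>
    if h : i < j then a ⟨(i, j), h⟩ else if h' : j < i then - a ⟨(j, i), h'⟩ else 0

lemma altMat_apply_lt (a : IdxPairs k → F) {i j : Fin k} (h : i < j) :
    altMat a i j = a ⟨(i, j), h⟩ := by simp [altMat, h]

lemma altMat_apply_gt (a : IdxPairs k → F) {i j : Fin k} (h : j < i) :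
    altMat a i j = - a ⟨(j, i), h⟩ := by
  have : ¬ i < j := asymm h
  simp [altMat, this, h]

lemma altMat_apply_diag (a : IdxPairs k → F) (i : Fin k) :
    altMat a i i = 0 := by simp [altMat]

lemma altMat_add (a b : IdxPairs k → F) : altMat (a + b) = altMat a + altMat b := by
  ext i j
  rcases lt_trichotomy i j with h | h | h
  · simp [altMat_apply_lt _ h]
  · subst h; simp [altMat_apply_diag]
  · simp [altMat_apply_gt _ h]; ring

lemma altMat_smul (c : F) (a : IdxPairs k → F) : altMat (c • a) = c • altMat a := by
  ext i j
  rcases lt_trichotomy i j with h | h | h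
  · simp [altMat_apply_lt _ h]
  · subst h; simp [altMat_apply_diag]
  · simp [altMat_apply_gt _ h]

lemma altMat_transpose (a : IdxPairs k → F) : (altMat a)ᵀ = - altMat a := by
  ext i j
  rcases lt_trichotomy i j with h | h | h
  · simp [Matrix.transpose_apply, altMat_apply_lt _ h, altMat_apply_gt _ h]
  · subst h; simp [altMat_apply_diag]
  · simp [Matrix.transpose_apply, altMat_apply_lt _ h, altMat_apply_gt _ h]

/-- if a matrix is alternating then it is `altMat` of its upper entries -/
lemma eq_altMat_of_alternating (A : Matrix (Fin k) (Fin k) F) (hT : Aᵀ = -A)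
    (hd : ∀ i, A i i = 0) : A = altMat (fun p => A p.1.1 p.1.2) := by
  ext i j
  rcases lt_trichotomy i j with h | h | h
  · rw [altMat_apply_lt _ h]
  · subst h; rw [altMat_apply_diag, hd]
  · rw [altMat_apply_gt _ h]
    have := congrFun (congrFun hT j) i
    simp only [Matrix.transpose_apply, Matrix.neg_apply] at this
    rw [← this]

/-- key identity: the bilinear form of `altMat a` as a sum over pairs -/
lemma beta_eq (a : IdxPairs k → F) (u v : Fin k → F) :
    u ⬝ᵥ (altMat a).mulVec v
      = ∑ p : IdxPairs k, a p * (u p.1.1 * v p.1.2 - v p.1.1 * u p.1.2) := by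
  classical
  have expand : u ⬝ᵥ (altMat a).mulVec v
      = ∑ q ∈ (Finset.univ : Finset (Fin k × Fin k)), u q.1 * (altMat a q.1 q.2 * v q.2) := by
    rw [← Finset.univ_product_univ, Finset.sum_product]
    simp [dotProduct, Matrix.mulVec, Finset.mul_sum]
  rw [expand]
  rw [← Finset.sum_filter_add_sum_filter_not Finset.univ (fun q : Fin k × Fin k => q.1 < q.2)]
  rw [← Finset.sum_filter_add_sum_filter_not
    (Finset.filter (fun q : Fin k × Fin k => ¬ q.1 < q.2) Finset.univ)
    (fun q : Fin k × Fin k => q.2 < q.1)]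
  have hdiag : ∑ q ∈ (Finset.filter (fun q : Fin k × Fin k => ¬ q.1 < q.2) Finset.univ).filter
      (fun q : Fin k × Fin k => ¬ q.2 < q.1), u q.1 * (altMat a q.1 q.2 * v q.2) = 0 := by
    apply Finset.sum_eq_zero
    intro q hq
    simp only [Finset.mem_filter] at hq
    have : q.1 = q.2 := le_antisymm (not_lt.mp hq.2) (not_lt.mp hq.1.2)
    rw [← this, altMat_apply_diag]
    ring
  rw [hdiag, add_zero]
  have hlt : ∑ q ∈ Finset.filter (fun q : Fin k × Fin k => q.1 < q.2) Finset.univ,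
      u q.1 * (altMat a q.1 q.2 * v q.2)
      = ∑ p : IdxPairs k, u p.1.1 * (a p * v p.1.2) := by
    rw [Finset.sum_subtype (p := fun q : Fin k × Fin k => q.1 < q.2)
      (Finset.filter (fun q : Fin k × Fin k => q.1 < q.2) Finset.univ)
      (fun q => by simp) (fun q : Fin k × Fin k => u q.1 * (altMat a q.1 q.2 * v q.2))]
    apply Finset.sum_congr rfl
    intro p _
    rw [altMat_apply_lt a p.2]
  have hgt : ∑ q ∈ (Finset.filter (fun q : Fin k × Fin k => ¬ q.1 < q.2) Finset.univ).filter
      (fun q : Fin k × Fin k => q.2 < q.1), u q.1 * (altMat a q.1 q.2 * v q.2)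
      = ∑ p : IdxPairs k, u p.1.2 * (- a p * v p.1.1) := by
    have hset : (Finset.filter (fun q : Fin k × Fin k => ¬ q.1 < q.2) Finset.univ).filter
        (fun q : Fin k × Fin k => q.2 < q.1)
        = Finset.filter (fun q : Fin k × Fin k => q.2 < q.1) Finset.univ := by
      ext q
      simp only [Finset.mem_filter, Finset.mem_univ, true_and]
      exact ⟨fun h => h.2, fun h => ⟨asymm h, h⟩⟩
    rw [hset]
    rw [Finset.sum_subtype (p := fun q : Fin k × Fin k => q.2 < q.1)
      (Finset.filter (fun q : Fin k × Fin k => q.2 < q.1) Finset.univ)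
      (fun q => by simp) (fun q : Fin k × Fin k => u q.1 * (altMat a q.1 q.2 * v q.2))]
    refine Finset.sum_bij' (fun p _ => (⟨(p.1.2, p.1.1), p.2⟩ : IdxPairs k))
      (fun p _ => (⟨(p.1.2, p.1.1), p.2⟩ : {q : Fin k × Fin k // q.2 < q.1})) ?_ ?_ ?_ ?_ ?_
    · intros; exact Finset.mem_univ _
    · intros; exact Finset.mem_univ _
    · intro p _; rfl
    · intro p _; rfl
    · intro p _
      rw [altMat_apply_gt a p.2]
  rw [hlt, hgt, ← Finset.sum_add_distrib]
  apply Finset.sum_congr rfl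
  intro p _
  ring

lemma quadratic_eq_zero (a : IdxPairs k → F) (v : Fin k → F) :
    v ⬝ᵥ (altMat a).mulVec v = 0 := by
  rw [beta_eq]
  apply Finset.sum_eq_zero
  intro p _
  ring

lemma antisymm_form (a : IdxPairs k → F) (u v : Fin k → F) :
    u ⬝ᵥ (altMat a).mulVec v = - (v ⬝ᵥ (altMat a).mulVec u) := by
  rw [beta_eq, beta_eq, ← Finset.sum_neg_distrib]
  apply Finset.sum_congr rfl
  intro p _
  ring

lemma card_idxPairs (d : ℕ) : Fintype.card (IdxPairs d) = d.choose 2 := by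
  classical
  have e : IdxPairs d ≃ Σ j : Fin d, Fin j.val :=
    { toFun := fun p => ⟨p.1.2, ⟨p.1.1, p.2⟩⟩
      invFun := fun x => ⟨(⟨x.2.val, lt_trans x.2.isLt x.1.isLt⟩, x.1), x.2.isLt⟩
      left_inv := by rintro ⟨⟨i, j⟩, h⟩; rfl
      right_inv := by rintro ⟨j, i⟩; rfl }
  rw [Fintype.card_congr e, Fintype.card_sigma]
  simp only [Fintype.card_fin]
  rw [Fin.sum_univ_eq_sum_range (fun j => j) d]
  have h1 := Finset.sum_range_id_mul_two d
  have h2 : d.choose 2 = d * (d - 1) / 2 := Nat.choose_two_right d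
  omega


noncomputable def polyOfL (F : Type) [Field F] (k Q : ℕ) :
    (IdxPairs k → F) →ₗ[F] MvPolynomial (Fin k) F where
  toFun a := ∑ p : IdxPairs k, a p • (MvPolynomial.X p.1.1 ^ Q * MvPolynomial.X p.1.2
      - MvPolynomial.X p.1.1 * MvPolynomial.X p.1.2 ^ Q)
  map_add' a b := by simp [add_smul, Finset.sum_add_distrib]
  map_smul' c a := by simp [mul_smul, Finset.smul_sum]

lemma range_polyOfL (Q : ℕ) : LinearMap.range (polyOfL F k Q) = formSpace F k Q := by
  apply le_antisymm
  · rintro _ ⟨a, rfl⟩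
    apply Submodule.sum_mem
    intro p _
    apply Submodule.smul_mem
    apply Submodule.subset_span
    exact ⟨p.1.1, p.1.2, p.2, rfl⟩
  · rw [formSpace, Submodule.span_le]
    rintro _ ⟨i, j, hij, rfl⟩
    refine ⟨Pi.single (⟨(i, j), hij⟩ : IdxPairs k) 1, ?_⟩
    simp only [polyOfL, LinearMap.coe_mk, AddHom.coe_mk]
    rw [Finset.sum_eq_single (⟨(i, j), hij⟩ : IdxPairs k)]
    · simp
    · intro b _ hb
      rw [Pi.single_apply, if_neg hb, zero_smul]
    · intro h; exact absurd (Finset.mem_univ _) h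

lemma aeval_polyOfL (Q : ℕ) (a : IdxPairs k → F) (u : Fin k → F) :
    MvPolynomial.aeval u (polyOfL F k Q a)
      = ∑ p : IdxPairs k, a p * (u p.1.1 ^ Q * u p.1.2 - u p.1.1 * u p.1.2 ^ Q) := by
  simp [polyOfL, smul_sub, smul_eq_mul, mul_sub]

lemma finsupp_aux1 {i j i' j' : Fin k} {Q : ℕ} (hQ : 2 ≤ Q) (hij : i < j) (hij' : i' < j')
    (h : Finsupp.single i' Q + Finsupp.single j' (1 : ℕ)
       = Finsupp.single i Q + Finsupp.single j 1) :
    i' = i ∧ j' = j := by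
  have hi := DFunLike.congr_fun h i
  have hj := DFunLike.congr_fun h j
  simp only [Finsupp.add_apply, Finsupp.single_apply, ite_true] at hi hj
  rw [if_neg (ne_of_lt hij)] at hj
  rw [if_neg (ne_of_gt hij)] at hi
  have e2 : j' = j := by
    rcases eq_or_ne j' j with e | e
    · exact e
    · rw [if_neg e] at hj
      rcases eq_or_ne i' j with e3 | e3
      · rw [if_pos e3] at hj; omega
      · rw [if_neg e3] at hj; omega
  subst e2
  have e1 : i' = i := by
    rcases eq_or_ne i' i with e | e
    · exact e
    · rw [if_neg e, if_neg (ne_of_gt hij)] at hi; omega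
  exact ⟨e1, rfl⟩

lemma finsupp_aux2 {i j i' j' : Fin k} {Q : ℕ} (hQ : 2 ≤ Q) (hij : i < j) (hij' : i' < j')
    (h : Finsupp.single i' (1 : ℕ) + Finsupp.single j' Q
       = Finsupp.single i Q + Finsupp.single j 1) : False := by
  have hi := DFunLike.congr_fun h i
  have hj := DFunLike.congr_fun h j
  simp only [Finsupp.add_apply, Finsupp.single_apply, ite_true] at hi hj
  rw [if_neg (ne_of_lt hij)] at hj
  rw [if_neg (ne_of_gt hij)] at hi
  have e3 : i' = j := by
    rcases eq_or_ne j' j with e | e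
    · rw [if_pos e] at hj
      rcases eq_or_ne i' j with e4 | e4
      · exact e4
      · rw [if_neg e4] at hj; omega
    · rw [if_neg e] at hj
      rcases eq_or_ne i' j with e4 | e4
      · exact e4
      · rw [if_neg e4] at hj; omega
  have e4 : j' = i := by
    have hne : i' ≠ i := by rw [e3]; exact ne_of_gt hij
    rw [if_neg hne] at hi
    rcases eq_or_ne j' i with e | e
    · exact e
    · rw [if_neg e] at hi; omega
  rw [e3, e4] at hij'
  exact absurd hij' (asymm hij)

lemma coeff_polyOfL {Q : ℕ} (hQ : 2 ≤ Q) (a : IdxPairs k → F) (p0 : IdxPairs k) :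
    MvPolynomial.coeff (Finsupp.single p0.1.1 Q + Finsupp.single p0.1.2 1)
      (polyOfL F k Q a) = a p0 := by
  classical
  have hmono : ∀ i j : Fin k,
      (MvPolynomial.X i ^ Q * MvPolynomial.X j : MvPolynomial (Fin k) F)
        = MvPolynomial.monomial (Finsupp.single i Q + Finsupp.single j 1) 1 := by
    intro i j
    have hX : (MvPolynomial.X j : MvPolynomial (Fin k) F)
        = MvPolynomial.monomial (Finsupp.single j 1) 1 := by
      rw [← pow_one (MvPolynomial.X j), MvPolynomial.X_pow_eq_monomial]
    rw [MvPolynomial.X_pow_eq_monomial, hX, MvPolynomial.monomial_mul, mul_one]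
  have hmono2 : ∀ i j : Fin k,
      (MvPolynomial.X i * MvPolynomial.X j ^ Q : MvPolynomial (Fin k) F)
        = MvPolynomial.monomial (Finsupp.single i 1 + Finsupp.single j Q) 1 := by
    intro i j
    have hX : (MvPolynomial.X i : MvPolynomial (Fin k) F)
        = MvPolynomial.monomial (Finsupp.single i 1) 1 := by
      rw [← pow_one (MvPolynomial.X i), MvPolynomial.X_pow_eq_monomial]
    rw [MvPolynomial.X_pow_eq_monomial, hX, MvPolynomial.monomial_mul, mul_one]
  simp only [polyOfL, LinearMap.coe_mk, AddHom.coe_mk, MvPolynomial.coeff_sum,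
    MvPolynomial.coeff_smul]
  rw [Finset.sum_eq_single p0]
  · rw [hmono, hmono2, MvPolynomial.coeff_sub, MvPolynomial.coeff_monomial,
      MvPolynomial.coeff_monomial, if_pos rfl, if_neg, smul_eq_mul, sub_zero, mul_one]
    exact fun h => finsupp_aux2 hQ p0.2 p0.2 h
  · intro p _ hp
    rw [hmono, hmono2, MvPolynomial.coeff_sub, MvPolynomial.coeff_monomial,
      MvPolynomial.coeff_monomial, if_neg, if_neg, sub_zero, smul_zero]
    · exact fun h => finsupp_aux2 hQ p0.2 p.2 h
    · intro h
      obtain ⟨h1, h2⟩ := finsupp_aux1 hQ p0.2 p.2 h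
      exact hp (Subtype.ext (Prod.ext h1 h2))
  · intro h; exact absurd (Finset.mem_univ _) h

lemma polyOfL_injective {Q : ℕ} (hQ : 2 ≤ Q) : Function.Injective (polyOfL F k Q) := by
  rw [← LinearMap.ker_eq_bot, LinearMap.ker_eq_bot']
  intro a ha
  funext p0
  have := coeff_polyOfL hQ a p0
  rw [ha] at this
  simpa using this.symm






/-- the linear map `a ↦ altMat a * M` -/
noncomputable def altMulL (M : Matrix (Fin k) (Fin t) F) :
    (IdxPairs k → F) →ₗ[F] Matrix (Fin k) (Fin t) F where
  toFun a := altMat a * M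
  map_add' a b := by simp only [altMat_add, Matrix.add_mul]
  map_smul' c a := by simp only [altMat_smul, Matrix.smul_mul, RingHom.id_apply]

lemma entry_eq {d : ℕ} (B : Matrix (Fin d) (Fin d) F) (P : Matrix (Fin d) (Fin k) F)
    (i j : Fin k) :
    (Pᵀ * B * P) i j = (fun a => P a i) ⬝ᵥ B.mulVec (fun b => P b j) := by
  simp only [Matrix.mul_apply, Matrix.transpose_apply, dotProduct, Matrix.mulVec,
    Finset.sum_mul, Finset.mul_sum]
  rw [Finset.sum_comm]
  apply Finset.sum_congr rfl; intro a _
  apply Finset.sum_congr rfl; intro b _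
  ring

lemma conj_alt_transpose {d : ℕ} (b : IdxPairs d → F) (P : Matrix (Fin d) (Fin k) F) :
    (Pᵀ * altMat b * P)ᵀ = -(Pᵀ * altMat b * P) := by
  rw [Matrix.transpose_mul, Matrix.transpose_mul, Matrix.transpose_transpose,
    altMat_transpose, Matrix.neg_mul, Matrix.mul_neg, Matrix.mul_assoc]

lemma conj_alt_eq_altMat {d : ℕ} (b : IdxPairs d → F) (P : Matrix (Fin d) (Fin k) F) :
    Pᵀ * altMat b * P = altMat (fun p => (Pᵀ * altMat b * P) p.1.1 p.1.2) := by
  apply eq_altMat_of_alternating _ (conj_alt_transpose b P)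
  intro i
  rw [entry_eq]
  exact quadratic_eq_zero b _

/-- main dimension count -/
lemma finrank_ker_altMulL (M : Matrix (Fin k) (Fin t) F) :
    Module.finrank F (LinearMap.ker (altMulL M)) = (k - M.rank).choose 2 := by
  classical
  set W := LinearMap.ker (Mᵀ.mulVecLin) with hWdef
  have hrkT : Mᵀ.rank = M.rank := Matrix.rank_transpose M
  have hfr : Module.finrank F W = k - M.rank := by
    have h1 := LinearMap.finrank_range_add_finrank_ker (Mᵀ.mulVecLin)
    have h2 : Module.finrank F (Fin k → F) = k := by
      rw [Module.finrank_fintype_fun_eq_card, Fintype.card_fin]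
    rw [h2] at h1
    have h3 : Module.finrank F (LinearMap.range Mᵀ.mulVecLin) = M.rank := by
      rw [← hrkT]; rfl
    rw [h3] at h1
    show Module.finrank F ↥(LinearMap.ker Mᵀ.mulVecLin) = k - M.rank
    omega
  set d := Module.finrank F W with hd
  set bW : Module.Basis (Fin d) F W := Module.finBasis F W with hbW
  set P : Matrix (Fin d) (Fin k) F := Matrix.of (fun i j => (bW i : Fin k → F) j) with hP
  -- rows of P span W
  have hWspan : W = Submodule.span F (Set.range (fun i => (bW i : Fin k → F))) := by
    have h1 : Submodule.span F (Set.range (fun i => (bW i : Fin k → F)))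
        = Submodule.map W.subtype (Submodule.span F (Set.range bW)) := by
      rw [Submodule.map_span]
      congr 1
      rw [← Set.range_comp]
      rfl
    rw [h1, bW.span_eq, Submodule.map_subtype_top]
  -- rows of P are in W, so P * M = 0
  have hPM : P * M = 0 := by
    ext i c
    have hmem : (bW i : Fin k → F) ∈ W := (bW i).2
    have := congrFun ((LinearMap.mem_ker).mp hmem) c
    simpa [Matrix.mul_apply, Matrix.mulVec, Matrix.vecMul, dotProduct, hP,
      Matrix.mulVecLin_apply, mul_comm] using this
  -- a right inverse for P
  obtain ⟨Qm, hQm⟩ : ∃ Qm : Matrix (Fin k) (Fin d) F, P * Qm = 1 := by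
    have hli : LinearIndependent F (fun i => (bW i : Fin k → F)) :=
      bW.linearIndependent.map' W.subtype W.ker_subtype
    have hinj : Function.Injective (Matrix.toLin' Pᵀ) := by
      rw [Matrix.toLin'_apply']
      rw [show (Pᵀ).mulVecLin = P.vecMulLinear from Matrix.mulVecLin_transpose P]
      rw [Matrix.coe_vecMulLinear]
      rw [Matrix.vecMul_injective_iff]
      exact hli
    obtain ⟨g, hg⟩ := (Matrix.toLin' Pᵀ).exists_leftInverse_of_injective
      (LinearMap.ker_eq_bot.mpr hinj)
    refine ⟨(LinearMap.toMatrix' g)ᵀ, ?_⟩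
    have h1 : LinearMap.toMatrix' (g.comp (Matrix.toLin' Pᵀ)) = 1 := by
      rw [hg, LinearMap.toMatrix'_id]
    rw [LinearMap.toMatrix'_comp, LinearMap.toMatrix'_toLin'] at h1
    have := congrArg Matrix.transpose h1
    rwa [Matrix.transpose_mul, Matrix.transpose_transpose, Matrix.transpose_one] at this
  -- the parametrizing linear map
  set ψ : (IdxPairs d → F) →ₗ[F] (IdxPairs k → F) :=
    { toFun := fun b => fun p => (Pᵀ * altMat b * P) p.1.1 p.1.2
      map_add' := by
        intro a b; funext p
        show (Pᵀ * altMat (a + b) * P) p.1.1 p.1.2 = _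
        rw [altMat_add, Matrix.mul_add, Matrix.add_mul]
        rfl
      map_smul' := by
        intro c a; funext p
        show (Pᵀ * altMat (c • a) * P) p.1.1 p.1.2 = _
        rw [altMat_smul, Matrix.mul_smul, Matrix.smul_mul]
        rfl } with hψ
  have hψ_apply : ∀ b, altMat (ψ b) = Pᵀ * altMat b * P := by
    intro b
    rw [hψ]
    exact (conj_alt_eq_altMat b P).symm
  -- ψ is injective
  have hψinj : Function.Injective ψ := by
    intro a b hab
    have h1 : Pᵀ * altMat a * P = Pᵀ * altMat b * P := by
      rw [← hψ_apply, ← hψ_apply, hab]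
    have h2 : Qmᵀ * (Pᵀ * altMat a * P) * Qm = Qmᵀ * (Pᵀ * altMat b * P) * Qm := by
      rw [h1]
    have key : ∀ cM : Matrix (Fin d) (Fin d) F, Qmᵀ * (Pᵀ * cM * P) * Qm = cM := by
      intro cM
      have : Qmᵀ * Pᵀ = 1 := by
        have := congrArg Matrix.transpose hQm
        rwa [Matrix.transpose_mul, Matrix.transpose_one] at this
      calc Qmᵀ * (Pᵀ * cM * P) * Qm = (Qmᵀ * Pᵀ) * cM * (P * Qm) := by
            simp only [Matrix.mul_assoc]
          _ = cM := by rw [this, hQm, Matrix.one_mul, Matrix.mul_one]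
    rw [key, key] at h2
    funext p
    have := congrFun (congrFun h2 p.1.1) p.1.2
    rwa [altMat_apply_lt a p.2, altMat_apply_lt b p.2] at this
  -- range of ψ is the kernel
  have hrange : LinearMap.range ψ = LinearMap.ker (altMulL M) := by
    apply le_antisymm
    · rintro _ ⟨b, rfl⟩
      rw [LinearMap.mem_ker]
      show altMat (ψ b) * M = 0
      rw [hψ_apply, Matrix.mul_assoc, hPM, Matrix.mul_zero]
    · intro a ha
      rw [LinearMap.mem_ker] at ha
      have haM : altMat a * M = 0 := ha
      -- each row of altMat a is in W, hence a combination of rows of P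
      have hrow : ∀ i : Fin k, ∃ c : Fin d → F, altMat a i = c ᵥ* P := by
        intro i
        have hmemW : altMat a i ∈ W := by
          rw [LinearMap.mem_ker]
          funext c
          have := congrFun (congrFun haM i) c
          simpa [Matrix.mul_apply, Matrix.mulVec, Matrix.vecMul, dotProduct,
            Matrix.mulVecLin_apply, mul_comm] using this
        rw [hWspan] at hmemW
        have : altMat a i ∈ LinearMap.range (P.vecMulLinear) := by
          rw [range_vecMulLinear]
          convert hmemW using 2
          rfl
        obtain ⟨c, hc⟩ := this
        exact ⟨c, hc.symm⟩
      choose C hC using hrow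
      have hCP : (Matrix.of C) * P = altMat a := by
        ext i j
        have := congrFun (hC i) j
        simpa [Matrix.mul_apply, Matrix.vecMul, dotProduct] using this.symm
      -- also for the transpose
      have haMT : ∀ i : Fin k, (altMat a)ᵀ i ∈ W := by
        intro i
        rw [altMat_transpose]
        have hmemW : altMat a i ∈ W := by
          rw [LinearMap.mem_ker]
          funext c
          have := congrFun (congrFun haM i) c
          simpa [Matrix.mul_apply, Matrix.mulVec, Matrix.vecMul, dotProduct,
            Matrix.mulVecLin_apply, mul_comm] using this
        show -(altMat a i) ∈ W
        exact neg_mem hmemW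
      have hrowT : ∀ i : Fin k, ∃ c : Fin d → F, (altMat a)ᵀ i = c ᵥ* P := by
        intro i
        have hmemW := haMT i
        rw [hWspan] at hmemW
        have : (altMat a)ᵀ i ∈ LinearMap.range (P.vecMulLinear) := by
          rw [range_vecMulLinear]
          convert hmemW using 2
          rfl
        obtain ⟨c, hc⟩ := this
        exact ⟨c, hc.symm⟩
      choose D hD using hrowT
      have hDP : (Matrix.of D) * P = (altMat a)ᵀ := by
        ext i j
        have := congrFun (hD i) j
        simpa [Matrix.mul_apply, Matrix.vecMul, dotProduct] using this.symm
      -- key projection identities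
      have hQP1 : altMat a * (Qm * P) = altMat a := by
        rw [← hCP, Matrix.mul_assoc, ← Matrix.mul_assoc P Qm P, hQm, Matrix.one_mul]
      have hQP2 : (Qm * P)ᵀ * altMat a = altMat a := by
        have h1 : (altMat a)ᵀ * (Qm * P) = (altMat a)ᵀ := by
          rw [← hDP, Matrix.mul_assoc, ← Matrix.mul_assoc P Qm P, hQm, Matrix.one_mul]
        have := congrArg Matrix.transpose h1
        rwa [Matrix.transpose_mul, Matrix.transpose_transpose] at this
      -- B := Qmᵀ * altMat a * Qm is alternating
      set B := Qmᵀ * altMat a * Qm with hB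
      have hBT : Bᵀ = -B := by
        rw [hB, Matrix.transpose_mul, Matrix.transpose_mul, Matrix.transpose_transpose,
          altMat_transpose, Matrix.neg_mul, Matrix.mul_neg, Matrix.mul_assoc]
      have hBd : ∀ i, B i i = 0 := by
        intro i
        rw [hB, entry_eq]
        exact quadratic_eq_zero a _
      have hBalt : B = altMat (fun p => B p.1.1 p.1.2) := eq_altMat_of_alternating B hBT hBd
      refine ⟨fun p => B p.1.1 p.1.2, ?_⟩
      funext p
      rw [hψ]
      show (Pᵀ * altMat (fun p => B p.1.1 p.1.2) * P) p.1.1 p.1.2 = a p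
      rw [← hBalt, hB]
      have : Pᵀ * (Qmᵀ * altMat a * Qm) * P = altMat a := by
        calc Pᵀ * (Qmᵀ * altMat a * Qm) * P
            = (Qm * P)ᵀ * altMat a * (Qm * P) := by
              rw [Matrix.transpose_mul]
              simp only [Matrix.mul_assoc]
          _ = altMat a * (Qm * P) := by rw [hQP2]
          _ = altMat a := hQP1
      rw [this, altMat_apply_lt a p.2]
  -- conclude
  have h1 : Module.finrank F (LinearMap.ker (altMulL M))
      = Module.finrank F (LinearMap.range ψ) := by rw [hrange]
  rw [h1, LinearMap.finrank_range_of_inj hψinj, Module.finrank_fintype_fun_eq_card,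
    card_idxPairs, hfr]



lemma single_dot (i : Fin k) (w : Fin k → F) :
    (Pi.single i 1 : Fin k → F) ⬝ᵥ w = w i := by
  classical
  simp only [dotProduct, Pi.single_apply]
  rw [Finset.sum_eq_single i]
  · simp
  · intro b _ hb; simp [hb]
  · intro h; exact absurd (Finset.mem_univ _) h

lemma mulVec_col (A : Matrix (Fin k) (Fin k) F) (M : Matrix (Fin k) (Fin t) F) (c : Fin t) :
    A.mulVec (fun i => M i c) = fun i => (A * M) i c := by
  funext i
  simp [Matrix.mulVec, Matrix.mul_apply, dotProduct]

lemma aeval_polyOfL_form (Q : ℕ) (a : IdxPairs k → F) (u : Fin k → F) :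
    MvPolynomial.aeval u (polyOfL F k Q a)
      = (fun i => u i ^ Q) ⬝ᵥ (altMat a).mulVec u := by
  rw [aeval_polyOfL, beta_eq]

lemma main_eq (Q : ℕ) (hQ0 : Q ≠ 0)
    (Fq : Type) [Field Fq] [Algebra Fq F]
    (hfrob : ∀ x y : F, (x + y) ^ Q = x ^ Q + y ^ Q)
    (hconst : ∀ c : Fq, (algebraMap Fq F c) ^ Q = algebraMap Fq F c)
    (X : Matrix (Fin k) (Fin t) F) :
    formSpace F k Q ⊓ (⨅ u ∈ (colSpanG Fq F k t X : Set (Fin k → F)),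
        LinearMap.ker (MvPolynomial.aeval (R := F) u).toLinearMap)
      = Submodule.map (polyOfL F k Q)
          (LinearMap.ker (altMulL (X.map (fun x => x ^ Q) - X))) := by
  classical
  set M : Matrix (Fin k) (Fin t) F := X.map (fun x => x ^ Q) - X with hM
  have hMcol : ∀ (c : Fin t) (i : Fin k), M i c = (X i c) ^ Q - X i c := by
    intro c i; rw [hM]; simp [Matrix.sub_apply, Matrix.map_apply]
  apply le_antisymm
  · -- hard direction: vanishing implies the matrix condition
    intro pp hpp
    obtain ⟨h1, h2⟩ := Submodule.mem_inf.mp hpp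
    rw [← range_polyOfL] at h1
    obtain ⟨a, rfl⟩ := h1
    have hvan : ∀ u ∈ (colSpanG Fq F k t X : Set (Fin k → F)),
        MvPolynomial.aeval u (polyOfL F k Q a) = 0 := by
      intro u hu
      have h3 := (Submodule.mem_iInf _).mp h2 u
      have h4 := (Submodule.mem_iInf _).mp h3 hu
      rw [LinearMap.mem_ker, AlgHom.toLinearMap_apply] at h4
      exact h4
    refine ⟨a, ?_, rfl⟩
    show altMat a * M = 0
    have key : ∀ c : Fin t, (altMat a).mulVec (fun i => M i c) = 0 := by
      intro c
      set u1 : Fin k → F := fun i => X i c with hu1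
      have hu1mem : u1 ∈ colSpanG Fq F k t X :=
        Submodule.subset_span (Or.inr ⟨c, rfl⟩)
      have hv1 : (fun i => u1 i ^ Q) ⬝ᵥ (altMat a).mulVec u1 = 0 := by
        rw [← aeval_polyOfL_form]; exact hvan u1 hu1mem
      funext i
      have heimem : (Pi.single i 1 : Fin k → F) ∈ colSpanG Fq F k t X :=
        Submodule.subset_span (Or.inl ⟨i, rfl⟩)
      have hu2mem : (Pi.single i 1 + u1 : Fin k → F) ∈ colSpanG Fq F k t X :=
        add_mem heimem hu1mem
      have hv2 : (fun j => (Pi.single i 1 + u1 : Fin k → F) j ^ Q)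
          ⬝ᵥ (altMat a).mulVec (Pi.single i 1 + u1) = 0 := by
        rw [← aeval_polyOfL_form]; exact hvan _ hu2mem
      have hfro : (fun j => ((Pi.single i 1 + u1 : Fin k → F) j) ^ Q)
          = (Pi.single i 1 : Fin k → F) + (fun j => u1 j ^ Q) := by
        funext j
        rcases eq_or_ne j i with e | e
        · subst e
          simp only [Pi.add_apply, Pi.single_eq_same, hfrob, one_pow]
        · simp only [Pi.add_apply, Pi.single_eq_of_ne e, hfrob, zero_add,
            zero_pow hQ0]
      rw [hfro] at hv2
      simp only [add_dotProduct, Matrix.mulVec_add, dotProduct_add] at hv2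
      have t1 : (Pi.single i 1 : Fin k → F) ⬝ᵥ (altMat a).mulVec (Pi.single i 1) = 0 :=
        quadratic_eq_zero a _
      have t2 : (fun j => u1 j ^ Q) ⬝ᵥ (altMat a).mulVec (Pi.single i 1)
          = -((Pi.single i 1 : Fin k → F) ⬝ᵥ (altMat a).mulVec (fun j => u1 j ^ Q)) :=
        antisymm_form a _ _
      have hMvec : (fun i' => M i' c) = (fun j => u1 j ^ Q) - u1 := by
        funext j
        simp [hMcol c j, hu1]
      rw [hMvec, Matrix.mulVec_sub]
      show ((altMat a).mulVec (fun j => u1 j ^ Q) - (altMat a).mulVec u1) i = (0 : F)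
      rw [Pi.sub_apply]
      have e1 : ((altMat a).mulVec (fun j => u1 j ^ Q)) i
          = (Pi.single i 1 : Fin k → F) ⬝ᵥ (altMat a).mulVec (fun j => u1 j ^ Q) :=
        (single_dot i _).symm
      have e2 : ((altMat a).mulVec u1) i
          = (Pi.single i 1 : Fin k → F) ⬝ᵥ (altMat a).mulVec u1 :=
        (single_dot i _).symm
      rw [e1, e2]
      linear_combination -hv2 + t1 + hv1 + t2
    ext i c
    have h5 := congrFun (key c) i
    rw [mulVec_col] at h5
    simpa using h5
  · -- easy direction: the matrix condition implies vanishing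
    rintro pp hpp
    obtain ⟨a, haK, rfl⟩ := hpp
    rw [Submodule.mem_inf]
    constructor
    · rw [← range_polyOfL]; exact ⟨a, rfl⟩
    · have haM : altMat a * M = 0 := haK
      have hcols : ∀ c, (altMat a).mulVec (fun i => M i c) = 0 := by
        intro c; rw [mulVec_col, haM]; funext i; simp
      rw [Submodule.mem_iInf]
      intro u
      rw [Submodule.mem_iInf]
      intro hu
      rw [LinearMap.mem_ker, AlgHom.toLinearMap_apply, aeval_polyOfL_form]
      have main : ∀ v, v ∈ Submodule.span Fq
          (Set.range (fun i : Fin k => (Pi.single i 1 : Fin k → F)) ∪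
            Set.range (fun j : Fin t => fun i => X i j)) →
          ((altMat a).mulVec (fun i => v i ^ Q) = (altMat a).mulVec v) ∧
          ((fun i => v i ^ Q) ⬝ᵥ (altMat a).mulVec v = 0) := by
        intro v hv
        refine Submodule.span_induction
          (p := fun v _ => ((altMat a).mulVec (fun i => v i ^ Q) = (altMat a).mulVec v) ∧
            ((fun i => v i ^ Q) ⬝ᵥ (altMat a).mulVec v = 0)) ?_ ?_ ?_ ?_ hv
        · rintro w (⟨i, rfl⟩ | ⟨c, rfl⟩)
          · have hF : (fun j => (Pi.single i 1 : Fin k → F) j ^ Q)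
                = (Pi.single i 1 : Fin k → F) := by
              funext j
              rcases eq_or_ne j i with e | e
              · subst e; simp
              · simp [Pi.single_eq_of_ne e, zero_pow hQ0]
            exact ⟨by rw [hF], by rw [hF]; exact quadratic_eq_zero a _⟩
          · have hF : (fun j => (fun i' => X i' c) j ^ Q)
                = (fun i' => X i' c) + (fun i' => M i' c) := by
              funext j
              simp only [Pi.add_apply, hMcol c j]
              ring
            constructor
            · rw [hF, Matrix.mulVec_add, hcols c, add_zero]
            · rw [hF, add_dotProduct]
              have q1 : (fun i' => X i' c) ⬝ᵥ (altMat a).mulVec (fun i' => X i' c) = 0 :=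
                quadratic_eq_zero a _
              have q2 : (fun i' => M i' c) ⬝ᵥ (altMat a).mulVec (fun i' => X i' c)
                  = -((fun i' => X i' c) ⬝ᵥ (altMat a).mulVec (fun i' => M i' c)) :=
                antisymm_form a _ _
              rw [q1, q2, hcols c, dotProduct_zero]
              simp
        · have hF : (fun i => (0 : Fin k → F) i ^ Q) = (0 : Fin k → F) := by
            funext i; simp [zero_pow hQ0]
          exact ⟨by rw [hF], by rw [hF]; simp⟩
        · rintro x y hx hy ⟨ih1x, ih2x⟩ ⟨ih1y, ih2y⟩
          have hF : (fun i => (x + y) i ^ Q)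
              = (fun i => x i ^ Q) + (fun i => y i ^ Q) := by
            funext i; simp [hfrob]
          constructor
          · rw [hF, Matrix.mulVec_add, ih1x, ih1y, ← Matrix.mulVec_add]
          · rw [hF]
            simp only [add_dotProduct, Matrix.mulVec_add, dotProduct_add]
            have c1 : (fun i => x i ^ Q) ⬝ᵥ (altMat a).mulVec y
                = -(y ⬝ᵥ (altMat a).mulVec x) := by
              rw [antisymm_form, ih1x]
            have c2 : (fun i => y i ^ Q) ⬝ᵥ (altMat a).mulVec x
                = -(x ⬝ᵥ (altMat a).mulVec y) := by
              rw [antisymm_form, ih1y]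
            have c3 : x ⬝ᵥ (altMat a).mulVec y = -(y ⬝ᵥ (altMat a).mulVec x) :=
              antisymm_form a x y
            linear_combination ih2x + ih2y + c1 + c2 - c3
        · rintro r x hx ⟨ih1, ih2⟩
          have hsm : r • x = algebraMap Fq F r • x := (algebraMap_smul F r x).symm
          have hF : (fun i => (r • x) i ^ Q) = algebraMap Fq F r • (fun i => x i ^ Q) := by
            funext i
            rw [Pi.smul_apply, Pi.smul_apply, Algebra.smul_def, mul_pow, hconst,
              smul_eq_mul]
          constructor
          · rw [hF, hsm, Matrix.mulVec_smul, Matrix.mulVec_smul, ih1]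
          · rw [hF, hsm, Matrix.mulVec_smul, smul_dotProduct,
              dotProduct_smul, ih2]
            simp
      exact (main u hu).2

end Stmt0Aux

open Stmt0Aux in
theorem statement_0
    (q m k n s : ℕ) (hqp : IsPrimePow q) (hm : 0 < m) (hk : 0 < k)
    (Fq Fqm : Type) [Field Fq] [Fintype Fq] [Field Fqm] [Algebra Fq Fqm]
    (hq : Fintype.card Fq = q) (hdeg : Module.finrank Fq Fqm = m)
    (hn : k ≤ n) (hs1 : 1 ≤ s) (hs2 : s ≤ m - 1)
    (X : Matrix (Fin k) (Fin (n - k)) Fqm)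
    (r : ℕ) (hr : (X.map (fun x => x ^ q ^ s) - X).rank = r) :
    Module.finrank Fqm
      ↥(formSpace Fqm k (q ^ s) ⊓
        ⨅ u ∈ (colSpanG Fq Fqm k (n - k) X : Set (Fin k → Fqm)),
          LinearMap.ker (aeval (R := Fqm) u).toLinearMap)
      = Nat.choose (k - r) 2 := by
  classical
  have hq2 : 2 ≤ q := hqp.two_le
  have hQ2 : 2 ≤ q ^ s := le_trans hq2 (Nat.le_self_pow (by omega) q)
  have hQ0 : q ^ s ≠ 0 := by positivity
  -- characteristic facts
  obtain ⟨n0, hp0, hcard⟩ := FiniteField.card Fq (ringChar Fq)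
  haveI : Fact (ringChar Fq).Prime := ⟨hp0⟩
  haveI : CharP Fqm (ringChar Fq) :=
    charP_of_injective_algebraMap (algebraMap Fq Fqm).injective _
  have hfrob : ∀ x y : Fqm, (x + y) ^ q ^ s = x ^ q ^ s + y ^ q ^ s := by
    intro x y
    have hqq : q ^ s = (ringChar Fq) ^ ((n0 : ℕ) * s) := by
      rw [← hq, hcard, pow_mul]
    rw [hqq]
    exact add_pow_char_pow x y (ringChar Fq) ((n0 : ℕ) * s)
  have hconst : ∀ c : Fq, (algebraMap Fq Fqm c) ^ q ^ s = algebraMap Fq Fqm c := by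
    intro c
    rw [← map_pow]
    congr 1
    rw [← hq]
    exact FiniteField.pow_card_pow s c
  rw [main_eq (q ^ s) hQ0 Fq hfrob hconst X]
  rw [← LinearEquiv.finrank_eq (Submodule.equivMapOfInjective (polyOfL Fqm k (q ^ s))
    (polyOfL_injective hQ2) (LinearMap.ker (altMulL (X.map (fun x => x ^ q ^ s) - X))))]
  rw [finrank_ker_altMulL, hr]
end

section
/- Let q be a prime power, m and k positive integers, and let U be an F_q-subspace of F_{q^m}^k containing F_q^k (for instance, the F_q-span of the columns of a generator matrix in systematic form [I_k | X]). Then for every integer i with 0 ≤ i ≤ q, the only homogeneous polynomial of degree i in F_{q^m}[x_1,…,x_k] vanishing at every point of U is the zero polynomial; consequently h_i(C) = C(k+i−1, i) for i ∈ {0,…,q}, where h_i(C) := C(k+i−1, i) − dim_{F_{q^m}} I(L_U)_i. -/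
open MvPolynomial

/-- Key vanishing lemma: a homogeneous polynomial of degree `i ≤ card Fq` with
coefficients in `Fqm` vanishing at all points of the embedded `Fq^k` is zero. -/
lemma homog_vanish_aux (q k : ℕ) (Fq Fqm : Type) [Field Fq] [Fintype Fq]
    [Field Fqm] [Algebra Fq Fqm] (hq : Fintype.card Fq = q)
    (i : ℕ) (hi : i ≤ q) (p : MvPolynomial (Fin k) Fqm) (hp : p.IsHomogeneous i)
    (hev : ∀ a : Fin k → Fq, eval (fun j => algebraMap Fq Fqm (a j)) p = 0) :
    p = 0 := by
  ext d
  rw [coeff_zero]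
  rw [← Module.forall_dual_apply_eq_zero_iff (R := Fq)]
  intro ℓ
  -- push the coefficients of `p` down to `Fq` via `ℓ`
  set pl : MvPolynomial (Fin k) Fq :=
    ∑ e ∈ p.support, monomial e (ℓ (coeff e p)) with hpl
  have hcoeff : ∀ e, coeff e pl = ℓ (coeff e p) := by
    intro e
    rw [hpl, coeff_sum]
    simp only [coeff_monomial]
    rw [Finset.sum_ite_eq' p.support e (fun e => ℓ (coeff e p))]
    split_ifs with h
    · rfl
    · rw [notMem_support_iff.mp h, map_zero]
  have hplhom : pl.IsHomogeneous i := by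
    intro e he
    apply hp
    rw [hcoeff] at he
    intro h0
    exact he (by rw [h0, map_zero])
  have hpl0 : pl = 0 := by
    apply hplhom.eq_zero_of_forall_eval_eq_zero_of_le_card
    · intro a
      have hv := congrArg ℓ (hev a)
      rw [eval_eq', map_sum, map_zero] at hv
      rw [hpl, map_sum, ← hv]
      apply Finset.sum_congr rfl
      intro e _
      rw [eval_monomial, Finsupp.prod_pow]
      rw [show (∏ j, algebraMap Fq Fqm (a j) ^ e j)
            = algebraMap Fq Fqm (∏ j, a j ^ e j) by rw [map_prod]; simp [map_pow]]
      rw [mul_comm (coeff e p), ← Algebra.smul_def, map_smul, smul_eq_mul, mul_comm]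
    · rw [Cardinal.mk_fintype, hq]
      exact_mod_cast hi
  have := congrArg (coeff d) hpl0
  rw [hcoeff] at this
  simpa using this

theorem statement_2
    (q m k : ℕ) (hqp : IsPrimePow q) (hm : 0 < m) (hk : 0 < k)
    (Fq Fqm : Type) [Field Fq] [Fintype Fq] [Field Fqm] [Algebra Fq Fqm]
    (hq : Fintype.card Fq = q) (hdeg : Module.finrank Fq Fqm = m)
    (U : Submodule Fq (Fin k → Fqm))
    (hU : ∀ a : Fin k → Fq, (fun i => algebraMap Fq Fqm (a i)) ∈ U)
    (i : ℕ) (hi : i ≤ q) :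
    (∀ p : MvPolynomial (Fin k) Fqm, p.IsHomogeneous i →
        (∀ u ∈ U, eval u p = 0) → p = 0) ∧
    Nat.choose (k + i - 1) i -
        Module.finrank Fqm ↥(homogVanish Fqm k i (U : Set (Fin k → Fqm)))
      = Nat.choose (k + i - 1) i := by
  have key : ∀ p : MvPolynomial (Fin k) Fqm, p.IsHomogeneous i →
      (∀ u ∈ U, eval u p = 0) → p = 0 := by
    intro p hp hev
    exact homog_vanish_aux q k Fq Fqm hq i hi p hp
      (fun a => hev _ (hU a))
  refine ⟨key, ?_⟩
  have hbot : homogVanish Fqm k i (U : Set (Fin k → Fqm)) = ⊥ := by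
    rw [eq_bot_iff]
    intro p hpmem
    rw [Submodule.mem_bot]
    rw [homogVanish, Submodule.mem_inf] at hpmem
    obtain ⟨h1, h2⟩ := hpmem
    simp only [Submodule.mem_iInf, LinearMap.mem_ker, AlgHom.toLinearMap_apply] at h2
    apply key p ((mem_homogeneousSubmodule _ _).mp h1)
    intro u hu
    have := h2 u hu
    rwa [show (aeval (R := Fqm) u) p = eval u p by
      rw [aeval_def, eval]; rfl] at this
  rw [hbot, finrank_bot, Nat.sub_zero]
end

section
/- Let q be a prime power, m,k,n positive integers, and let U be an F_q-subspace of F_{q^m}^k with dim_{F_q} U = n and F_{q^m}-span equal to F_{q^m}^k. Set N = (q^n−1)/(q−1), and let H be any k×N matrix over F_{q^m} whose columns form a set of representatives of the F_q^*-proportionality classes of U∖{0} (one nonzero vector per class, covering every class). Let C^H ⊆ F_{q^m}^N be the F_{q^m}-row span of H, and define Schur powers by C^{H(0)} := F_{q^m}-span of the all-ones vector and C^{H(i)} := F_{q^m}-span of { c ∗ c' : c ∈ C^H, c' ∈ C^{H(i−1)} }, where ∗ is the componentwise product. Then for every i ≥ 0, dim_{F_{q^m}} C^{H(i)} = C(k+i−1,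 i) − dim_{F_{q^m}} I(L_U)_i. -/
open MvPolynomial

/-- Schur powers of a linear code `C ⊆ F_{q^m}^N`: the `0`-th power is the span of the
all-ones vector, and the `(i+1)`-st power is the span of componentwise products of a
codeword of `C` with an element of the `i`-th power. -/
noncomputable def schurPow (Fqm : Type) [Field Fqm] (N : ℕ)
    (C : Submodule Fqm (Fin N → Fqm)) : ℕ → Submodule Fqm (Fin N → Fqm)
  | 0 => Submodule.span Fqm {(fun _ => 1 : Fin N → Fqm)}
  | (i + 1) => Submodule.span Fqm
      {w | ∃ c ∈ C, ∃ c' ∈ schurPow Fqm N C i, w = c * c'}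


section Aux
variable {σ : Type*} {R : Type*} [CommRing R]

lemma Finsupp.degree_add' (a b : σ →₀ ℕ) : (a + b).degree = a.degree + b.degree := by
  simp only [Finsupp.degree_eq_weight_one, map_add]

lemma Finsupp.degree_single' (t : σ) : (Finsupp.single t 1 : σ →₀ ℕ).degree = 1 := by
  classical
  simp [Finsupp.degree_apply, Finsupp.support_single_ne_zero t one_ne_zero]

lemma exists_decomp {k : Type*} {d : k →₀ ℕ} {i : ℕ} (hd : d.degree = i + 1) :
    ∃ (t : k) (d' : k →₀ ℕ), d = Finsupp.single t 1 + d' ∧ d'.degree = i := by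
  classical
  have hd0 : d ≠ 0 := by
    intro h; rw [h, map_zero] at hd; omega
  obtain ⟨t, ht⟩ := Finsupp.support_nonempty_iff.mpr hd0
  have hle : Finsupp.single t 1 ≤ d :=
    Finsupp.single_le_iff.mpr (Nat.one_le_iff_ne_zero.mpr (Finsupp.mem_support_iff.mp ht))
  refine ⟨t, d - Finsupp.single t 1, ?_, ?_⟩
  · rw [add_tsub_cancel_of_le hle]
  · have := Finsupp.degree_add' (Finsupp.single t 1) (d - Finsupp.single t 1)
    rw [add_tsub_cancel_of_le hle, Finsupp.degree_single'] at this
    omega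

lemma homog_zero_eq : homogeneousSubmodule σ R 0 = (1 : Submodule R (MvPolynomial σ R)) := by
  ext f
  rw [mem_homogeneousSubmodule, Submodule.mem_one]
  constructor
  · intro hf
    classical
    refine ⟨coeff 0 f, ?_⟩
    have h1 : (algebraMap R (MvPolynomial σ R)) (coeff 0 f) = C (coeff 0 f) := rfl
    rw [h1]
    ext d
    rcases eq_or_ne d 0 with rfl | hd
    · simp
    · rw [coeff_C, if_neg (Ne.symm hd),
        hf.coeff_eq_zero (by rwa [Ne, Finsupp.degree_eq_zero_iff])]
  · rintro ⟨c, rfl⟩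
    exact isHomogeneous_C σ c

lemma homog_succ_le (i : ℕ) :
    homogeneousSubmodule σ R (i + 1) ≤
      homogeneousSubmodule σ R 1 * homogeneousSubmodule σ R i := by
  intro f hf
  rw [f.as_sum]
  refine Submodule.sum_mem _ fun d hd => ?_
  have hdeg : d.degree = i + 1 := by
    rw [Finsupp.degree_eq_weight_one]; exact hf (Finsupp.mem_support_iff.mp hd)
  obtain ⟨t, d', rfl, hd'⟩ := exists_decomp hdeg
  have : monomial (Finsupp.single t 1 + d') (coeff (Finsupp.single t 1 + d') f)
      = X t * monomial d' (coeff (Finsupp.single t 1 + d') f) := by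
    rw [X, monomial_mul, one_mul]
  rw [this]
  exact Submodule.mul_mem_mul (isHomogeneous_X R t) (isHomogeneous_monomial _ hd')

lemma homog_one_le :
    homogeneousSubmodule σ R 1 ≤ Submodule.span R (Set.range (X : σ → MvPolynomial σ R)) := by
  intro f hf
  rw [f.as_sum]
  refine Submodule.sum_mem _ fun d hd => ?_
  have hdeg : d.degree = 0 + 1 := by
    rw [Finsupp.degree_eq_weight_one]; exact hf (Finsupp.mem_support_iff.mp hd)
  obtain ⟨t, d', hdd, hd'⟩ := exists_decomp hdeg
  rw [Finsupp.degree_eq_zero_iff] at hd'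
  subst hd'
  rw [add_zero] at hdd
  subst hdd
  have : monomial (Finsupp.single t 1) (coeff (Finsupp.single t 1) f)
      = (coeff (Finsupp.single t 1) f) • X t := by
    rw [X, smul_monomial, smul_eq_mul, mul_one]
  rw [this]
  exact Submodule.smul_mem _ _ (Submodule.subset_span ⟨t, rfl⟩)

lemma eval_smul_homog {k : Type*} {i : ℕ} {f : MvPolynomial k R}
    (hf : f.IsHomogeneous i) (c : R) (v : k → R) :
    eval (c • v) f = c ^ i * eval v f := by
  rw [eval_eq, eval_eq, Finset.mul_sum]
  refine Finset.sum_congr rfl fun d hd => ?_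
  have hdeg : d.degree = i := by
    rw [Finsupp.degree_eq_weight_one]; exact hf (Finsupp.mem_support_iff.mp hd)
  have : ∏ t ∈ d.support, (c • v) t ^ d t
      = (∏ t ∈ d.support, c ^ d t) * ∏ t ∈ d.support, v t ^ d t := by
    rw [← Finset.prod_mul_distrib]
    exact Finset.prod_congr rfl fun t _ => by simp [mul_pow]
  rw [this, Finset.prod_pow_eq_pow_sum]
  show _ = c ^ i * (coeff d f * _)
  rw [← hdeg]
  rw [Finsupp.degree_apply]
  ring

end Aux

lemma aeval_eq_eval' {σ R : Type*} [CommSemiring R] (x : σ → R) (f : MvPolynomial σ R) :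
    aeval (R := R) x f = eval x f := by
  rw [aeval_def, Algebra.algebraMap_self]; rfl

noncomputable def degreeEquivSym (k i : ℕ) :
    ↥{d : Fin k →₀ ℕ | d.degree = i} ≃ Sym (Fin k) i where
  toFun d := ⟨Finsupp.toMultiset d.1, by
    rw [Finsupp.card_toMultiset]
    have hd : (d.1).degree = i := d.2
    have h2 : (d.1).sum (fun _ => id) = (d.1).degree := by
      simp [Finsupp.degree_apply, Finsupp.sum, id]
    rw [h2]; exact hd⟩
  invFun s := ⟨Multiset.toFinsupp s.1, by
    have h1 := Multiset.toFinsupp_sum_eq s.1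
    have h2 : (Multiset.toFinsupp s.1).sum (fun _ => id) = (Multiset.toFinsupp s.1).degree := by
      simp [Finsupp.degree_apply, Finsupp.sum, id]
    show (Multiset.toFinsupp s.1).degree = i
    rw [← h2, h1]; exact s.2⟩
  left_inv d := Subtype.ext (Finsupp.toMultiset_toFinsupp d.1)
  right_inv s := Subtype.ext (Multiset.toFinsupp_toMultiset s.1)

theorem statement_3
    (q m k n N : ℕ) (hqp : IsPrimePow q) (hm : 0 < m) (hk : 0 < k) (hn : 0 < n)
    (Fq Fqm : Type) [Field Fq] [Fintype Fq] [Field Fqm] [Algebra Fq Fqm]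
    (hq : Fintype.card Fq = q) (hdeg : Module.finrank Fq Fqm = m)
    (U : Submodule Fq (Fin k → Fqm))
    (hUdim : Module.finrank Fq U = n)
    (hUspan : Submodule.span Fqm (U : Set (Fin k → Fqm)) = ⊤)
    (hN : N = (q ^ n - 1) / (q - 1))
    (H : Fin k → Fin N → Fqm)
    (hcolU : ∀ j : Fin N, (fun i => H i j) ∈ U)
    (hcol0 : ∀ j : Fin N, (fun i => H i j) ≠ (0 : Fin k → Fqm))
    (hrep : ∀ j j' : Fin N,
      (∃ lam : Fq, lam ≠ 0 ∧ (fun i => H i j) = lam • (fun i => H i j')) → j = j')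
    (hcover : ∀ u ∈ U, u ≠ (0 : Fin k → Fqm) →
      ∃ j : Fin N, ∃ lam : Fq, lam ≠ 0 ∧ u = lam • (fun i => H i j))
    (i : ℕ) :
    Module.finrank Fqm
        ↥(schurPow Fqm N (Submodule.span Fqm (Set.range H)) i)
      = Nat.choose (k + i - 1) i -
          Module.finrank Fqm ↥(homogVanish Fqm k i (U : Set (Fin k → Fqm))) := by
  classical
  -- N is positive
  have hq2 : 2 ≤ q := hqp.two_le
  have hN0 : 0 < N := by
    have h1 : q ≤ q ^ n := Nat.le_self_pow hn.ne' q
    rw [hN]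
    exact Nat.div_pos (by omega) (by omega)
  have j₀ : Fin N := ⟨0, hN0⟩
  -- the evaluation algebra homomorphism
  set ev : MvPolynomial (Fin k) Fqm →ₐ[Fqm] (Fin N → Fqm) :=
    aeval (fun t j => H t j) with hev
  have hev_apply : ∀ (f : MvPolynomial (Fin k) Fqm) (j : Fin N),
      ev f j = eval (fun t => H t j) f := by
    intro f j
    have hcomp : (Pi.evalAlgHom Fqm (fun _ : Fin N => Fqm) j).comp ev
        = aeval (fun t => H t j) := by
      apply MvPolynomial.algHom_ext
      intro t
      simp [hev]
    have := congrArg (fun g : MvPolynomial (Fin k) Fqm →ₐ[Fqm] Fqm => g f) hcomp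
    simpa [aeval_eq_eval'] using this
  -- the Schur powers are images of the homogeneous components
  have hX : ∀ t : Fin k, ev (X t) = H t := by
    intro t; funext j; rw [hev_apply]; simp
  have hmap1 : Submodule.map ev.toLinearMap (homogeneousSubmodule (Fin k) Fqm 1)
      = Submodule.span Fqm (Set.range H) := by
    apply le_antisymm
    · refine le_trans (Submodule.map_mono homog_one_le) ?_
      rw [Submodule.map_span]
      apply Submodule.span_le.mpr
      rintro - ⟨-, ⟨t, rfl⟩, rfl⟩
      exact Submodule.subset_span ⟨t, (hX t).symm⟩
    · apply Submodule.span_le.mpr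
      rintro - ⟨t, rfl⟩
      exact ⟨X t, isHomogeneous_X _ _, hX t⟩
  have key : ∀ d : ℕ, schurPow Fqm N (Submodule.span Fqm (Set.range H)) d
      = Submodule.map ev.toLinearMap (homogeneousSubmodule (Fin k) Fqm d) := by
    intro d
    induction d with
    | zero =>
      rw [schurPow, homog_zero_eq, Submodule.map_one, Submodule.one_eq_span]
      rfl
    | succ d ih =>
      have hstep : schurPow Fqm N (Submodule.span Fqm (Set.range H)) (d + 1)
          = Submodule.span Fqm (Set.range H)
            * schurPow Fqm N (Submodule.span Fqm (Set.range H)) d := by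
        rw [schurPow, Submodule.mul_eq_span_mul_set]
        congr 1
        ext w
        simp only [Set.mem_setOf_eq, Set.mem_mul, SetLike.mem_coe]
        constructor
        · rintro ⟨c, hc, c', hc', rfl⟩; exact ⟨c, hc, c', hc', rfl⟩
        · rintro ⟨c, hc, c', hc', rfl⟩; exact ⟨c, hc, c', hc', rfl⟩
      have hmul : Submodule.map ev.toLinearMap (homogeneousSubmodule (Fin k) Fqm (d + 1))
          = Submodule.map ev.toLinearMap (homogeneousSubmodule (Fin k) Fqm 1)
            * Submodule.map ev.toLinearMap (homogeneousSubmodule (Fin k) Fqm d) := by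
        rw [← Submodule.map_mul]
        apply le_antisymm
        · exact Submodule.map_mono (homog_succ_le d)
        · have hh := homogeneousSubmodule_mul (σ := Fin k) (R := Fqm) 1 d
          rw [Nat.add_comm] at hh
          exact Submodule.map_mono hh
      rw [hstep, hmul, hmap1, ih]
  -- the vanishing ideal is the kernel
  have hker : homogVanish Fqm k i (U : Set (Fin k → Fqm))
      = homogeneousSubmodule (Fin k) Fqm i ⊓ LinearMap.ker ev.toLinearMap := by
    unfold homogVanish
    ext f
    simp only [Submodule.mem_inf, Submodule.mem_iInf, LinearMap.mem_ker,
      AlgHom.toLinearMap_apply, SetLike.mem_coe]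
    constructor
    · rintro ⟨hf, hv⟩
      refine ⟨hf, ?_⟩
      funext j
      have := hv (fun t => H t j) (hcolU j)
      rw [aeval_eq_eval'] at this
      rw [hev_apply]
      exact this
    · rintro ⟨hf, h0⟩
      refine ⟨hf, ?_⟩
      intro u hu
      rw [aeval_eq_eval']
      have hf' : f.IsHomogeneous i := hf
      rcases eq_or_ne u (0 : Fin k → Fqm) with rfl | hu0
      · have h00 : (0 : Fin k → Fqm) = (0 : Fqm) • (fun t => H t j₀) := by
          funext t; simp
        rw [h00, eval_smul_homog hf']
        have : eval (fun t => H t j₀) f = 0 := by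
          rw [← hev_apply, h0]; rfl
        rw [this, mul_zero]
      · obtain ⟨j, lam, hlam, hueq⟩ := hcover u hu hu0
        have hsmul : u = (algebraMap Fq Fqm lam) • (fun t => H t j) := by
          rw [hueq, algebraMap_smul]
        rw [hsmul, eval_smul_homog hf']
        have : eval (fun t => H t j) f = 0 := by
          rw [← hev_apply, h0]; rfl
        rw [this, mul_zero]
  -- dimension of the homogeneous component
  haveI hft : Fintype ↥{d : Fin k →₀ ℕ | d.degree = i} :=
    Fintype.ofEquiv _ (degreeEquivSym k i).symm
  have e2 : ↥(homogeneousSubmodule (Fin k) Fqm i)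
      ≃ₗ[Fqm] (↥{d : Fin k →₀ ℕ | d.degree = i} → Fqm) :=
    (LinearEquiv.ofEq _ _ (homogeneousSubmodule_eq_finsupp_supported (σ := Fin k) (R := Fqm) i)).trans
      ((AddMonoidAlgebra.supportedEquivFinsupp _).trans
        (Finsupp.linearEquivFunOnFinite Fqm Fqm _))
  haveI : FiniteDimensional Fqm ↥(homogeneousSubmodule (Fin k) Fqm i) :=
    LinearEquiv.finiteDimensional e2.symm
  have hcard : Module.finrank Fqm ↥(homogeneousSubmodule (Fin k) Fqm i)
      = (k + i - 1).choose i := by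
    rw [e2.finrank_eq, Module.finrank_pi, Fintype.card_congr (degreeEquivSym k i),
      Sym.card_sym_eq_choose, Fintype.card_fin]
  -- rank-nullity
  set W := homogeneousSubmodule (Fin k) Fqm i with hW
  set φ : ↥W →ₗ[Fqm] (Fin N → Fqm) := ev.toLinearMap ∘ₗ W.subtype with hφ
  have hrn := φ.finrank_range_add_finrank_ker
  have hrange : LinearMap.range φ = W.map ev.toLinearMap := by
    rw [hφ, LinearMap.range_comp, Submodule.range_subtype]
  have hkerφ : Module.finrank Fqm ↥(LinearMap.ker φ)
      = Module.finrank Fqm ↥(W ⊓ LinearMap.ker ev.toLinearMap) := by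
    have hkc : LinearMap.ker φ
        = Submodule.comap W.subtype (W ⊓ LinearMap.ker ev.toLinearMap) := by
      rw [hφ, LinearMap.ker_comp, Submodule.comap_inf, Submodule.comap_subtype_self,
        top_inf_eq]
    rw [hkc]
    exact (Submodule.comapSubtypeEquivOfLe inf_le_left).finrank_eq
  rw [key i, hker, ← hrange]
  omega
end

section
/- Let q be a prime power, m,k positive integers, n ≥ k, s ∈ {1,…,m−1}, X a k×(n−k) matrix over F_{q^m}, U the F_q-span of the columns of G = [I_k | X], and r := rank over F_{q^m} of X^{[s]} − X. Then the F_{q^m}-dimension of the space of homogeneous polynomials of degree q^s+1 in F_{q^m}[x_1,…,x_k] vanishing at every point of U is at least C(k−r, 2); equivalently, h_{q^s+1}(C) ≤ C(k+q^s, q^s+1) − C(k−r, 2). -/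
open MvPolynomial

section Aux

set_option linter.unusedTactic false
set_option linter.unreachableTactic false
set_option linter.unnecessarySeqFocus false

variable {Fqm : Type} [Field Fqm] {k : ℕ}

/-- The exponent vector of the monomial `x_a * x_b ^ t`. -/
noncomputable def monAB (t : ℕ) (a b : Fin k) : (Fin k) →₀ ℕ :=
  Finsupp.single a 1 + Finsupp.single b t

lemma monAB_inj {t : ℕ} (ht : 2 ≤ t) {a b a' b' : Fin k}
    (h : monAB t a b = monAB t a' b') : a = a' ∧ b = b' := by
  constructor
  · by_contra hne
    have h3 := DFunLike.congr_fun h a'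
    simp only [monAB, Finsupp.add_apply, Finsupp.single_apply] at h3
    split_ifs at h3 <;> simp_all <;> omega
  · by_contra hne
    have h2 := DFunLike.congr_fun h b
    simp only [monAB, Finsupp.add_apply, Finsupp.single_apply] at h2
    split_ifs at h2 <;> simp_all <;> omega

/-- The linear form `∑ a, v a * x_a`. -/
noncomputable def LinP (v : Fin k → Fqm) : MvPolynomial (Fin k) Fqm :=
  ∑ a, monomial (Finsupp.single a 1) (v a)

/-- The `t`-twisted form `∑ b, w b * x_b ^ t`. -/
noncomputable def FrobP (t : ℕ) (w : Fin k → Fqm) : MvPolynomial (Fin k) Fqm :=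
  ∑ b, monomial (Finsupp.single b t) (w b)

lemma LinP_mul_FrobP (t : ℕ) (v w : Fin k → Fqm) :
    LinP v * FrobP t w = ∑ a, ∑ b, monomial (monAB t a b) (v a * w b) := by
  rw [LinP, FrobP, Finset.sum_mul_sum]
  simp [monomial_mul, monAB]

lemma coeff_LinP_mul_FrobP {t : ℕ} (ht : 2 ≤ t) (v w : Fin k → Fqm) (a b : Fin k) :
    coeff (monAB t a b) (LinP v * FrobP t w) = v a * w b := by
  rw [LinP_mul_FrobP]
  rw [coeff_sum]
  rw [Finset.sum_eq_single a]
  · rw [coeff_sum, Finset.sum_eq_single b]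
    · simp [coeff_monomial]
    · intro b' _ hb'
      rw [coeff_monomial, if_neg]
      intro hEq
      exact hb' (monAB_inj ht hEq).2
    · simp
  · intro a' _ ha'
    rw [coeff_sum, Finset.sum_eq_zero]
    intro b' _
    rw [coeff_monomial, if_neg]
    intro hEq
    exact ha' (monAB_inj ht hEq).1
  · simp

lemma LinP_mul_FrobP_mem (t : ℕ) (v w : Fin k → Fqm) :
    LinP v * FrobP t w ∈ homogeneousSubmodule (Fin k) Fqm (t + 1) := by
  rw [LinP_mul_FrobP]
  apply Submodule.sum_mem; intro a _
  apply Submodule.sum_mem; intro b _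
  rw [mem_homogeneousSubmodule]
  apply isHomogeneous_monomial
  have : Finsupp.degree (monAB t a b) = 1 + t := by
    simp [monAB, Finsupp.degree_eq_weight_one, map_add, Finsupp.weight_apply,
      Finsupp.sum_single_index]
  rw [this, add_comm]

lemma aeval_LinP (u : Fin k → Fqm) (v : Fin k → Fqm) :
    aeval u (LinP v) = ∑ a, v a * u a := by
  simp [LinP, aeval_monomial]

lemma aeval_FrobP (t : ℕ) (u w : Fin k → Fqm) :
    aeval u (FrobP t w) = ∑ b, w b * (u b) ^ t := by
  simp [FrobP, aeval_monomial]

lemma card_pairs (d : ℕ) : Fintype.card {p : Fin d × Fin d // p.1 < p.2} = d.choose 2 := by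
  rw [Fintype.card_subtype]
  have h1 : (Finset.univ.filter fun p : Fin d × Fin d => p.1 < p.2).card
      = ∑ j : Fin d, (j : ℕ) := by
    rw [Finset.card_filter, ← Finset.univ_product_univ, Finset.sum_product_right]
    refine Finset.sum_congr rfl fun j _ => ?_
    have h2 : (∑ i : Fin d, if (i, j).1 < (i, j).2 then 1 else 0)
        = (Finset.univ.filter fun i : Fin d => i < j).card := by
      rw [Finset.card_filter]
    rw [h2]
    have h3 : (Finset.univ.filter fun i : Fin d => i < j) = Finset.Iio j := by
      ext i; simp
    rw [h3, Fin.card_Iio]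
  rw [h1, Nat.choose_two_right, ← Finset.sum_range_id_mul_two d,
    Nat.mul_div_cancel _ zero_lt_two]
  exact (Fin.sum_univ_eq_sum_range (fun i => i) d)

lemma exists_dual {d : ℕ} (bv : Fin d → (Fin k → Fqm)) (hbv : LinearIndependent Fqm bv) :
    ∃ f : Fin d → ((Fin k → Fqm) →ₗ[Fqm] Fqm), ∀ l i, f l (bv i) = if i = l then 1 else 0 := by
  obtain ⟨g, hg⟩ := (Submodule.span Fqm (Set.range bv)).subtype.exists_leftInverse_of_injective
    (Submodule.ker_subtype _)
  let B := Module.Basis.span hbv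
  refine ⟨fun l => (Module.Basis.coord B l) ∘ₗ g, fun l i => ?_⟩
  have h1 : g (bv i) = B i := by
    have h2 : (Submodule.span Fqm (Set.range bv)).subtype (B i) = bv i := congrArg Subtype.val (Module.Basis.span_apply hbv i)
    have h4 := congrArg g h2
    rw [← h4]
    have h5 := LinearMap.congr_fun hg (B i)
    simpa using h5
  simp only [LinearMap.comp_apply, h1, Module.Basis.coord_apply, Module.Basis.repr_self]
  exact Finsupp.single_apply

lemma indep {d t : ℕ} (ht : 2 ≤ t) (bv : Fin d → (Fin k → Fqm))
    (hbv : LinearIndependent Fqm bv) :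
    LinearIndependent Fqm (fun p : {p : Fin d × Fin d // p.1 < p.2} =>
      LinP (bv p.1.1) * FrobP t (bv p.1.2) - LinP (bv p.1.2) * FrobP t (bv p.1.1)) := by
  obtain ⟨f, hf⟩ := exists_dual bv hbv
  rw [Fintype.linearIndependent_iff]
  intro c hc p0
  have hco : ∀ a b : Fin k, ∑ p : {p : Fin d × Fin d // p.1 < p.2},
      c p * (bv p.1.1 a * bv p.1.2 b - bv p.1.2 a * bv p.1.1 b) = 0 := by
    intro a b
    have h := congrArg (coeff (monAB t a b)) hc
    rw [coeff_sum] at h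
    simpa [coeff_smul, coeff_sub, coeff_LinP_mul_FrobP ht, smul_eq_mul, mul_sub] using h
  obtain ⟨⟨l, m⟩, hlm⟩ := p0
  simp only at hlm
  set φ : Fin k → Fqm := fun a => f l (fun j => if a = j then 1 else 0) with hφ
  set ψ : Fin k → Fqm := fun a => f m (fun j => if a = j then 1 else 0) with hψ
  have happly : ∀ (g : (Fin k → Fqm) →ₗ[Fqm] Fqm) (v : Fin k → Fqm),
      g v = ∑ a, v a * g (fun j => if a = j then 1 else 0) := by
    intro g v
    rw [LinearMap.pi_apply_eq_sum_univ]
    simp [smul_eq_mul]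
  have hE : ∀ v w : Fin k → Fqm,
      (∑ a, ∑ b, φ a * ψ b * (v a * w b - w a * v b))
        = f l v * f m w - f l w * f m v := by
    intro v w
    rw [happly (f l) v, happly (f l) w, happly (f m) v, happly (f m) w,
      Finset.sum_mul_sum, Finset.sum_mul_sum, ← Finset.sum_sub_distrib]
    refine Finset.sum_congr rfl fun a _ => ?_
    rw [← Finset.sum_sub_distrib]
    exact Finset.sum_congr rfl fun b _ => by ring
  have hT : ∑ p : {p : Fin d × Fin d // p.1 < p.2}, c p * (f l (bv p.1.1) * f m (bv p.1.2)
      - f l (bv p.1.2) * f m (bv p.1.1)) = 0 := by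
    have h0 : ∑ a, ∑ b, φ a * ψ b *
        (∑ p : {p : Fin d × Fin d // p.1 < p.2},
          c p * (bv p.1.1 a * bv p.1.2 b - bv p.1.2 a * bv p.1.1 b)) = 0 := by
      simp only [hco, mul_zero, Finset.sum_const_zero]
    calc ∑ p : {p : Fin d × Fin d // p.1 < p.2},
          c p * (f l (bv p.1.1) * f m (bv p.1.2) - f l (bv p.1.2) * f m (bv p.1.1))
        = ∑ p : {p : Fin d × Fin d // p.1 < p.2}, c p * (∑ a, ∑ b, φ a * ψ b *
            (bv p.1.1 a * bv p.1.2 b - bv p.1.2 a * bv p.1.1 b)) := by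
          exact Finset.sum_congr rfl fun p _ => by rw [hE]
      _ = ∑ a, ∑ b, φ a * ψ b *
            (∑ p : {p : Fin d × Fin d // p.1 < p.2},
              c p * (bv p.1.1 a * bv p.1.2 b - bv p.1.2 a * bv p.1.1 b)) := by
          simp only [Finset.mul_sum]
          rw [Finset.sum_comm]
          refine Finset.sum_congr rfl fun a _ => ?_
          rw [Finset.sum_comm]
          exact Finset.sum_congr rfl fun b _ => Finset.sum_congr rfl fun p _ => by ring
      _ = 0 := h0
  rw [Finset.sum_eq_single (⟨(l, m), hlm⟩ : {p : Fin d × Fin d // p.1 < p.2})] at hT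
  · simp only [hf] at hT
    rw [if_neg hlm.ne', if_neg hlm.ne] at hT
    simpa using hT
  · intro p _ hne
    obtain ⟨⟨i, j⟩, hij⟩ := p
    simp only at hij ⊢
    simp only [hf]
    by_cases h1 : i = l
    · by_cases h2 : j = m
      · exact absurd (Subtype.ext (Prod.ext h1 h2)) hne
      · have h3 : j ≠ l := by
          intro hjl
          have v1 : (i : ℕ) < j := hij
          have v2 : (i : ℕ) = l := congrArg Fin.val h1
          have v3 : (j : ℕ) = l := congrArg Fin.val hjl
          omega
        rw [if_neg h2, if_neg h3]
        ring
    · by_cases h3 : j = l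
      · by_cases h4 : i = m
        · exfalso
          have v1 : (i : ℕ) < j := hij
          have v2 : (l : ℕ) < m := hlm
          have v3 : (j : ℕ) = l := congrArg Fin.val h3
          have v4 : (i : ℕ) = m := congrArg Fin.val h4
          omega
        · rw [if_neg h1, if_neg h4]
          ring
      · rw [if_neg h1, if_neg h3]
        ring
  · intro h
    exact absurd (Finset.mem_univ _) h

end Aux

theorem statement_6
    (q m k n s : ℕ) (hqp : IsPrimePow q) (hm : 0 < m) (hk : 0 < k)
    (Fq Fqm : Type) [Field Fq] [Fintype Fq] [Field Fqm] [Algebra Fq Fqm]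
    (hq : Fintype.card Fq = q) (hdeg : Module.finrank Fq Fqm = m)
    (hn : k ≤ n) (hs1 : 1 ≤ s) (hs2 : s ≤ m - 1)
    (X : Matrix (Fin k) (Fin (n - k)) Fqm)
    (r : ℕ) (hr : (X.map (fun x => x ^ q ^ s) - X).rank = r) :
    Nat.choose (k - r) 2 ≤
      Module.finrank Fqm
        ↥(homogVanish Fqm k (q ^ s + 1)
          (colSpanG Fq Fqm k (n - k) X : Set (Fin k → Fqm))) := by
  classical
  set t := q ^ s with htdef
  have h2q : 2 ≤ q := hqp.two_le
  have ht : 2 ≤ t := le_trans h2q (Nat.le_self_pow (by omega) q)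
  have ht0 : t ≠ 0 := by omega
  -- characteristic facts
  obtain ⟨nn, hpprime, hcard⟩ := FiniteField.card Fq (ringChar Fq)
  have factp : Fact (ringChar Fq).Prime := ⟨hpprime⟩
  have hqpow : q = (ringChar Fq) ^ (nn : ℕ) := by rw [← hq, hcard]
  have charFqm : CharP Fqm (ringChar Fq) :=
    charP_of_injective_algebraMap (algebraMap Fq Fqm).injective _
  have hadd : ∀ x y : Fqm, (x + y) ^ t = x ^ t + y ^ t := by
    intro x y
    have h : t = (ringChar Fq) ^ ((nn : ℕ) * s) := by rw [htdef, hqpow, pow_mul]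
    rw [h]
    exact add_pow_char_pow x y _ _
  have hfix : ∀ c : Fq, (algebraMap Fq Fqm c) ^ t = algebraMap Fq Fqm c := by
    intro c
    rw [← map_pow]
    congr 1
    rw [htdef, ← hq]
    exact FiniteField.pow_card_pow s c
  set M := (X.map (fun x => x ^ t) - X) with hMdef
  set W := LinearMap.ker (M.transpose.mulVecLin) with hWdef
  have h1 := LinearMap.finrank_range_add_finrank_ker (M.transpose.mulVecLin)
  rw [← hWdef] at h1
  have h2 : Module.finrank Fqm ↥(LinearMap.range (M.transpose.mulVecLin)) = r := by
    have h2' : M.transpose.rank = r := by rw [Matrix.rank_transpose]; exact hr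
    rw [← h2']
    rfl
  have h3 : Module.finrank Fqm (Fin k → Fqm) = k := by
    simp
  rw [h2, h3] at h1
  have hW : Module.finrank Fqm ↥W = k - r := by omega
  let b := Module.finBasisOfFinrankEq Fqm ↥W hW
  set bv : Fin (k - r) → (Fin k → Fqm) := fun i => (b i : Fin k → Fqm) with hbv
  have libv : LinearIndependent Fqm bv :=
    b.linearIndependent.map' W.subtype (Submodule.ker_subtype W)
  -- every element of W is "Frobenius-orthogonal-compatible" with every element of U
  have key : ∀ v : Fin k → Fqm, v ∈ W → ∀ u : Fin k → Fqm,
      u ∈ colSpanG Fq Fqm k (n - k) X →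
      ∑ a, v a * (u a) ^ t = ∑ a, v a * u a := by
    intro v hv u hu
    rw [colSpanG] at hu
    induction hu using Submodule.span_induction with
    | mem x hx =>
      rcases hx with ⟨i, rfl⟩ | ⟨j, rfl⟩
      · refine Finset.sum_congr rfl fun a _ => ?_
        rcases eq_or_ne a i with rfl | hne
        · simp
        · simp [Pi.single_apply, if_neg hne, zero_pow ht0]
      · have h0 := congrFun (LinearMap.mem_ker.mp hv) j
        simp only [Matrix.mulVecLin_apply, Matrix.mulVec, dotProduct,
          Matrix.transpose_apply, hMdef, Matrix.sub_apply, Matrix.map_apply,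
          Pi.zero_apply] at h0
        rw [← sub_eq_zero, ← Finset.sum_sub_distrib]
        rw [← h0]
        exact Finset.sum_congr rfl fun a _ => by ring
    | zero => simp [zero_pow ht0]
    | add x y hx hy ihx ihy =>
      calc ∑ a, v a * ((x + y) a) ^ t
          = ∑ a, (v a * (x a) ^ t + v a * (y a) ^ t) := by
            refine Finset.sum_congr rfl fun a _ => ?_
            rw [Pi.add_apply, hadd]
            ring
        _ = ∑ a, v a * x a + ∑ a, v a * y a := by
            rw [Finset.sum_add_distrib, ihx, ihy]
        _ = ∑ a, v a * (x + y) a := by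
            rw [← Finset.sum_add_distrib]
            exact Finset.sum_congr rfl fun a _ => by rw [Pi.add_apply]; ring
    | smul c x hx ih =>
      calc ∑ a, v a * ((c • x) a) ^ t
          = ∑ a, algebraMap Fq Fqm c * (v a * (x a) ^ t) := by
            refine Finset.sum_congr rfl fun a _ => ?_
            rw [Pi.smul_apply, Algebra.smul_def, mul_pow, hfix]
            ring
        _ = algebraMap Fq Fqm c * ∑ a, v a * (x a) ^ t := by
            rw [Finset.mul_sum]
        _ = algebraMap Fq Fqm c * ∑ a, v a * x a := by rw [ih]
        _ = ∑ a, v a * (c • x) a := by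
            rw [Finset.mul_sum]
            exact Finset.sum_congr rfl fun a _ => by
              rw [Pi.smul_apply, Algebra.smul_def]; ring
  -- the quadratic polynomials lie in homogVanish
  have hmem : ∀ i j : Fin (k - r),
      (LinP (bv i) * FrobP t (bv j) - LinP (bv j) * FrobP t (bv i)) ∈
        homogVanish Fqm k (t + 1) (colSpanG Fq Fqm k (n - k) X : Set (Fin k → Fqm)) := by
    intro i j
    rw [homogVanish]
    refine Submodule.mem_inf.mpr ⟨?_, ?_⟩
    · exact Submodule.sub_mem _ (LinP_mul_FrobP_mem t _ _) (LinP_mul_FrobP_mem t _ _)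
    · simp only [Submodule.mem_iInf]
      intro u hu
      rw [LinearMap.mem_ker, AlgHom.toLinearMap_apply]
      rw [map_sub, map_mul, map_mul, aeval_LinP, aeval_LinP, aeval_FrobP, aeval_FrobP]
      rw [key (bv i) (SetLike.coe_mem (b i)) u hu, key (bv j) (SetLike.coe_mem (b j)) u hu]
      ring
  -- conclusion
  have hfd : FiniteDimensional Fqm
      ↥(homogVanish Fqm k (t + 1) (colSpanG Fq Fqm k (n - k) X : Set (Fin k → Fqm))) := by
    have hle : homogVanish Fqm k (t + 1)
          (colSpanG Fq Fqm k (n - k) X : Set (Fin k → Fqm)) ≤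
        MvPolynomial.restrictTotalDegree (Fin k) Fqm (t + 1) := by
      intro p hp
      rw [MvPolynomial.mem_restrictTotalDegree]
      have hph : p ∈ homogeneousSubmodule (Fin k) Fqm (t + 1) :=
        (Submodule.mem_inf.mp hp).1
      exact ((mem_homogeneousSubmodule _ _).mp hph).totalDegree_le
    exact Submodule.finiteDimensional_of_le hle
  have li := indep ht bv libv
  have li' : LinearIndependent Fqm
      (fun p : {p : Fin (k - r) × Fin (k - r) // p.1 < p.2} =>
        (⟨LinP (bv p.1.1) * FrobP t (bv p.1.2) - LinP (bv p.1.2) * FrobP t (bv p.1.1),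
          hmem p.1.1 p.1.2⟩ :
          ↥(homogVanish Fqm k (t + 1)
            (colSpanG Fq Fqm k (n - k) X : Set (Fin k → Fqm))))) := by
    apply LinearIndependent.of_comp
      (homogVanish Fqm k (t + 1) (colSpanG Fq Fqm k (n - k) X : Set (Fin k → Fqm))).subtype
    exact li
  calc (k - r).choose 2
      = Fintype.card {p : Fin (k - r) × Fin (k - r) // p.1 < p.2} := (card_pairs _).symm
    _ ≤ _ := li'.fintype_card_le_finrank
end

section
/- Let q be a prime power, m,k positive integers, s ≥ 1, and let A_{i,j} ∈ F_{q^m} for 1 ≤ i < j ≤ k. Let p := Σ_{1 ≤ i < j ≤ k} A_{i,j}(x_i^{[s]} x_j − x_i x_j^{[s]}) ∈ F_s and let α = (α_1,…,α_k) ∈ F_{q^m}^k. Then p vanishes on the coset V_α = α + F_q^k if and only if for every t ∈ {1,…,k}: Σ_{i=1}^{t−1} A_{i,t}(α_i^{[s]} − α_i) − Σ_{j=t+1}^{k} A_{t,j}(α_j^{[s]} − α_j) = 0 (empty sums are zero). -/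
open MvPolynomial

/-- The coset `α + F_q^k` inside `F_{q^m}^k`. -/
def coset (Fq Fqm : Type) [Field Fq] [Field Fqm] [Algebra Fq Fqm] {k : ℕ}
    (α : Fin k → Fqm) : Set (Fin k → Fqm) :=
  {v | ∃ a : Fin k → Fq, v = α + fun i => algebraMap Fq Fqm (a i)}

theorem statement_7
    (q m k s : ℕ) (hqp : IsPrimePow q) (hm : 0 < m) (hk : 0 < k) (hs : 1 ≤ s)
    (Fq Fqm : Type) [Field Fq] [Fintype Fq] [Field Fqm] [Algebra Fq Fqm]
    (hq : Fintype.card Fq = q) (hdeg : Module.finrank Fq Fqm = m)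
    (A : Fin k → Fin k → Fqm) (α : Fin k → Fqm) :
    (∀ v ∈ coset Fq Fqm α,
        eval v (∑ i : Fin k, ∑ j : Fin k, if i < j then
          C (A i j) * (X i ^ q ^ s * X j - X i * X j ^ q ^ s) else 0) = 0) ↔
      ∀ t : Fin k,
        (∑ i : Fin k, if i < t then A i t * (α i ^ q ^ s - α i) else 0) -
          (∑ j : Fin k, if t < j then A t j * (α j ^ q ^ s - α j) else 0) = 0 := by
  -- set up characteristic facts
  set p := ringChar Fq with hp
  haveI : CharP Fq p := ringChar.charP Fq
  obtain ⟨n, hpprime, hqpn⟩ := FiniteField.card Fq p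
  rw [hq] at hqpn
  haveI : Fact p.Prime := ⟨hpprime⟩
  haveI : CharP Fqm p := charP_of_injective_algebraMap (algebraMap Fq Fqm).injective p
  -- Frobenius additivity for exponent q^s on Fqm
  have hadd : ∀ x y : Fqm, (x + y) ^ q ^ s = x ^ q ^ s + y ^ q ^ s := by
    intro x y
    rw [hqpn, ← pow_mul]
    exact add_pow_char_pow x y p (↑n * s)
  -- algebraMap elements are fixed by x ↦ x^{q^s}
  have hfix : ∀ a : Fq, (algebraMap Fq Fqm a) ^ q ^ s = algebraMap Fq Fqm a := by
    intro a
    rw [← map_pow, ← hq, FiniteField.pow_card_pow]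
  set β : Fin k → Fqm := fun i => α i ^ q ^ s - α i with hβ
  set c : Fin k → Fqm := fun t =>
    (∑ i : Fin k, if i < t then A i t * β i else 0) -
      (∑ j : Fin k, if t < j then A t j * β j else 0) with hc
  -- key evaluation lemma
  have key : ∀ v ∈ coset Fq Fqm α,
      eval v (∑ i : Fin k, ∑ j : Fin k, if i < j then
        C (A i j) * (X i ^ q ^ s * X j - X i * X j ^ q ^ s) else 0)
        = ∑ t : Fin k, c t * v t := by
    rintro v ⟨a, rfl⟩
    set w : Fin k → Fqm := α + fun i => algebraMap Fq Fqm (a i) with hw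
    have hv : ∀ i, w i ^ q ^ s = w i + β i := by
      intro i
      simp only [hw, Pi.add_apply]
      rw [hadd, hfix]
      simp only [hβ]; ring
    simp only [map_sum, apply_ite (eval w), map_zero, eval_mul, eval_sub, eval_C,
      eval_pow, eval_X]
    have step1 : (∑ i : Fin k, ∑ j : Fin k, if i < j then
        A i j * (w i ^ q ^ s * w j - w i * w j ^ q ^ s) else 0)
        = (∑ i : Fin k, ∑ j : Fin k, if i < j then A i j * β i * w j else 0)
          - (∑ i : Fin k, ∑ j : Fin k, if i < j then A i j * β j * w i else 0) := by
      rw [← Finset.sum_sub_distrib]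
      refine Finset.sum_congr rfl fun i _ => ?_
      rw [← Finset.sum_sub_distrib]
      refine Finset.sum_congr rfl fun j _ => ?_
      split
      · rw [hv i, hv j]; ring
      · ring
    rw [step1, Finset.sum_comm (f := fun i j => if i < j then A i j * β i * w j else 0)]
    simp only [hc, sub_mul, Finset.sum_sub_distrib, Finset.sum_mul, ite_mul, zero_mul,
      mul_assoc]
  constructor
  · intro H t
    have mem0 : (α + fun i => algebraMap Fq Fqm ((0 : Fin k → Fq) i)) ∈ coset Fq Fqm α :=
      ⟨0, rfl⟩
    have mem1 : (α + fun i => algebraMap Fq Fqm ((Pi.single t (1 : Fq) : Fin k → Fq) i)) ∈ coset Fq Fqm α :=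
      ⟨_, rfl⟩
    have h0 := key _ mem0
    rw [H _ mem0] at h0
    have h1 := key _ mem1
    rw [H _ mem1] at h1
    simp only [Pi.add_apply, mul_add, map_zero, mul_zero, add_zero, Pi.zero_apply,
      Finset.sum_add_distrib] at h0 h1
    rw [← h0, zero_add] at h1
    have hsingle : ∀ u : Fin k, c u * algebraMap Fq Fqm ((Pi.single t (1 : Fq) : Fin k → Fq) u)
        = if u = t then c t else 0 := by
      intro u
      by_cases h : u = t <;> simp [h, Pi.single_apply]
    rw [Finset.sum_congr rfl fun u _ => hsingle u, Finset.sum_ite_eq'] at h1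
    simp only [Finset.mem_univ, if_true] at h1
    rw [hc] at h1
    exact h1.symm
  · intro H v hv
    rw [key v hv]
    have : ∀ t : Fin k, c t = 0 := fun t => H t
    simp [this]
end

section
/- Let q be a prime power, m,k positive integers, s ≥ 1, and α_1, α_2 ∈ F_{q^m}^k. A form p ∈ F_s vanishes on both cosets V_{α_1} = α_1 + F_q^k and V_{α_2} = α_2 + F_q^k if and only if p vanishes on V_{λ_1 α_1 + λ_2 α_2} for all λ_1, λ_2 ∈ F_q. -/
open MvPolynomial

/-- Master identity: for `p` in the span `F_s`, the evaluation at a point of the coset of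
`l₁ • u₁ + l₂ • u₂` is a fixed linear combination of evaluations at points of the cosets of
`u₁` and `u₂`. -/
lemma master_identity {Fq Fqm : Type} [Field Fq] [Field Fqm] [Algebra Fq Fqm]
    {k Q : ℕ} (hQ0 : Q ≠ 0)
    (hQ : ∀ x y : Fqm, (x + y) ^ Q = x ^ Q + y ^ Q)
    (hfix : ∀ a : Fq, (algebraMap Fq Fqm a) ^ Q = algebraMap Fq Fqm a)
    {p : MvPolynomial (Fin k) Fqm} (hp : p ∈ formSpace Fqm k Q)
    (u₁ u₂ : Fin k → Fqm) (a : Fin k → Fq) (l₁ l₂ : Fq) :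
    eval (algebraMap Fq Fqm l₁ • u₁ + algebraMap Fq Fqm l₂ • u₂ +
        fun i => algebraMap Fq Fqm (a i)) p =
      algebraMap Fq Fqm l₁ ^ 2 * eval u₁ p + algebraMap Fq Fqm l₂ ^ 2 * eval u₂ p +
      algebraMap Fq Fqm l₁ *
        (eval (u₁ + fun i => algebraMap Fq Fqm (a i)) p - eval u₁ p) +
      algebraMap Fq Fqm l₂ *
        (eval (u₂ + fun i => algebraMap Fq Fqm (a i)) p - eval u₂ p) +
      algebraMap Fq Fqm l₁ * algebraMap Fq Fqm l₂ *
        ((∑ t, u₂ t * (eval (u₁ + Pi.single t 1) p - eval u₁ p)) +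
          ∑ t, u₁ t * (eval (u₂ + Pi.single t 1) p - eval u₂ p)) := by
  induction hp using Submodule.span_induction with
  | zero => simp
  | add x y hx hy ihx ihy =>
      simp only [map_add]
      have e1 : ∀ (u u' : Fin k → Fqm),
          (∑ t, u' t * ((eval (u + Pi.single t 1) x + eval (u + Pi.single t 1) y) -
            (eval u x + eval u y)))
          = (∑ t, u' t * (eval (u + Pi.single t 1) x - eval u x)) +
            ∑ t, u' t * (eval (u + Pi.single t 1) y - eval u y) := by
        intro u u'
        rw [← Finset.sum_add_distrib]
        exact Finset.sum_congr rfl fun t _ => by ring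
      rw [e1, e1]
      linear_combination ihx + ihy
  | smul c x hx ih =>
      simp only [smul_eq_C_mul, map_mul, eval_C]
      have e1 : ∀ (u u' : Fin k → Fqm),
          (∑ t, u' t * (c * eval (u + Pi.single t 1) x - c * eval u x))
          = c * ∑ t, u' t * (eval (u + Pi.single t 1) x - eval u x) := by
        intro u u'
        rw [Finset.mul_sum]
        exact Finset.sum_congr rfl fun t _ => by ring
      rw [e1, e1]
      linear_combination c * ih
  | mem x hx =>
      obtain ⟨i, j, hij, rfl⟩ := hx
      have hne : i ≠ j := ne_of_lt hij
      have Egen : ∀ v : Fin k → Fqm,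
          eval v (X i ^ Q * X j - X i * X j ^ Q) = v i ^ Q * v j - v i * v j ^ Q := by
        intro v; simp
      simp only [Egen, Pi.add_apply, Pi.smul_apply, smul_eq_mul]
      have hone : ∀ t t' : Fin k, ((Pi.single t 1 : Fin k → Fqm) t') ^ Q = (Pi.single t 1 : Fin k → Fqm) t' := by
        intro t t'
        rcases eq_or_ne t' t with rfl | h
        · simp
        · simp [Pi.single_eq_of_ne h, zero_pow hQ0]
      have hsum : ∀ (u u' : Fin k → Fqm),
          (∑ t, u' t * ((u i + (Pi.single t 1 : Fin k → Fqm) i) ^ Q * (u j + (Pi.single t 1 : Fin k → Fqm) j) -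
              (u i + (Pi.single t 1 : Fin k → Fqm) i) * (u j + (Pi.single t 1 : Fin k → Fqm) j) ^ Q -
              (u i ^ Q * u j - u i * u j ^ Q)))
          = u' j * (u i ^ Q - u i) + u' i * (u j - u j ^ Q) := by
        intro u u'
        have step : ∀ t : Fin k,
            u' t * ((u i + (Pi.single t 1 : Fin k → Fqm) i) ^ Q * (u j + (Pi.single t 1 : Fin k → Fqm) j) -
              (u i + (Pi.single t 1 : Fin k → Fqm) i) * (u j + (Pi.single t 1 : Fin k → Fqm) j) ^ Q -
              (u i ^ Q * u j - u i * u j ^ Q))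
            = (if j = t then u' t * (u i ^ Q - u i) else 0) +
              (if i = t then u' t * (u j - u j ^ Q) else 0) := by
          intro t
          rw [hQ, hQ, hone, hone]
          rcases eq_or_ne j t with rfl | h1
          · rcases eq_or_ne i j with rfl | h2
            · exact absurd rfl hne
            · simp only [Pi.single_eq_same, Pi.single_eq_of_ne h2, eq_self_iff_true,
                if_true, if_neg h2]
              ring
          · rcases eq_or_ne i t with rfl | h2
            · simp only [Pi.single_eq_same, Pi.single_eq_of_ne h1, eq_self_iff_true,
                if_true, if_neg h1]
              ring
            · simp only [Pi.single_eq_of_ne h1, Pi.single_eq_of_ne h2, if_neg h1, if_neg h2]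
              ring
        rw [Finset.sum_congr rfl fun t _ => step t, Finset.sum_add_distrib,
          Finset.sum_ite_eq, Finset.sum_ite_eq]
        simp
      rw [hsum, hsum]
      have key : ∀ i' : Fin k,
          (algebraMap Fq Fqm l₁ * u₁ i' + algebraMap Fq Fqm l₂ * u₂ i' +
            algebraMap Fq Fqm (a i')) ^ Q
          = algebraMap Fq Fqm l₁ * u₁ i' ^ Q + algebraMap Fq Fqm l₂ * u₂ i' ^ Q +
            algebraMap Fq Fqm (a i') := by
        intro i'
        rw [hQ, hQ, mul_pow, mul_pow, hfix, hfix, hfix]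
      have key2 : ∀ (u : Fin k → Fqm) (i' : Fin k),
          (u i' + algebraMap Fq Fqm (a i')) ^ Q = u i' ^ Q + algebraMap Fq Fqm (a i') := by
        intro u i'
        rw [hQ, hfix]
      rw [key, key, key2, key2, key2, key2]
      ring

theorem statement_8
    (q m k s : ℕ) (hqp : IsPrimePow q) (hm : 0 < m) (hk : 0 < k) (hs : 1 ≤ s)
    (Fq Fqm : Type) [Field Fq] [Fintype Fq] [Field Fqm] [Algebra Fq Fqm]
    (hq : Fintype.card Fq = q) (hdeg : Module.finrank Fq Fqm = m)
    (p : MvPolynomial (Fin k) Fqm) (hp : p ∈ formSpace Fqm k (q ^ s))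
    (α₁ α₂ : Fin k → Fqm) :
    ((∀ v ∈ coset Fq Fqm α₁, eval v p = 0) ∧ (∀ v ∈ coset Fq Fqm α₂, eval v p = 0)) ↔
      ∀ lam₁ lam₂ : Fq, ∀ v ∈ coset Fq Fqm (lam₁ • α₁ + lam₂ • α₂), eval v p = 0 := by
  haveI : CharP Fq (ringChar Fq) := ringChar.charP Fq
  have hprime : (ringChar Fq).Prime := CharP.char_is_prime Fq _
  haveI : Fact (ringChar Fq).Prime := ⟨hprime⟩
  haveI : CharP Fqm (ringChar Fq) :=
    charP_of_injective_algebraMap (algebraMap Fq Fqm).injective _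
  obtain ⟨n, -, hcard⟩ := FiniteField.card Fq (ringChar Fq)
  have hqring : q = ringChar Fq ^ (n : ℕ) := by rw [← hq, hcard]
  have hQ0 : q ^ s ≠ 0 := by
    have : q ≠ 0 := by
      rw [← hq]; exact Fintype.card_ne_zero
    positivity
  have hQ : ∀ x y : Fqm, (x + y) ^ (q ^ s) = x ^ (q ^ s) + y ^ (q ^ s) := by
    intro x y
    rw [hqring, ← pow_mul]
    exact add_pow_char_pow ..
  have hfix : ∀ a : Fq, (algebraMap Fq Fqm a) ^ (q ^ s) = algebraMap Fq Fqm a := by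
    intro a
    rw [← map_pow, ← hq, FiniteField.pow_card_pow]
  constructor
  · rintro ⟨h1, h2⟩ lam₁ lam₂ v ⟨a, rfl⟩
    have hM := master_identity hQ0 hQ hfix hp α₁ α₂ a lam₁ lam₂
    have z1 : eval α₁ p = 0 := h1 α₁ ⟨0, by funext i; simp⟩
    have z2 : eval α₂ p = 0 := h2 α₂ ⟨0, by funext i; simp⟩
    have z1w : eval (α₁ + fun i => algebraMap Fq Fqm (a i)) p = 0 := h1 _ ⟨a, rfl⟩
    have z2w : eval (α₂ + fun i => algebraMap Fq Fqm (a i)) p = 0 := h2 _ ⟨a, rfl⟩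
    have hsingle : ∀ t : Fin k,
        (fun i => algebraMap Fq Fqm ((Pi.single t 1 : Fin k → Fq) i)) = (Pi.single t 1 : Fin k → Fqm) := by
      intro t
      funext i
      rcases eq_or_ne i t with rfl | h
      · simp
      · simp [Pi.single_eq_of_ne h]
    have z1e : ∀ t : Fin k, eval (α₁ + Pi.single t 1) p = 0 := fun t =>
      h1 _ ⟨(Pi.single t 1 : Fin k → Fq), by rw [hsingle]⟩
    have z2e : ∀ t : Fin k, eval (α₂ + Pi.single t 1) p = 0 := fun t =>
      h2 _ ⟨(Pi.single t 1 : Fin k → Fq), by rw [hsingle]⟩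
    have hsm : lam₁ • α₁ + lam₂ • α₂ =
        algebraMap Fq Fqm lam₁ • α₁ + algebraMap Fq Fqm lam₂ • α₂ := by
      rw [algebraMap_smul, algebraMap_smul]
    rw [hsm, hM, z1, z2, z1w, z2w]
    simp [z1e, z2e]
  · intro h
    constructor
    · intro v hv
      have e : (1 : Fq) • α₁ + (0 : Fq) • α₂ = α₁ := by simp
      exact h 1 0 v (by rw [e]; exact hv)
    · intro v hv
      have e : (0 : Fq) • α₁ + (1 : Fq) • α₂ = α₂ := by simp
      exact h 0 1 v (by rw [e]; exact hv)
end

section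
/- Let q be a prime power, m ≥ 1, k, l ≥ 1 integers, r := min(k, l), and s ∈ {1,…,m−1} with gcd(s, m) = 1. Then the number of k×l matrices X over F_{q^m} such that rank over F_{q^m} of X^{[s]} − X is strictly less than r is at most r · q^{m·k·l − (m−1)}; equivalently, a uniformly random X satisfies rank(X^{[s]} − X) = r with probability at least 1 − r/q^{m−1}. -/
open Module Submodule Matrix

/-- Key dimension lemma: the intersection of (the restriction of scalars of) an
`Fqm`-subspace `S` of `ι → Fqm` with the `Fq`-subspace `∏ W₁` has `Fq`-dimension at most
`finrank Fq W₁ * finrank Fqm S`. -/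
theorem aux_span_inter {Fq Fqm : Type} [Field Fq] [Fintype Fq] [Field Fqm] [Fintype Fqm]
    [Algebra Fq Fqm] (W₁ : Submodule Fq Fqm) {ι : Type} [Fintype ι] :
    ∀ (d : ℕ) (S : Submodule Fqm (ι → Fqm)), Module.finrank Fqm S ≤ d →
      Module.finrank Fq ↥((S.restrictScalars Fq) ⊓ (Submodule.pi Set.univ (fun _ : ι => W₁)))
        ≤ Module.finrank Fq W₁ * d := by
  haveI : FiniteDimensional Fq Fqm := Module.Finite.of_finite
  intro d
  induction d with
  | zero =>
    intro S hS
    have : S = ⊥ := by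
      rw [← Submodule.finrank_eq_zero (R := Fqm)]
      omega
    subst this
    rw [Submodule.restrictScalars_bot, bot_inf_eq]
    simp
  | succ d ih =>
    intro S hS
    by_cases hbot : S = ⊥
    · subst hbot
      rw [Submodule.restrictScalars_bot, bot_inf_eq]
      simp
    · obtain ⟨v, hvS, hv0⟩ := Submodule.ne_bot_iff S |>.mp hbot
      obtain ⟨i, hi⟩ : ∃ i, v i ≠ 0 := by
        by_contra h
        push_neg at h
        exact hv0 (funext h)
      set c : (ι → Fqm) →ₗ[Fqm] Fqm := LinearMap.proj i with hc
      set K : Submodule Fqm (ι → Fqm) := S ⊓ LinearMap.ker c with hKdef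
      have hK : Module.finrank Fqm K ≤ d := by
        have hrn := LinearMap.finrank_range_add_finrank_ker (c.domRestrict S)
        have hmapker : Submodule.map S.subtype (LinearMap.ker (c.domRestrict S)) = K := by
          ext x
          simp only [Submodule.mem_map, LinearMap.mem_ker, LinearMap.domRestrict_apply,
            hKdef, Submodule.mem_inf]
          constructor
          · rintro ⟨⟨y, hy⟩, h1, rfl⟩
            exact ⟨hy, h1⟩
          · rintro ⟨h1, h2⟩
            exact ⟨⟨x, h1⟩, h2, rfl⟩
        have hker : Module.finrank Fqm (LinearMap.ker (c.domRestrict S)) = Module.finrank Fqm K := by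
          rw [← hmapker, Submodule.finrank_map_subtype_eq]
        have hrange : LinearMap.range (c.domRestrict S) ≠ ⊥ := by
          intro h
          have : c.domRestrict S ⟨v, hvS⟩ = 0 := by
            have := LinearMap.mem_range_self (c.domRestrict S) ⟨v, hvS⟩
            rw [h] at this
            simpa using this
          simp [hc, LinearMap.proj_apply] at this
          exact hi this
        have h1 : 0 < Module.finrank Fqm (LinearMap.range (c.domRestrict S)) := by
          rcases Nat.eq_zero_or_pos (Module.finrank Fqm (LinearMap.range (c.domRestrict S))) with h | h
          · exact absurd (Submodule.finrank_eq_zero.mp h) hrange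
          · exact h
        have h2 : Module.finrank Fqm S ≤ d + 1 := hS
        omega
      set W : Submodule Fq (ι → Fqm) := Submodule.pi Set.univ (fun _ : ι => W₁) with hW
      set T : Submodule Fq (ι → Fqm) := S.restrictScalars Fq ⊓ W with hT
      set ρ : T →ₗ[Fq] Fqm := (LinearMap.proj i : (ι → Fqm) →ₗ[Fq] Fqm).domRestrict T with hρ
      have hrn := LinearMap.finrank_range_add_finrank_ker ρ
      have hrange : Module.finrank Fq (LinearMap.range ρ) ≤ Module.finrank Fq W₁ := by
        apply Submodule.finrank_mono
        rw [hρ, LinearMap.range_domRestrict]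
        rintro x ⟨y, hy, rfl⟩
        exact (Submodule.mem_pi.mp (hT ▸ hy).2) i (Set.mem_univ i)
      have hker : Module.finrank Fq (LinearMap.ker ρ) ≤ Module.finrank Fq W₁ * d := by
        have hmap : Submodule.map T.subtype (LinearMap.ker ρ) ≤ (K.restrictScalars Fq) ⊓ W := by
          rintro x ⟨⟨y, hy⟩, h1, rfl⟩
          simp only [LinearMap.mem_ker, hρ, LinearMap.domRestrict_apply] at h1
          rw [hT] at hy
          refine Submodule.mem_inf.mpr ⟨?_, hy.2⟩
          rw [Submodule.restrictScalars_mem, hKdef]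
          exact Submodule.mem_inf.mpr ⟨hy.1, h1⟩
        calc Module.finrank Fq (LinearMap.ker ρ)
            = Module.finrank Fq (Submodule.map T.subtype (LinearMap.ker ρ)) :=
              (Submodule.finrank_map_subtype_eq T _).symm
          _ ≤ Module.finrank Fq ↥((K.restrictScalars Fq) ⊓ W) := Submodule.finrank_mono hmap
          _ ≤ Module.finrank Fq W₁ * d := ih K hK
      have : Module.finrank Fq W₁ * (d + 1) = Module.finrank Fq W₁ * d + Module.finrank Fq W₁ := by
        ring
      omega

/-- Cardinality of a submodule of a finite module over a finite field. -/
theorem card_submodule {Fq M : Type} [Field Fq] [Fintype Fq] [AddCommGroup M] [Module Fq M]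
    [Finite M] (V : Submodule Fq M) :
    Nat.card ↥V = (Fintype.card Fq) ^ Module.finrank Fq ↥V := by
  haveI := Fintype.ofFinite ↥V
  rw [Nat.card_eq_fintype_card, card_eq_pow_finrank (K := Fq)]

/-- Main counting lemma, row version: assuming `k ≤ l`. -/
theorem main_rows (q m k l s : ℕ) (hqp : IsPrimePow q) (hm : 2 ≤ m) (hk : 0 < k) (hl : 0 < l)
    (hs1 : 1 ≤ s) (hgcd : Nat.gcd s m = 1)
    (Fq Fqm : Type) [Field Fq] [Fintype Fq] [Field Fqm] [Fintype Fqm] [Algebra Fq Fqm]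
    (hq : Fintype.card Fq = q) (hqm : Fintype.card Fqm = q ^ m)
    (hdeg : Module.finrank Fq Fqm = m) (hkl : k ≤ l) :
    Nat.card {X : Matrix (Fin k) (Fin l) Fqm |
        (X.map (fun x => x ^ q ^ s) - X).rank < k}
      ≤ k * q ^ (m * k * l - (m - 1)) := by
  classical
  have hq2 : 2 ≤ q := hqp.two_le
  haveI : FiniteDimensional Fq Fqm := Module.Finite.of_finite
  obtain ⟨p, hcharFq⟩ := CharP.exists Fq
  haveI := hcharFq
  obtain ⟨n, hp, hqpn⟩ := FiniteField.card Fq p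
  haveI : Fact p.Prime := ⟨hp⟩
  haveI : CharP Fqm p := charP_of_injective_algebraMap (algebraMap Fq Fqm).injective p
  have hqpn' : q = p ^ (n : ℕ) := by rw [← hq, hqpn]
  have hfrob : ∀ x y : Fqm, (x + y) ^ q ^ s = x ^ q ^ s + y ^ q ^ s := by
    intro x y
    rw [hqpn', ← pow_mul]
    exact add_pow_char_pow x y p _
  have hpowq : ∀ a : Fq, a ^ q ^ s = a := by
    intro a
    rw [← hq]
    exact FiniteField.pow_card_pow s a
  -- the basic `Fq`-linear map `t ↦ t^{q^s} - t` on `Fqm`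
  set ψ : Fqm →ₗ[Fq] Fqm :=
    { toFun := fun x => x ^ q ^ s - x
      map_add' := by
        intro x y
        show (x + y) ^ q ^ s - (x + y) = (x ^ q ^ s - x) + (y ^ q ^ s - y)
        rw [hfrob]
        ring
      map_smul' := by
        intro a x
        show (a • x) ^ q ^ s - (a • x) = (RingHom.id Fq) a • (x ^ q ^ s - x)
        simp only [RingHom.id_apply, Algebra.smul_def]
        rw [mul_pow, ← map_pow, hpowq]
        ring } with hψ
  have hψapp : ∀ x : Fqm, ψ x = x ^ q ^ s - x := fun x => rfl
  -- every element of the kernel of ψ satisfies t^q = t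
  have hker1 : ∀ t : Fqm, t ∈ LinearMap.ker ψ → t ^ q = t := by
    intro t ht
    rw [LinearMap.mem_ker, hψapp, sub_eq_zero] at ht
    have hQm : ∀ u : Fqm, u ^ q ^ m = u := by
      intro u
      rw [← hqm]
      exact FiniteField.pow_card u
    have iter1 : ∀ a : ℕ, t ^ q ^ (s * a) = t := by
      intro a
      induction a with
      | zero => simp
      | succ a iha =>
        have : q ^ (s * (a + 1)) = q ^ (s * a) * q ^ s := by
          rw [← pow_add]
          ring_nf
        rw [this, pow_mul, iha, ht]
    have iter2 : ∀ (b : ℕ) (u : Fqm), u ^ q ^ (m * b) = u := by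
      intro b
      induction b with
      | zero => simp
      | succ b ihb =>
        intro u
        have : q ^ (m * (b + 1)) = q ^ (m * b) * q ^ m := by
          rw [← pow_add]
          ring_nf
        rw [this, pow_mul, ihb, hQm]
    -- Bezout via Euler's theorem
    have htot : s ^ Nat.totient m % m = 1 := by
      have := Nat.ModEq.pow_totient (hgcd : Nat.Coprime s m)
      unfold Nat.ModEq at this
      rw [this, Nat.one_mod_eq_one.mpr (by omega)]
    have htpos : 1 ≤ Nat.totient m := Nat.totient_pos.mpr (by omega)
    have hsA : s * s ^ (Nat.totient m - 1) = s ^ Nat.totient m := by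
      rw [← pow_succ']
      congr 1
      omega
    have hformula : s ^ Nat.totient m = m * (s ^ Nat.totient m / m) + 1 := by
      conv_lhs => rw [← Nat.div_add_mod (s ^ Nat.totient m) m]
      rw [htot]
    have h1 : t ^ q ^ (s ^ Nat.totient m) = t := by
      rw [← hsA]
      exact iter1 _
    rw [hformula] at h1
    have : q ^ (m * (s ^ Nat.totient m / m) + 1) = q ^ (m * (s ^ Nat.totient m / m)) * q := by
      rw [pow_add, pow_one]
    rw [this, pow_mul, iter2] at h1
    exact h1
  -- the kernel of ψ has at most q elements; so its Fq-dimension is at most 1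
  have hcardker : Nat.card ↥(LinearMap.ker ψ) ≤ q := by
    set P : Polynomial Fqm := Polynomial.X ^ q - Polynomial.X with hP
    have hPne : P ≠ 0 := FiniteField.X_pow_card_sub_X_ne_zero Fqm (by omega : 1 < q)
    have hmem : ∀ t : Fqm, t ∈ LinearMap.ker ψ → t ∈ P.roots.toFinset := by
      intro t ht
      rw [Multiset.mem_toFinset, Polynomial.mem_roots hPne]
      simp only [hP, Polynomial.IsRoot, Polynomial.eval_sub, Polynomial.eval_pow,
        Polynomial.eval_X, sub_eq_zero]
      exact hker1 t ht
    have hinj : Function.Injective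
        (fun t : ↥(LinearMap.ker ψ) => (⟨t.1, hmem t.1 t.2⟩ : {x // x ∈ P.roots.toFinset})) := by
      intro a b h
      have := congrArg (fun z : {x // x ∈ P.roots.toFinset} => z.1) h
      exact Subtype.ext this
    calc Nat.card ↥(LinearMap.ker ψ) ≤ Nat.card {x // x ∈ P.roots.toFinset} :=
          Nat.card_le_card_of_injective _ hinj
      _ = P.roots.toFinset.card := Nat.card_eq_finsetCard _
      _ ≤ Multiset.card P.roots := Multiset.toFinset_card_le _
      _ ≤ P.natDegree := Polynomial.card_roots' P
      _ = q := by rw [hP, FiniteField.X_pow_card_sub_X_natDegree_eq Fqm (by omega : 1 < q)]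
  have hcard_sub : ∀ {M : Type} [AddCommGroup M] [Module Fq M] [Finite M] (V : Submodule Fq M),
      Nat.card ↥V = q ^ Module.finrank Fq ↥V := by
    intro M _ _ _ V
    rw [card_submodule V, hq]
  have hfkψ : Module.finrank Fq ↥(LinearMap.ker ψ) ≤ 1 := by
    have h := hcard_sub (LinearMap.ker ψ)
    rw [h] at hcardker
    have : q ^ Module.finrank Fq ↥(LinearMap.ker ψ) ≤ q ^ 1 := by simpa using hcardker
    exact (Nat.pow_le_pow_iff_right (by omega : 1 < q)).mp this
  have hW₁ : Module.finrank Fq ↥(LinearMap.range ψ) ≤ m - 1 := by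
    have hrn := LinearMap.finrank_range_add_finrank_ker ψ
    rw [hdeg] at hrn
    have h1 : (1 : Fqm) ∈ LinearMap.ker ψ := by
      rw [LinearMap.mem_ker, hψapp]
      simp
    have hne : LinearMap.ker ψ ≠ ⊥ := by
      intro h
      rw [h, Submodule.mem_bot] at h1
      exact one_ne_zero h1
    have hpos : 0 < Module.finrank Fq ↥(LinearMap.ker ψ) := by
      rcases Nat.eq_zero_or_pos (Module.finrank Fq ↥(LinearMap.ker ψ)) with h | h
      · exact absurd (Submodule.finrank_eq_zero.mp h) hne
      · exact h
    omega
  -- the row map φ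
  set φ : (Fin l → Fqm) →ₗ[Fq] (Fin l → Fqm) :=
    LinearMap.pi (fun j => ψ.comp (LinearMap.proj j)) with hφ
  have hφapp : ∀ (x : Fin l → Fqm) (j : Fin l), φ x j = (x j) ^ q ^ s - x j := fun x j => rfl
  have hrangeφ : LinearMap.range φ ≤ Submodule.pi Set.univ (fun _ : Fin l => LinearMap.range ψ) := by
    rintro x ⟨y, rfl⟩
    rw [Submodule.mem_pi]
    intro j _
    refine ⟨y j, ?_⟩
    show ψ (y j) = φ y j
    rw [hψapp, hφapp]
  have hkerφ : Module.finrank Fq ↥(LinearMap.ker φ) ≤ l := by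
    have hinj : Function.Injective
        (fun (x : ↥(LinearMap.ker φ)) (j : Fin l) =>
          (⟨x.1 j, by
            have hx := x.2
            rw [LinearMap.mem_ker] at hx
            rw [LinearMap.mem_ker]
            exact congrFun hx j⟩ : ↥(LinearMap.ker ψ))) := by
      intro a b h
      apply Subtype.ext
      funext j
      exact congrArg Subtype.val (congrFun h j)
    have hle : Nat.card ↥(LinearMap.ker φ) ≤ q ^ l := by
      calc Nat.card ↥(LinearMap.ker φ) ≤ Nat.card (Fin l → ↥(LinearMap.ker ψ)) :=
            Nat.card_le_card_of_injective _ hinj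
        _ = Nat.card ↥(LinearMap.ker ψ) ^ l := by
            rw [Nat.card_fun]
            congr 1
            rw [Nat.card_eq_fintype_card, Fintype.card_fin]
        _ ≤ q ^ l := Nat.pow_le_pow_left hcardker l
    have h := hcard_sub (LinearMap.ker φ)
    rw [h] at hle
    exact (Nat.pow_le_pow_iff_right (by omega : 1 < q)).mp hle
  -- the fundamental per-row count
  have hcount : ∀ S : Submodule Fqm (Fin l → Fqm), Module.finrank Fqm ↥S ≤ k - 1 →
      Nat.card {x : Fin l → Fqm // φ x ∈ S} ≤ q ^ (l + (m - 1) * (k - 1)) := by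
    intro S hS
    set P : Submodule Fq (Fin l → Fqm) := Submodule.comap φ (S.restrictScalars Fq) with hPdef
    have hid : Nat.card {x : Fin l → Fqm // φ x ∈ S} = Nat.card ↥P :=
      Nat.card_congr (Equiv.subtypeEquivRight (fun x => by
        simp [hPdef, Submodule.mem_comap]))
    rw [hid, hcard_sub]
    apply Nat.pow_le_pow_right (by omega : 0 < q)
    have hrn := LinearMap.finrank_range_add_finrank_ker (φ.domRestrict P)
    have h1 : Module.finrank Fq ↥(LinearMap.range (φ.domRestrict P)) ≤ (m - 1) * (k - 1) := by
      rw [LinearMap.range_domRestrict]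
      have hle : Submodule.map φ P ≤
          (S.restrictScalars Fq) ⊓ (Submodule.pi Set.univ (fun _ : Fin l => LinearMap.range ψ)) := by
        rw [hPdef, Submodule.map_comap_eq]
        exact le_inf inf_le_right (inf_le_left.trans hrangeφ)
      calc Module.finrank Fq ↥(Submodule.map φ P)
          ≤ Module.finrank Fq ↥((S.restrictScalars Fq) ⊓
              (Submodule.pi Set.univ (fun _ : Fin l => LinearMap.range ψ))) :=
            Submodule.finrank_mono hle
        _ ≤ Module.finrank Fq ↥(LinearMap.range ψ) * (k - 1) :=
            aux_span_inter (LinearMap.range ψ) (k - 1) S hS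
        _ ≤ (m - 1) * (k - 1) := Nat.mul_le_mul_right _ hW₁
    have h2 : Module.finrank Fq ↥(LinearMap.ker (φ.domRestrict P)) ≤ l := by
      have hmap : Submodule.map P.subtype (LinearMap.ker (φ.domRestrict P)) ≤ LinearMap.ker φ := by
        rintro x ⟨⟨y, hy⟩, h1', rfl⟩
        exact h1'
      calc Module.finrank Fq ↥(LinearMap.ker (φ.domRestrict P))
          = Module.finrank Fq ↥(Submodule.map P.subtype (LinearMap.ker (φ.domRestrict P))) :=
            (Submodule.finrank_map_subtype_eq P _).symm
        _ ≤ Module.finrank Fq ↥(LinearMap.ker φ) := Submodule.finrank_mono hmap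
        _ ≤ l := hkerφ
    omega
  -- the bad sets E i
  have himg : ∀ (i : Fin k) (X : Matrix (Fin k) (Fin l) Fqm),
      ((fun i' => φ (X i')) '' (Set.univ \ {i})) =
        Set.range (fun i' : {i' // i' ≠ i} => φ (X i'.1)) := by
    intro i X
    ext y
    constructor
    · rintro ⟨i', ⟨-, hne⟩, rfl⟩
      exact ⟨⟨i', by simpa using hne⟩, rfl⟩
    · rintro ⟨⟨i', hne⟩, rfl⟩
      exact ⟨i', ⟨trivial, by simpa using hne⟩, rfl⟩
  set E : Fin k → Set (Matrix (Fin k) (Fin l) Fqm) := fun i =>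
    {X | φ (X i) ∈ Submodule.span Fqm
      (Set.range (fun i' : {i' // i' ≠ i} => φ (X i'.1)))} with hE
  -- bad matrices are in some E i
  have hBsub : ∀ X : Matrix (Fin k) (Fin l) Fqm,
      (X.map (fun x => x ^ q ^ s) - X).rank < k → ∃ i, X ∈ E i := by
    intro X hX
    have hrows : ∀ i, (X.map (fun x => x ^ q ^ s) - X) i = φ (X i) := by
      intro i
      funext j
      rw [hφapp]
      simp [Matrix.sub_apply, Matrix.map_apply]
    have hdep : ¬ LinearIndependent Fqm (fun i => φ (X i)) := by
      intro hind
      have heq : (fun i => (X.map (fun x => x ^ q ^ s) - X) i) = fun i => φ (X i) :=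
        funext hrows
      have hind' : LinearIndependent Fqm (X.map (fun x => x ^ q ^ s) - X) := by
        rw [show ((X.map (fun x => x ^ q ^ s) - X : Matrix (Fin k) (Fin l) Fqm) :
            Fin k → Fin l → Fqm) = fun i => φ (X i) from heq]
        exact hind
      have := hind'.rank_matrix
      rw [Fintype.card_fin] at this
      omega
    rw [linearIndependent_iff_notMem_span] at hdep
    push_neg at hdep
    obtain ⟨i, hi⟩ := hdep
    rw [himg i X] at hi
    exact ⟨i, hi⟩
  -- cardinality of each E i
  have hEcard : ∀ i : Fin k, Nat.card ↥(E i) ≤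
      q ^ (m * l * (k - 1)) * q ^ (l + (m - 1) * (k - 1)) := by
    intro i
    set Cond : ({i' // i' ≠ i} → Fin l → Fqm) → (Fin l → Fqm) → Prop :=
      fun rest x => φ x ∈ Submodule.span Fqm (Set.range (fun i' => φ (rest i'))) with hCond
    have e1 : ↥(E i) ≃
        {pa : (Fin l → Fqm) × ({i' // i' ≠ i} → Fin l → Fqm) // Cond pa.2 pa.1} := by
      refine (Equiv.funSplitAt i (Fin l → Fqm)).subtypeEquiv ?_
      intro X
      exact Iff.rfl
    have e2 : {pa : (Fin l → Fqm) × ({i' // i' ≠ i} → Fin l → Fqm) // Cond pa.2 pa.1} ≃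
        {pa : ({i' // i' ≠ i} → Fin l → Fqm) × (Fin l → Fqm) // Cond pa.1 pa.2} :=
      (Equiv.prodComm _ _).subtypeEquiv (fun pa => Iff.rfl)
    have e3 : {pa : ({i' // i' ≠ i} → Fin l → Fqm) × (Fin l → Fqm) // Cond pa.1 pa.2} ≃
        Σ rest : ({i' // i' ≠ i} → Fin l → Fqm), {x : Fin l → Fqm // Cond rest x} :=
      Equiv.subtypeProdEquivSigmaSubtype Cond
    have hcongr := Nat.card_congr (e1.trans (e2.trans e3))
    rw [hcongr]
    haveI : ∀ rest : ({i' // i' ≠ i} → Fin l → Fqm), Fintype {x : Fin l → Fqm // Cond rest x} :=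
      fun rest => Fintype.ofFinite _
    rw [Nat.card_eq_fintype_card, Fintype.card_sigma]
    have hbound : ∀ rest : ({i' // i' ≠ i} → Fin l → Fqm),
        Fintype.card {x : Fin l → Fqm // Cond rest x} ≤ q ^ (l + (m - 1) * (k - 1)) := by
      intro rest
      rw [← Nat.card_eq_fintype_card]
      apply hcount
      calc Module.finrank Fqm ↥(Submodule.span Fqm (Set.range (fun i' => φ (rest i'))))
          ≤ Fintype.card {i' // i' ≠ i} := finrank_range_le_card _
        _ = k - 1 := by
            rw [Fintype.card_subtype_compl, Fintype.card_fin, Fintype.card_subtype_eq]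
    calc ∑ rest : ({i' // i' ≠ i} → Fin l → Fqm), Fintype.card {x : Fin l → Fqm // Cond rest x}
        ≤ ∑ _rest : ({i' // i' ≠ i} → Fin l → Fqm), q ^ (l + (m - 1) * (k - 1)) :=
          Finset.sum_le_sum (fun rest _ => hbound rest)
      _ = Fintype.card ({i' // i' ≠ i} → Fin l → Fqm) * q ^ (l + (m - 1) * (k - 1)) := by
          rw [Finset.sum_const, Finset.card_univ, smul_eq_mul]
      _ = q ^ (m * l * (k - 1)) * q ^ (l + (m - 1) * (k - 1)) := by
          congr 1
          rw [Fintype.card_fun, Fintype.card_fun, Fintype.card_fin, hqm,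
            Fintype.card_subtype_compl, Fintype.card_fin, Fintype.card_subtype_eq]
          rw [← pow_mul, ← pow_mul]
          ring_nf
  -- assemble
  have hinjB : Nat.card {X : Matrix (Fin k) (Fin l) Fqm |
      (X.map (fun x => x ^ q ^ s) - X).rank < k} ≤ Nat.card (Σ i : Fin k, ↥(E i)) := by
    have hchoice : ∀ X : {X : Matrix (Fin k) (Fin l) Fqm //
        (X.map (fun x => x ^ q ^ s) - X).rank < k}, ∃ i, X.1 ∈ E i := fun X => hBsub X.1 X.2
    choose g hg using hchoice
    refine Nat.card_le_card_of_injective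
      (fun X => (⟨g X, X.1, hg X⟩ : Σ i : Fin k, ↥(E i))) ?_
    intro a b h
    have := congrArg (fun p : (Σ i : Fin k, ↥(E i)) => p.2.1) h
    exact Subtype.ext this
  haveI : ∀ i : Fin k, Fintype ↥(E i) := fun i => Fintype.ofFinite _
  have hsum : Nat.card (Σ i : Fin k, ↥(E i)) ≤
      k * (q ^ (m * l * (k - 1)) * q ^ (l + (m - 1) * (k - 1))) := by
    rw [Nat.card_eq_fintype_card, Fintype.card_sigma]
    calc ∑ i : Fin k, Fintype.card ↥(E i)
        ≤ ∑ _i : Fin k, q ^ (m * l * (k - 1)) * q ^ (l + (m - 1) * (k - 1)) := by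
          apply Finset.sum_le_sum
          intro i _
          rw [← Nat.card_eq_fintype_card]
          exact hEcard i
      _ = k * (q ^ (m * l * (k - 1)) * q ^ (l + (m - 1) * (k - 1))) := by
          rw [Finset.sum_const, Finset.card_univ, Fintype.card_fin, smul_eq_mul]
  refine (hinjB.trans hsum).trans ?_
  apply Nat.mul_le_mul_left
  rw [← pow_add]
  apply Nat.pow_le_pow_right (by omega : 0 < q)
  -- exponent arithmetic
  obtain ⟨a, rfl⟩ : ∃ a, m = a + 2 := ⟨m - 2, by omega⟩
  obtain ⟨b, rfl⟩ : ∃ b, k = b + 1 := ⟨k - 1, by omega⟩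
  obtain ⟨c, rfl⟩ : ∃ c, l = b + 1 + c := ⟨l - (b + 1), by omega⟩
  apply Nat.le_sub_of_add_le
  have e1 : a + 2 - 1 = a + 1 := by omega
  have e2 : b + 1 - 1 = b := by omega
  rw [e1, e2]
  have hkey : (a + 2) * (b + 1) * (b + 1 + c) =
      (a + 2) * (b + 1 + c) * b + (b + 1 + c + (a + 1) * b) + (a + 1) + (a + 1) * c := by
    ring
  omega

theorem statement_9
    (q m k l s : ℕ) (hqp : IsPrimePow q) (hm : 0 < m) (hk : 0 < k) (hl : 0 < l)
    (hs1 : 1 ≤ s) (hs2 : s ≤ m - 1) (hgcd : Nat.gcd s m = 1)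
    (Fq Fqm : Type) [Field Fq] [Fintype Fq] [Field Fqm] [Fintype Fqm] [Algebra Fq Fqm]
    (hq : Fintype.card Fq = q) (hqm : Fintype.card Fqm = q ^ m)
    (hdeg : Module.finrank Fq Fqm = m)
    (r : ℕ) (hr : r = min k l) :
    Nat.card {X : Matrix (Fin k) (Fin l) Fqm |
        (X.map (fun x => x ^ q ^ s) - X).rank < r}
      ≤ r * q ^ (m * k * l - (m - 1)) := by
  have hm2 : 2 ≤ m := by omega
  rcases le_total k l with hkl | hlk
  · have hrk : r = k := by omega
    subst hrk
    exact main_rows q m r l s hqp hm2 hk hl hs1 hgcd Fq Fqm hq hqm hdeg hkl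
  · have hrl : r = l := by omega
    subst hrl
    have hcongr : Nat.card {X : Matrix (Fin k) (Fin r) Fqm |
          (X.map (fun x => x ^ q ^ s) - X).rank < r} =
        Nat.card {X : Matrix (Fin r) (Fin k) Fqm |
          (X.map (fun x => x ^ q ^ s) - X).rank < r} := by
      apply Nat.card_congr
      refine Equiv.subtypeEquiv
        (⟨Matrix.transpose, Matrix.transpose, fun X => Matrix.transpose_transpose X,
          fun X => Matrix.transpose_transpose X⟩ : Matrix (Fin k) (Fin r) Fqm ≃
            Matrix (Fin r) (Fin k) Fqm) ?_
      intro X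
      show (X.map (fun x => x ^ q ^ s) - X).rank < r ↔
        ((Matrix.transpose X).map (fun x => x ^ q ^ s) - Matrix.transpose X).rank < r
      rw [Matrix.transpose_map, ← Matrix.transpose_sub, Matrix.rank_transpose]
    rw [hcongr]
    have := main_rows q m r k s hqp hm2 hl hk hs1 hgcd Fq Fqm hq hqm hdeg hlk
    rwa [show m * r * k = m * k * r by ring] at this
end

section
/- Let q be a prime power, m,k positive integers with k ≥ 2, and s ∈ {1,…,m−1} with gcd(s,m) = 1. Let α_1,…,α_{k−1} ∈ F_{q^m}^k be such that the vectors ᾱ_i := α_i^{[s]} − α_i (the map x ↦ x^{[s]} − x applied entrywise), i = 1,…,k−1, are linearly independent over F_{q^m}. If p ∈ F_s vanishes on every coset V_{α_i} = α_i + F_q^k for i = 1,…,k−1, then p is the zero polynomial. -/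
open MvPolynomial

namespace Stmt13


noncomputable def dd {k : ℕ} (Q : ℕ) (i j : Fin k) : Fin k →₀ ℕ :=
  Finsupp.single i Q + Finsupp.single j 1

lemma dd_apply {k : ℕ} (Q : ℕ) (i j x : Fin k) :
    dd Q i j x = (if i = x then Q else 0) + (if j = x then 1 else 0) := by
  simp [dd, Finsupp.single_apply]

lemma key_eq {k Q : ℕ} (hQ : 2 ≤ Q) {a b : Fin k} (hab : a ≠ b) (i j : Fin k) :
    dd Q a b = dd Q i j ↔ (i = a ∧ j = b) := by
  constructor
  · intro h
    have ha := DFunLike.congr_fun h a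
    have hb := DFunLike.congr_fun h b
    rw [dd_apply, dd_apply] at ha hb
    have hia : i = a := by
      by_contra hia
      rcases eq_or_ne j a with hja | hja <;> simp [hia, hja, hab.symm] at ha <;> omega
    subst hia
    refine ⟨rfl, ?_⟩
    by_contra hjb
    rcases eq_or_ne i b with hib | hib <;> simp [hjb, hib, hab, hab.symm] at hb <;> omega
  · rintro ⟨rfl, rfl⟩; rfl

lemma key_eq' {k Q : ℕ} (hQ : 2 ≤ Q) {a b : Fin k} (hab : a ≠ b) (i j : Fin k) :
    Finsupp.single a 1 + Finsupp.single b Q = dd Q i j ↔ (i = b ∧ j = a) := by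
  have habl : ∀ x : Fin k, (Finsupp.single a 1 + Finsupp.single b Q : Fin k →₀ ℕ) x
      = (if a = x then 1 else 0) + (if b = x then Q else 0) := by
    intro x; simp [Finsupp.single_apply]
  constructor
  · intro h
    have ha := DFunLike.congr_fun h a
    have hb := DFunLike.congr_fun h b
    rw [habl, dd_apply] at ha
    rw [habl, dd_apply] at hb
    have hib : i = b := by
      by_contra hib
      rcases eq_or_ne j b with hjb | hjb <;> simp [hib, hjb, hab] at hb <;> omega
    subst hib
    refine ⟨rfl, ?_⟩
    by_contra hja
    rcases eq_or_ne i a with hia | hia <;> simp [hja, hia, hab, hab.symm] at ha <;> omega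
  · rintro ⟨rfl, rfl⟩
    exact add_comm _ _

lemma coeff_gen {Fqm : Type} [Field Fqm] {k Q : ℕ} (hQ : 2 ≤ Q) {a b : Fin k}
    (hab : a ≠ b) (i j : Fin k) :
    coeff (dd Q i j) (X a ^ Q * X b - X a * X b ^ Q : MvPolynomial (Fin k) Fqm)
      = (if i = a ∧ j = b then 1 else 0) - (if i = b ∧ j = a then 1 else 0) := by
  have h1 : (X a ^ Q * X b : MvPolynomial (Fin k) Fqm) = monomial (dd Q a b) 1 := by
    rw [X_pow_eq_monomial, X, monomial_mul, one_mul]; rfl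
  have h2 : (X a * X b ^ Q : MvPolynomial (Fin k) Fqm)
      = monomial (Finsupp.single a 1 + Finsupp.single b Q) 1 := by
    rw [X_pow_eq_monomial, X, monomial_mul, one_mul]
  rw [coeff_sub, h1, h2, coeff_monomial, coeff_monomial,
    if_congr (key_eq hQ hab i j) rfl rfl, if_congr (key_eq' hQ hab i j) rfl rfl]


lemma repr_lemma {Fqm : Type} [Field Fqm] {k Q : ℕ} (hQ : 2 ≤ Q)
    (p : MvPolynomial (Fin k) Fqm) (hp : p ∈ formSpace Fqm k Q) :
    (∀ i, coeff (dd Q i i) p = 0) ∧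
    (∀ i j, coeff (dd Q j i) p = - coeff (dd Q i j) p) ∧
    p = ∑ x ∈ Finset.univ.filter (fun x : Fin k × Fin k => x.1 < x.2),
      coeff (dd Q x.1 x.2) p • (X x.1 ^ Q * X x.2 - X x.1 * X x.2 ^ Q) := by
  have hp' : p ∈ Submodule.span Fqm {p : MvPolynomial (Fin k) Fqm |
      ∃ i j : Fin k, i < j ∧ p = X i ^ Q * X j - X i * X j ^ Q} := hp
  clear hp
  induction hp' using Submodule.span_induction with
  | mem g hg =>
    obtain ⟨a, b, hab, rfl⟩ := hg
    refine ⟨?_, ?_, ?_⟩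
    · intro i
      rw [coeff_gen hQ hab.ne]
      split_ifs with h1 h2 h2
      · exact absurd (h1.1.symm.trans h1.2) hab.ne
      · exact absurd (h1.1.symm.trans h1.2) hab.ne
      · exact absurd (h2.1.symm.trans h2.2) hab.ne.symm
      · ring
    · intro i j
      rw [coeff_gen hQ hab.ne, coeff_gen hQ hab.ne]
      rw [if_congr (show (j = a ∧ i = b) ↔ (i = b ∧ j = a) from and_comm) rfl rfl,
          if_congr (show (j = b ∧ i = a) ↔ (i = a ∧ j = b) from and_comm) rfl rfl]
      ring
    · rw [Finset.sum_eq_single_of_mem (a, b) (by simp [hab])]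
      · rw [coeff_gen hQ hab.ne]
        simp [hab.ne]
      · rintro ⟨i, j⟩ hij hne
        simp only [Finset.mem_filter, Finset.mem_univ, true_and] at hij
        rw [coeff_gen hQ hab.ne]
        have h1 : ¬(i = a ∧ j = b) := by
          rintro ⟨rfl, rfl⟩; exact hne rfl
        have h2 : ¬(i = b ∧ j = a) := by
          rintro ⟨rfl, rfl⟩; exact absurd (hab.trans hij) (lt_irrefl _)
        simp [h1, h2]
  | zero => simp
  | add x y hx hy ihx ihy =>
    obtain ⟨d1, s1, r1⟩ := ihx
    obtain ⟨d2, s2, r2⟩ := ihy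
    refine ⟨fun i => by rw [coeff_add, d1, d2, add_zero],
      fun i j => by rw [coeff_add, coeff_add, s1, s2]; ring, ?_⟩
    conv_lhs => rw [r1, r2]
    rw [← Finset.sum_add_distrib]
    exact Finset.sum_congr rfl fun x _ => by rw [coeff_add, add_smul]
  | smul c x hx ih =>
    obtain ⟨d1, s1, r1⟩ := ih
    refine ⟨fun i => by rw [coeff_smul, d1, smul_zero],
      fun i j => by rw [coeff_smul, coeff_smul, s1, smul_neg], ?_⟩
    conv_lhs => rw [r1]
    rw [Finset.smul_sum]
    exact Finset.sum_congr rfl fun x _ => by rw [coeff_smul, smul_eq_mul, mul_smul]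

end Stmt13

open Stmt13 Finset

theorem statement_13
    (q m k s : ℕ) (hqp : IsPrimePow q) (hm : 0 < m) (hk : 2 ≤ k)
    (hs1 : 1 ≤ s) (hs2 : s ≤ m - 1) (hgcd : Nat.gcd s m = 1)
    (Fq Fqm : Type) [Field Fq] [Fintype Fq] [Field Fqm] [Algebra Fq Fqm]
    (hq : Fintype.card Fq = q) (hdeg : Module.finrank Fq Fqm = m)
    (α : Fin (k - 1) → Fin k → Fqm)
    (hli : LinearIndependent Fqm (fun i : Fin (k - 1) => fun j : Fin k =>
      α i j ^ q ^ s - α i j))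
    (p : MvPolynomial (Fin k) Fqm) (hp : p ∈ formSpace Fqm k (q ^ s))
    (hvanish : ∀ i : Fin (k - 1), ∀ v ∈ coset Fq Fqm (α i), eval v p = 0) :
    p = 0 := by
  have hq2 : 2 ≤ q := hqp.two_le
  have hQ : 2 ≤ q ^ s := le_trans hq2 (Nat.le_self_pow (by omega) q)
  obtain ⟨hdiag, hskew, hrepr⟩ := repr_lemma hQ p hp
  set Q : ℕ := q ^ s with hQdef
  set M : Fin k → Fin k → Fqm := fun i j => coeff (dd Q i j) p with hM
  set S : Finset (Fin k × Fin k) :=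
    Finset.univ.filter (fun x : Fin k × Fin k => x.1 < x.2) with hS
  -- characteristic
  set r : ℕ := ringChar Fq with hr
  haveI : CharP Fq r := ringChar.charP Fq
  obtain ⟨n, hrp, hcard⟩ := FiniteField.card Fq r
  haveI : Fact r.Prime := ⟨hrp⟩
  haveI : CharP Fqm r := charP_of_injective_algebraMap (algebraMap Fq Fqm).injective r
  have hfrob : ∀ x y : Fqm, (x + y) ^ Q = x ^ Q + y ^ Q := by
    intro x y
    have hQr : Q = r ^ ((n : ℕ) * s) := by rw [hQdef, ← hq, hcard, pow_mul]
    rw [hQr]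
    exact add_pow_char_pow x y r ((n : ℕ) * s)
  -- the key linear relations
  have hlin : ∀ t u, ∑ i, (α t i ^ Q - α t i) * M i u = 0 := by
    intro t u
    set e : Fin k → Fqm := fun i => if i = u then 1 else 0 with he
    have heQ : ∀ i, e i ^ Q = e i := by
      intro i
      by_cases h : i = u <;> simp [he, h, zero_pow (by omega : Q ≠ 0)]
    set a0 : Fin k → Fq := Pi.single u 1 with ha0
    have hv : (eval fun i => α t i + e i)
        (∑ x ∈ S, coeff (dd Q x.1 x.2) p • (X x.1 ^ Q * X x.2 - X x.1 * X x.2 ^ Q)) = 0 := by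
      rw [← hrepr]
      have hmem : (α t + fun i => algebraMap Fq Fqm (a0 i))
          ∈ coset Fq Fqm (α t) := by exact ⟨a0, rfl⟩
      have := hvanish t _ hmem
      have hee : (α t + fun i => algebraMap Fq Fqm (a0 i))
          = fun i => α t i + e i := by
        funext i
        by_cases h : i = u <;> simp [he, h, ha0, Pi.single_apply]
      rwa [hee] at this
    have hv0 : (eval (α t))
        (∑ x ∈ S, coeff (dd Q x.1 x.2) p • (X x.1 ^ Q * X x.2 - X x.1 * X x.2 ^ Q)) = 0 := by
      rw [← hrepr]; exact hvanish t (α t) ⟨0, by funext i; simp⟩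
    simp only [map_sum, smul_eq_C_mul, map_mul, map_sub, map_pow, eval_C, eval_X] at hv hv0
    have hsplit : ∀ x ∈ S, coeff (dd Q x.1 x.2) p *
        ((α t x.1 + e x.1) ^ Q * (α t x.2 + e x.2)
          - (α t x.1 + e x.1) * (α t x.2 + e x.2) ^ Q)
        = coeff (dd Q x.1 x.2) p *
            (α t x.1 ^ Q * α t x.2 - α t x.1 * α t x.2 ^ Q)
          + coeff (dd Q x.1 x.2) p *
            (e x.2 * (α t x.1 ^ Q - α t x.1) - e x.1 * (α t x.2 ^ Q - α t x.2)) := by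
      intro x _
      rw [hfrob, hfrob, heQ, heQ]
      ring
    rw [Finset.sum_congr rfl hsplit, Finset.sum_add_distrib, hv0, zero_add] at hv
    rw [← hv]
    -- now a pure finite sum identity
    rw [hS, Finset.sum_filter, ← Finset.univ_product_univ, Finset.sum_product]
    have hsplit2 : ∀ i : Fin k, ∑ j, (if i < j then M i j *
        (e j * (α t i ^ Q - α t i) - e i * (α t j ^ Q - α t j)) else 0)
        = (∑ j, if i < j then M i j * e j * (α t i ^ Q - α t i) else 0)
          - (∑ j, if i < j then M i j * e i * (α t j ^ Q - α t j) else 0) := by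
      intro i
      rw [← Finset.sum_sub_distrib]
      refine Finset.sum_congr rfl fun j _ => ?_
      split_ifs <;> ring
    rw [Finset.sum_congr rfl fun i _ => hsplit2 i, Finset.sum_sub_distrib]
    have hT1 : ∀ i : Fin k, (∑ j, if i < j then M i j * e j * (α t i ^ Q - α t i) else 0)
        = if i < u then M i u * (α t i ^ Q - α t i) else 0 := by
      intro i
      rw [Finset.sum_eq_single u]
      · by_cases h : i < u <;> simp [he, h]
      · intro j _ hj
        simp [he, hj]
      · simp
    have hT2 : (∑ i : Fin k, ∑ j, if i < j then M i j * e i * (α t j ^ Q - α t j) else 0)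
        = ∑ j, if u < j then M u j * (α t j ^ Q - α t j) else 0 := by
      rw [Finset.sum_eq_single u]
      · refine Finset.sum_congr rfl fun j _ => ?_
        by_cases h : u < j <;> simp [he, h]
      · intro i _ hi
        refine Finset.sum_eq_zero fun j _ => ?_
        simp [he, hi]
      · simp
    rw [Finset.sum_congr rfl fun i _ => hT1 i, hT2, ← Finset.sum_sub_distrib]
    refine Finset.sum_congr rfl fun i _ => ?_
    rcases lt_trichotomy i u with h | rfl | h
    · simp only [if_pos h, if_neg (asymm h)]
      ring
    · simp only [lt_irrefl, if_neg (lt_irrefl i)]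
      have : M i i = 0 := hdiag i
      rw [this]
      ring
    · simp only [if_neg (asymm h), if_pos h]
      have : M i u = - M u i := hskew u i
      rw [this]
      ring
  -- linear algebra: the matrix M has rank ≤ 1
  set f : (Fin k → Fqm) →ₗ[Fqm] (Fin k → Fqm) := (Matrix.of M).vecMulLinear with hf
  have hfapp : ∀ (v : Fin k → Fqm) (u : Fin k), f v u = ∑ i, v i * M i u := by
    intro v u
    simp [hf, Matrix.vecMulLinear_apply, Matrix.vecMul, dotProduct]
  have hker : ∀ t, (fun j => α t j ^ Q - α t j) ∈ LinearMap.ker f := by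
    intro t
    rw [LinearMap.mem_ker]
    funext u
    rw [Pi.zero_apply, hfapp]
    exact hlin t u
  have hli2 : LinearIndependent Fqm
      (fun t : Fin (k - 1) => (⟨fun j => α t j ^ Q - α t j, hker t⟩ :
        LinearMap.ker f)) := by
    apply LinearIndependent.of_comp (LinearMap.ker f).subtype
    exact hli
  have hkd : k - 1 ≤ Module.finrank Fqm (LinearMap.ker f) := by
    simpa using hli2.fintype_card_le_finrank
  have hrank : Module.finrank Fqm (LinearMap.range f)
      + Module.finrank Fqm (LinearMap.ker f) = k := by
    rw [LinearMap.finrank_range_add_finrank_ker, Module.finrank_fin_fun]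
  have hkerk : Module.finrank Fqm (LinearMap.ker f) ≤ k :=
    le_trans (Submodule.finrank_le _) (by rw [Module.finrank_fin_fun])
  have hr1 : Module.finrank Fqm (LinearMap.range f) ≤ 1 := by omega
  have hrows : ∀ i, M i ∈ LinearMap.range f := by
    intro i
    refine ⟨Pi.single i 1, ?_⟩
    funext u
    rw [hfapp]
    rw [Finset.sum_eq_single i]
    · simp
    · intro j _ hj; simp [Pi.single_apply, hj]
    · simp
  -- conclude M = 0 on S, hence p = 0
  have hzero : ∀ x ∈ S, coeff (dd Q x.1 x.2) p = 0 := by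
    rintro ⟨a, b⟩ hx
    simp only [hS, Finset.mem_filter, Finset.mem_univ, true_and] at hx
    by_contra hMab
    have hnli : ¬ LinearIndependent Fqm ![M a, M b] := by
      intro hLI
      set vv : Fin 2 → LinearMap.range f := ![⟨M a, hrows a⟩, ⟨M b, hrows b⟩] with hvv
      have hcomp : (LinearMap.range f).subtype ∘ vv = ![M a, M b] := by
        funext i
        fin_cases i <;> rfl
      have hli3 : LinearIndependent Fqm vv :=
        LinearIndependent.of_comp _ (hcomp.symm ▸ hLI)
      have := hli3.fintype_card_le_finrank
      simp at this
      omega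
    rw [LinearIndependent.pair_iff] at hnli
    push_neg at hnli
    obtain ⟨c, d0, hsum, hcd⟩ := hnli
    have hcb := congrFun hsum b
    simp only [Pi.add_apply, Pi.smul_apply, smul_eq_mul, Pi.zero_apply] at hcb
    have hMbb : M b b = 0 := hdiag b
    rw [hMbb, mul_zero, add_zero] at hcb
    have hc0 : c = 0 := by
      rcases mul_eq_zero.mp hcb with h | h
      · exact h
      · exact absurd h hMab
    have hca := congrFun hsum a
    simp only [Pi.add_apply, Pi.smul_apply, smul_eq_mul, Pi.zero_apply] at hca
    have hMaa : M a a = 0 := hdiag a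
    have hMba : M b a = - M a b := hskew a b
    rw [hMaa, mul_zero, zero_add, hMba] at hca
    have hd0 : d0 = 0 := by
      rcases mul_eq_zero.mp hca with h | h
      · exact h
      · exact absurd (neg_eq_zero.mp h) hMab
    exact hcd hc0 hd0
  rw [hrepr]
  refine Finset.sum_eq_zero fun x hx => ?_
  rw [hzero x hx, zero_smul]
end

section
/- Let q be a prime power, m,k positive integers, s ∈ {1,…,m−1} with gcd(s,m) = 1, and let p ∈ F_s be a nonzero form. Define Z̄_p := { α^{[s]} − α : α ∈ F_{q^m}^k and p vanishes on V_α = α + F_q^k } ⊆ F_{q^m}^k. If the F_{q^m}-dimension of the F_{q^m}-span of Z̄_p equals r, then there exist α_1,…,α_r ∈ F_{q^m}^k such that q^{Σ_{i=1}^{r} dim_{F_q} H_{α_i}} ≤ |Z̄_p| ≤ q^{r(m−1)}, where H_{α_i} := { v ∈ F_{q^m} : Tr_{F_{q^m}/F_q}((α_{i,j}^{[s]} − α_{i,j})·v) = 0 for all j ∈ {1,…,k} }. -/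
open MvPolynomial

/-- The set `Z̄_p` of vectors `α^{[s]} - α`, for `α` ranging over the vectors whose coset
`V_α = α + F_q^k` is contained in the zero locus of `p`. -/
def Zbar (Fq Fqm : Type) [Field Fq] [Field Fqm] [Algebra Fq Fqm] {k : ℕ}
    (Q : ℕ) (p : MvPolynomial (Fin k) Fqm) : Set (Fin k → Fqm) :=
  {w | ∃ α : Fin k → Fqm, (∀ v ∈ coset Fq Fqm α, eval v p = 0) ∧
    w = fun j => α j ^ Q - α j}

/-- The subspace `H_α = {v ∈ F_{q^m} : Tr((α_j^{[s]} - α_j)·v) = 0 for all j}`. -/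
noncomputable def traceKer (Fq Fqm : Type) [Field Fq] [Field Fqm] [Algebra Fq Fqm]
    {k : ℕ} (Q : ℕ) (α : Fin k → Fqm) : Submodule Fq Fqm :=
  ⨅ j : Fin k, LinearMap.ker
    ((Algebra.trace Fq Fqm) ∘ₗ (LinearMap.mulLeft Fq (α j ^ Q - α j)))

section Aux

open Module

/-- Every element of `formSpace` evaluates as a "twisted alternating form". -/
theorem formSpace_eval {Fqm : Type} [Field Fqm] {k Q : ℕ}
    {p : MvPolynomial (Fin k) Fqm} (hp : p ∈ formSpace Fqm k Q) :
    ∃ C : Matrix (Fin k) (Fin k) Fqm, ∀ α : Fin k → Fqm,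
      eval α p = ∑ i, ∑ j, C i j * (α i ^ Q - α i) * α j := by
  induction hp using Submodule.span_induction with
  | mem x hx =>
    obtain ⟨a, b, hab, rfl⟩ := hx
    refine ⟨fun i j => (if i = a ∧ j = b then 1 else 0) - (if i = b ∧ j = a then 1 else 0),
      fun α => ?_⟩
    have hne : a ≠ b := hab.ne
    simp only [map_sub, map_mul, map_pow, eval_X, sub_mul, ite_mul, one_mul, zero_mul,
      ite_and, Finset.sum_sub_distrib, Finset.sum_ite_irrel, Finset.sum_const_zero,
      Finset.sum_ite_eq', Finset.mem_univ, if_true]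
    ring
  | zero => exact ⟨0, by simp⟩
  | add x y _ _ hx hy =>
    obtain ⟨C1, h1⟩ := hx; obtain ⟨C2, h2⟩ := hy
    exact ⟨C1 + C2, fun α => by simp [h1, h2, add_mul, Finset.sum_add_distrib]⟩
  | smul c x _ hx =>
    obtain ⟨C, h⟩ := hx
    exact ⟨c • C, fun α => by
      simp [h, Finset.mul_sum, smul_eq_mul, mul_assoc]⟩

variable {Fq Fqm : Type} [Field Fq] [Fintype Fq] [Field Fqm] [Algebra Fq Fqm]

/-- All the Frobenius/trace facts we need, packaged. -/
lemma fieldPack (q m s : ℕ) (hqp : IsPrimePow q) (hq : Fintype.card Fq = q)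
    (hdeg : finrank Fq Fqm = m) (hm : 2 ≤ m) (hs1 : 1 ≤ s) (hgcd : Nat.gcd s m = 1) :
    (∀ x y : Fqm, (x + y) ^ q ^ s = x ^ q ^ s + y ^ q ^ s) ∧
    (∀ a : Fq, (algebraMap Fq Fqm a) ^ q ^ s = algebraMap Fq Fqm a) ∧
    (∀ x : Fqm, Algebra.trace Fq Fqm (x ^ q ^ s - x) = 0) ∧
    (∀ x : Fqm, Algebra.trace Fq Fqm x = 0 → ∃ y : Fqm, y ^ q ^ s - y = x) := by
  classical
  haveI hfd : FiniteDimensional Fq Fqm :=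
    Module.finite_of_finrank_pos (hdeg ▸ Nat.lt_of_lt_of_le Nat.zero_lt_two hm)
  haveI : Finite Fqm := Module.finite_of_finite Fq
  -- characteristic
  obtain ⟨pp, n, hpp', hn, hqe⟩ := hqp
  replace hpp' := hpp'.nat_prime
  haveI : Fact pp.Prime := ⟨hpp'⟩
  haveI hcq : CharP Fq pp := by
    have h1 : CharP Fq (ringChar Fq) := ringChar.charP Fq
    obtain ⟨d, hd, hcard⟩ := FiniteField.card Fq (ringChar Fq)
    have hdvd : ringChar Fq ∣ pp ^ n := by
      rw [hqe, ← hq, hcard]; exact dvd_pow_self _ (by positivity)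
    have : ringChar Fq = pp :=
      (Nat.prime_dvd_prime_iff_eq hd hpp').mp (hd.dvd_of_dvd_pow hdvd)
    rwa [this] at h1
  haveI : CharP Fqm pp := charP_of_injective_algebraMap (algebraMap Fq Fqm).injective pp
  have hQpp : q ^ s = pp ^ (n * s) := by rw [← hqe, pow_mul]
  have h1 : ∀ x y : Fqm, (x + y) ^ q ^ s = x ^ q ^ s + y ^ q ^ s := by
    intro x y; rw [hQpp, add_pow_char_pow]
  have hfixq : ∀ a : Fq, a ^ q ^ s = a := by
    intro a; rw [← hq]; exact FiniteField.pow_card_pow s a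
  have h2 : ∀ a : Fq, (algebraMap Fq Fqm a) ^ q ^ s = algebraMap Fq Fqm a := by
    intro a; rw [← map_pow, hfixq]
  -- trace invariance
  have htrinv : ∀ x : Fqm, Algebra.trace Fq Fqm (x ^ q ^ s) = Algebra.trace Fq Fqm x := by
    intro x
    set E := AlgebraicClosure Fq
    haveI : CharP E pp := charP_of_injective_algebraMap (algebraMap Fq E).injective pp
    apply (algebraMap Fq E).injective
    calc (algebraMap Fq E) (Algebra.trace Fq Fqm (x ^ q ^ s))
        = ∑ σ : Fqm →ₐ[Fq] E, σ (x ^ q ^ s) := trace_eq_sum_embeddings E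
      _ = ∑ σ : Fqm →ₐ[Fq] E, (σ x) ^ q ^ s := by
          exact Finset.sum_congr rfl fun σ _ => map_pow σ x _
      _ = (∑ σ : Fqm →ₐ[Fq] E, σ x) ^ q ^ s := by rw [hQpp, sum_pow_char_pow]
      _ = ((algebraMap Fq E) (Algebra.trace Fq Fqm x)) ^ q ^ s := by
          rw [trace_eq_sum_embeddings E]
      _ = (algebraMap Fq E) ((Algebra.trace Fq Fqm x) ^ q ^ s) := (map_pow _ _ _).symm
      _ = (algebraMap Fq E) (Algebra.trace Fq Fqm x) := by rw [hfixq]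
  have h3 : ∀ x : Fqm, Algebra.trace Fq Fqm (x ^ q ^ s - x) = 0 := by
    intro x; rw [map_sub, htrinv, sub_self]
  refine ⟨h1, h2, h3, ?_⟩
  -- the `Fq`-linear map `x ↦ x^Q - x`
  have hq2 : 2 ≤ q := by
    rw [← hqe]
    calc 2 ≤ pp := hpp'.two_le
    _ = pp ^ 1 := (pow_one pp).symm
    _ ≤ pp ^ n := Nat.pow_le_pow_right hpp'.one_lt.le hn
  haveI : Fintype Fqm := Fintype.ofFinite Fqm
  have hcardm : Fintype.card Fqm = q ^ m := by
    rw [card_eq_pow_finrank (K := Fq) (V := Fqm), hq, hdeg]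
  -- fixed points of x ↦ x^(q^s) are exactly the image of Fq
  have hfix_mem : ∀ x : Fqm, x ^ q ^ s = x → ∃ a : Fq, algebraMap Fq Fqm a = x := by
    intro x hx
    have hst : ∀ t : ℕ, x ^ q ^ (s * t) = x := by
      intro t
      induction t with
      | zero => simp
      | succ t ih =>
        have : q ^ (s * (t + 1)) = q ^ (s * t) * q ^ s := by rw [← pow_add]; ring_nf
        rw [this, pow_mul, ih, hx]
    have hmc : ∀ c : ℕ, x ^ q ^ (m * c) = x := by
      intro c
      induction c with
      | zero => simp
      | succ c ih =>
        have : q ^ (m * (c + 1)) = q ^ (m * c) * q ^ m := by rw [← pow_add]; ring_nf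
        rw [this, pow_mul, ih, ← hcardm, FiniteField.pow_card]
    have hxq : x ^ q = x := by
      obtain ⟨t, -, ht⟩ := Nat.exists_mul_mod_eq_one_of_coprime hgcd (by omega)
      have hdm := Nat.div_add_mod (s * t) m
      rw [ht] at hdm
      have : x ^ q ^ (s * t) = x := hst t
      rw [← hdm, pow_add, pow_one, pow_mul] at this
      rwa [hmc] at this
    by_contra hnot
    push_neg at hnot
    set P : Polynomial Fqm := Polynomial.X ^ q - Polynomial.X with hP
    have hPdeg : P.natDegree = q := by
      rw [hP, Polynomial.natDegree_sub_eq_left_of_natDegree_lt, Polynomial.natDegree_X_pow]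
      rw [Polynomial.natDegree_X, Polynomial.natDegree_X_pow]
      omega
    have hPne : P ≠ 0 := fun h => by simp [h] at hPdeg; omega
    set F : Finset Fqm := Finset.univ.image (algebraMap Fq Fqm) with hF
    have hFcard : F.card = q := by
      rw [hF, Finset.card_image_of_injective _ (algebraMap Fq Fqm).injective,
        Finset.card_univ, hq]
    have hroot : ∀ y : Fqm, y ^ q = y → y ∈ P.roots.toFinset := by
      intro y hy
      rw [Multiset.mem_toFinset, Polynomial.mem_roots hPne]
      simp [hP, Polynomial.IsRoot, hy]
    have hsub : insert x F ⊆ P.roots.toFinset := by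
      intro y hy
      rcases Finset.mem_insert.mp hy with h | h
      · exact h ▸ hroot x hxq
      · rw [hF, Finset.mem_image] at h
        obtain ⟨a, -, rfl⟩ := h
        refine hroot _ ?_
        rw [← map_pow]
        congr 1
        rw [← hq]; exact FiniteField.pow_card a
    have hxF : x ∉ F := by
      rw [hF, Finset.mem_image]
      rintro ⟨a, -, ha⟩
      exact hnot a ha
    have : q + 1 ≤ q := by
      calc q + 1 = (insert x F).card := by rw [Finset.card_insert_of_notMem hxF, hFcard]
      _ ≤ P.roots.toFinset.card := Finset.card_le_card hsub
      _ ≤ Multiset.card P.roots := P.roots.toFinset_card_le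
      _ ≤ P.natDegree := Polynomial.card_roots' P
      _ = q := hPdeg
    omega
  set φL : Fqm →ₗ[Fq] Fqm :=
    { toFun := fun x => x ^ q ^ s - x
      map_add' := by
        intro x y
        show (x + y) ^ q ^ s - (x + y) = x ^ q ^ s - x + (y ^ q ^ s - y)
        rw [h1]; ring
      map_smul' := by
        intro a x
        show (a • x) ^ q ^ s - a • x = a • (x ^ q ^ s - x)
        simp only [Algebra.smul_def]
        rw [mul_pow, h2]; ring } with hφL
  have hker : LinearMap.ker φL = LinearMap.range (Algebra.linearMap Fq Fqm) := by
    apply le_antisymm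
    · rintro x hx
      rw [LinearMap.mem_ker] at hx
      simp only [hφL, LinearMap.coe_mk, AddHom.coe_mk] at hx
      obtain ⟨a, ha⟩ := hfix_mem x (sub_eq_zero.mp hx)
      exact ⟨a, ha⟩
    · rintro _ ⟨a, rfl⟩
      rw [LinearMap.mem_ker]
      simp only [hφL, LinearMap.coe_mk, AddHom.coe_mk, Algebra.linearMap_apply]
      rw [h2, sub_self]
  have hkerrank : finrank Fq (LinearMap.ker φL) = 1 := by
    rw [hker, LinearMap.finrank_range_of_inj (algebraMap Fq Fqm).injective, finrank_self]
  have hrangerank : finrank Fq (LinearMap.range φL) = m - 1 := by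
    have := LinearMap.finrank_range_add_finrank_ker φL
    rw [hkerrank, hdeg] at this
    omega
  have htrne : ∃ z : Fqm, Algebra.trace Fq Fqm z ≠ 0 := by
    by_contra hz
    push_neg at hz
    have := (traceForm_nondegenerate Fq Fqm).1 1 (fun y => by
      simp [Algebra.traceForm_apply, hz])
    exact one_ne_zero this
  have htrsurj : LinearMap.range (Algebra.trace Fq Fqm) = ⊤ := by
    obtain ⟨z, hz⟩ := htrne
    rw [LinearMap.range_eq_top]
    intro c
    refine ⟨(c * (Algebra.trace Fq Fqm z)⁻¹) • z, ?_⟩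
    rw [map_smul]
    simp only [smul_eq_mul]
    field_simp
  have htrkerrank : finrank Fq (LinearMap.ker (Algebra.trace Fq Fqm)) = m - 1 := by
    have := LinearMap.finrank_range_add_finrank_ker (Algebra.trace Fq Fqm)
    rw [htrsurj, finrank_top, finrank_self, hdeg] at this
    omega
  have hle : LinearMap.range φL ≤ LinearMap.ker (Algebra.trace Fq Fqm) := by
    rintro _ ⟨y, rfl⟩
    rw [LinearMap.mem_ker]
    exact h3 y
  have heq : LinearMap.range φL = LinearMap.ker (Algebra.trace Fq Fqm) :=
    Submodule.eq_of_le_of_finrank_le hle (by rw [hrangerank, htrkerrank])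
  intro x hx
  have : x ∈ LinearMap.range φL := heq ▸ (LinearMap.mem_ker.mpr hx)
  obtain ⟨y, hy⟩ := this
  exact ⟨y, hy⟩

/-- The `Fq`-bilinear trace pairing on `ι → Fqm`. -/
noncomputable def pairB (Fq Fqm : Type) [Field Fq] [Field Fqm] [Algebra Fq Fqm]
    (ι : Type) [Fintype ι] : LinearMap.BilinForm Fq (ι → Fqm) :=
  LinearMap.mk₂ Fq (fun v u => Algebra.trace Fq Fqm (∑ i, v i * u i))
    (fun v v' u => by simp only [Pi.add_apply, add_mul, Finset.sum_add_distrib, map_add])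
    (fun a v u => by simp only [Pi.smul_apply, smul_mul_assoc, ← Finset.smul_sum, map_smul])
    (fun v u u' => by simp only [Pi.add_apply, mul_add, Finset.sum_add_distrib, map_add])
    (fun a v u => by simp only [Pi.smul_apply, mul_smul_comm, ← Finset.smul_sum, map_smul])

@[simp] lemma pairB_apply {Fq Fqm : Type} [Field Fq] [Field Fqm] [Algebra Fq Fqm]
    {ι : Type} [Fintype ι] (v u : ι → Fqm) :
    pairB Fq Fqm ι v u = Algebra.trace Fq Fqm (∑ i, v i * u i) := rfl

variable {k : ℕ}

lemma zbar_char (Q : ℕ) (C : Matrix (Fin k) (Fin k) Fqm) (p : MvPolynomial (Fin k) Fqm)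
    (hC : ∀ α : Fin k → Fqm, eval α p = ∑ i, ∑ j, C i j * (α i ^ Q - α i) * α j)
    (h1 : ∀ x y : Fqm, (x + y) ^ Q = x ^ Q + y ^ Q)
    (h2 : ∀ a : Fq, (algebraMap Fq Fqm a) ^ Q = algebraMap Fq Fqm a)
    (h3 : ∀ x : Fqm, Algebra.trace Fq Fqm (x ^ Q - x) = 0)
    (h4 : ∀ x : Fqm, Algebra.trace Fq Fqm x = 0 → ∃ y : Fqm, y ^ Q - y = x) :
    Zbar Fq Fqm Q p =
      {w | (∀ j, ∑ i, C i j * w i = 0) ∧ ∀ j, Algebra.trace Fq Fqm (w j) = 0} := by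
  have hshift : ∀ (α : Fin k → Fqm) (a : Fin k → Fq) (i : Fin k),
      ((α + fun i => algebraMap Fq Fqm (a i)) i) ^ Q - (α + fun i => algebraMap Fq Fqm (a i)) i
        = α i ^ Q - α i := by
    intro α a i
    simp only [Pi.add_apply]
    rw [h1, h2]; ring
  ext w
  constructor
  · rintro ⟨α, hvan, rfl⟩
    have heval : ∀ a : Fin k → Fq,
        (∑ i, ∑ j, C i j * (α i ^ Q - α i) * α j) +
          (∑ i, ∑ j, C i j * (α i ^ Q - α i) * algebraMap Fq Fqm (a j)) = 0 := by
      intro a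
      have h0 := hvan _ ⟨a, rfl⟩
      rw [hC] at h0
      rw [← h0]
      rw [← Finset.sum_add_distrib]
      refine Finset.sum_congr rfl fun i _ => ?_
      rw [← Finset.sum_add_distrib]
      refine Finset.sum_congr rfl fun j _ => ?_
      rw [hshift]
      simp only [Pi.add_apply]
      ring
    have hS0 : (∑ i, ∑ j, C i j * (α i ^ Q - α i) * α j) = 0 := by
      have := heval 0
      simpa using this
    refine ⟨fun j₀ => ?_, fun j => h3 (α j)⟩
    have := heval (Pi.single j₀ 1)
    rw [hS0, zero_add] at this
    have hsingle : ∀ j : Fin k, algebraMap Fq Fqm ((Pi.single j₀ (1 : Fq) : Fin k → Fq) j)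
        = if j = j₀ then 1 else 0 := by
      intro j
      rcases eq_or_ne j j₀ with h | h
      · subst h; simp
      · simp [Pi.single_apply, h]
    rw [Finset.sum_comm] at this
    simp only [hsingle, mul_ite, mul_one, mul_zero] at this
    simp only [Finset.sum_ite_irrel, Finset.sum_const_zero, Finset.sum_ite_eq',
      Finset.mem_univ, if_true] at this
    exact this
  · rintro ⟨hker, htr⟩
    choose α hα using fun j => h4 (w j) (htr j)
    refine ⟨α, ?_, funext fun j => (hα j).symm⟩
    rintro v ⟨a, rfl⟩
    rw [hC]
    have : ∀ i j : Fin k,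
        C i j * (((α + fun i => algebraMap Fq Fqm (a i)) i) ^ Q
            - (α + fun i => algebraMap Fq Fqm (a i)) i)
          * ((α + fun i => algebraMap Fq Fqm (a i)) j)
        = C i j * w i * (α j + algebraMap Fq Fqm (a j)) := by
      intro i j
      rw [hshift, hα]
      simp only [Pi.add_apply]
    simp only [this]
    rw [Finset.sum_comm]
    refine Finset.sum_eq_zero fun j _ => ?_
    have : ∑ i, C i j * w i * (α j + algebraMap Fq Fqm (a j))
        = (∑ i, C i j * w i) * (α j + algebraMap Fq Fqm (a j)) := by
      rw [Finset.sum_mul]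
    rw [this, hker j, zero_mul]

end Aux

theorem statement_14
    (q m k s : ℕ) (hqp : IsPrimePow q) (hm : 0 < m) (hk : 0 < k)
    (hs1 : 1 ≤ s) (hs2 : s ≤ m - 1) (hgcd : Nat.gcd s m = 1)
    (Fq Fqm : Type) [Field Fq] [Fintype Fq] [Field Fqm] [Algebra Fq Fqm]
    (hq : Fintype.card Fq = q) (hdeg : Module.finrank Fq Fqm = m)
    (p : MvPolynomial (Fin k) Fqm) (hp : p ∈ formSpace Fqm k (q ^ s)) (hp0 : p ≠ 0)
    (r : ℕ)
    (hr : Module.finrank Fqm ↥(Submodule.span Fqm (Zbar Fq Fqm (q ^ s) p)) = r) :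
    ∃ α : Fin r → Fin k → Fqm,
      q ^ (∑ i : Fin r, Module.finrank Fq ↥(traceKer Fq Fqm (q ^ s) (α i)))
          ≤ Nat.card (Zbar Fq Fqm (q ^ s) p) ∧
        Nat.card (Zbar Fq Fqm (q ^ s) p) ≤ q ^ (r * (m - 1)) := by

  classical
  set Q := q ^ s with hQ
  have hm2 : 2 ≤ m := by omega
  obtain ⟨C, hC⟩ := formSpace_eval hp
  obtain ⟨h1, h2, h3, h4⟩ := fieldPack (Fq := Fq) (Fqm := Fqm) q m s hqp hq hdeg hm2 hs1 hgcd
  have hchar : Zbar Fq Fqm Q p =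
      {w | (∀ j, ∑ i, C i j * w i = 0) ∧ ∀ j, Algebra.trace Fq Fqm (w j) = 0} :=
    zbar_char Q C p hC h1 h2 h3 h4
  haveI hfd : FiniteDimensional Fq Fqm :=
    Module.finite_of_finrank_pos (hdeg ▸ Nat.lt_of_lt_of_le Nat.zero_lt_two hm2)
  haveI : Finite Fqm := Module.finite_of_finite Fq
  -- membership facts
  have hZker : ∀ z ∈ Zbar Fq Fqm Q p, ∀ j, ∑ i, C i j * z i = 0 := by
    intro z hz; rw [hchar] at hz; exact hz.1
  have hZtr : ∀ z ∈ Zbar Fq Fqm Q p, ∀ j, Algebra.trace Fq Fqm (z j) = 0 := by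
    intro z hz; rw [hchar] at hz; exact hz.2
  have hZmem : ∀ z : Fin k → Fqm, (∀ j, ∑ i, C i j * z i = 0) →
      (∀ j, Algebra.trace Fq Fqm (z j) = 0) → z ∈ Zbar Fq Fqm Q p := by
    intro z hker htr; rw [hchar]; exact ⟨hker, htr⟩
  -- choose a basis of the span inside Zbar
  obtain ⟨b, hbZ, hbspan, hbli⟩ := exists_linearIndependent Fqm (Zbar Fq Fqm Q p)
  haveI : Fintype b := (Set.toFinite b).fintype
  have hcardb : Fintype.card b = r := by
    have h1' : Module.finrank Fqm ↥(Submodule.span Fqm b) = r := by rw [hbspan]; exact hr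
    rw [finrank_span_set_eq_card hbli] at h1'
    rwa [Set.toFinset_card] at h1'
  set eqv : Fin r ≃ b := (Fintype.equivFinOfCardEq hcardb).symm with heqv
  set w : Fin r → (Fin k → Fqm) := fun i => ((eqv i : b) : Fin k → Fqm) with hw
  have hwZ : ∀ i, w i ∈ Zbar Fq Fqm Q p := fun i => hbZ (eqv i).2
  have hwli : LinearIndependent Fqm w := hbli.comp eqv eqv.injective
  have hrange : Set.range w = b := by
    rw [hw]
    have h5 : Set.range (fun i => ((eqv i : b) : Fin k → Fqm))
        = (fun x : b => (x : Fin k → Fqm)) '' Set.range eqv := by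
      rw [← Set.range_comp]; rfl
    rw [h5, Equiv.range_eq_univ, Set.image_univ, Subtype.range_coe]
  have hwspan : Submodule.span Fqm (Set.range w) = Submodule.span Fqm (Zbar Fq Fqm Q p) := by
    rw [hrange, hbspan]
  -- the vectors αf with `αf i j ^ Q - αf i j = w i j`
  choose αf hvan hweq using fun i => hwZ i
  have hcoef : ∀ i j, αf i j ^ Q - αf i j = w i j :=
    fun i j => (congrFun (hweq i) j).symm
  have hsum_apply : ∀ (c : Fin r → Fqm) (j : Fin k),
      (∑ i, c i • w i) j = ∑ i, c i * w i j := by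
    intro c j
    simp only [Finset.sum_apply, Pi.smul_apply, smul_eq_mul]
  refine ⟨αf, ?_, ?_⟩
  · -- LOWER BOUND
    have hHmem : ∀ (i : Fin r) (v : Fqm), v ∈ traceKer Fq Fqm Q (αf i) →
        ∀ j, Algebra.trace Fq Fqm (w i j * v) = 0 := by
      intro i v hv j
      rw [traceKer, Submodule.mem_iInf] at hv
      have h6 := hv j
      rw [LinearMap.mem_ker, LinearMap.comp_apply, LinearMap.mulLeft_apply] at h6
      rwa [hcoef i j] at h6
    have hθZ : ∀ v : (∀ i : Fin r, ↥(traceKer Fq Fqm Q (αf i))),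
        (∑ i, (v i : Fqm) • w i) ∈ Zbar Fq Fqm Q p := by
      intro v
      apply hZmem
      · intro j
        simp only [hsum_apply]
        have h7 : ∑ i', C i' j * (∑ i, (v i : Fqm) * w i i')
            = ∑ i, (v i : Fqm) * (∑ i', C i' j * w i i') := by
          simp_rw [Finset.mul_sum]
          rw [Finset.sum_comm]
          exact Finset.sum_congr rfl fun i _ => Finset.sum_congr rfl fun i' _ => by ring
        rw [h7]
        refine Finset.sum_eq_zero fun i _ => ?_
        rw [hZker (w i) (hwZ i) j, mul_zero]
      · intro j
        rw [hsum_apply, map_sum]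
        refine Finset.sum_eq_zero fun i _ => ?_
        rw [mul_comm]
        exact hHmem i (v i) (v i).2 j
    set θ : (∀ i : Fin r, ↥(traceKer Fq Fqm Q (αf i))) → ↥(Zbar Fq Fqm Q p) := fun v =>
      ⟨∑ i, (v i : Fqm) • w i, hθZ v⟩ with hθ
    have hθinj : Function.Injective θ := by
      intro v v' hvv'
      have hval : (∑ i, (v i : Fqm) • w i) = ∑ i, (v' i : Fqm) • w i :=
        congrArg Subtype.val hvv'
      have hsum : ∑ i, ((v i : Fqm) - (v' i : Fqm)) • w i = 0 := by
        rw [← sub_eq_zero] at hval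
        rw [← hval, ← Finset.sum_sub_distrib]
        exact Finset.sum_congr rfl fun i _ => by rw [sub_smul]
      have hcoords := Fintype.linearIndependent_iff.mp hwli _ hsum
      funext i
      exact Subtype.ext (sub_eq_zero.mp (hcoords i))
    have hcard : Nat.card (∀ i : Fin r, ↥(traceKer Fq Fqm Q (αf i)))
        = q ^ (∑ i : Fin r, Module.finrank Fq ↥(traceKer Fq Fqm Q (αf i))) := by
      rw [Nat.card_pi, ← Finset.prod_pow_eq_pow_sum]
      refine Finset.prod_congr rfl fun i _ => ?_
      haveI : Fintype ↥(traceKer Fq Fqm Q (αf i)) := Fintype.ofFinite _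
      rw [Nat.card_eq_fintype_card, Module.card_eq_pow_finrank (K := Fq), hq]
    calc q ^ (∑ i : Fin r, Module.finrank Fq ↥(traceKer Fq Fqm Q (αf i)))
        = Nat.card (∀ i : Fin r, ↥(traceKer Fq Fqm Q (αf i))) := hcard.symm
      _ ≤ Nat.card ↥(Zbar Fq Fqm Q p) := Nat.card_le_card_of_injective θ hθinj
  · -- UPPER BOUND
    set B : LinearMap.BilinForm Fq (Fin r → Fqm) := pairB Fq Fqm (Fin r) with hB
    set cols : Fin k → (Fin r → Fqm) := fun j => fun i => w i j with hcols
    set Φ : (Fin r → Fqm) →ₗ[Fq] (Fin k → Fq) := LinearMap.pi (fun j => B (cols j)) with hΦ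
    have hΦapp : ∀ (v : Fin r → Fqm) (j : Fin k),
        Φ v j = Algebra.trace Fq Fqm (∑ i, w i j * v i) := by
      intro v j
      rw [hΦ, LinearMap.pi_apply, hB, pairB_apply]
    -- injection of Zbar into ker Φ
    have hrep : ∀ z : ↥(Zbar Fq Fqm Q p), ∃ c : Fin r → Fqm,
        ∑ i, c i • w i = (z : Fin k → Fqm) := by
      intro z
      have h8 : (z : Fin k → Fqm) ∈ Submodule.span Fqm (Set.range w) := by
        rw [hwspan]; exact Submodule.subset_span z.2
      exact (Submodule.mem_span_range_iff_exists_fun Fqm).mp h8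
    choose c hc using hrep
    have hcmem : ∀ z : ↥(Zbar Fq Fqm Q p), c z ∈ LinearMap.ker Φ := by
      intro z
      rw [LinearMap.mem_ker]
      funext j
      rw [hΦapp, Pi.zero_apply]
      have h9 : ∑ i, w i j * c z i = (z : Fin k → Fqm) j := by
        rw [← hc z, hsum_apply]
        exact Finset.sum_congr rfl fun i _ => mul_comm _ _
      rw [h9]
      exact hZtr _ z.2 j
    have hcinj : Function.Injective
        (fun z : ↥(Zbar Fq Fqm Q p) => (⟨c z, hcmem z⟩ : ↥(LinearMap.ker Φ))) := by
      intro z z' h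
      have h10 : c z = c z' := congrArg Subtype.val h
      apply Subtype.ext
      rw [← hc z, ← hc z', h10]
    have hcard1 : Nat.card ↥(Zbar Fq Fqm Q p) ≤ Nat.card ↥(LinearMap.ker Φ) :=
      Nat.card_le_card_of_injective _ hcinj
    -- properties of B
    have hBsymm : ∀ v u : Fin r → Fqm, B v u = B u v := by
      intro v u
      rw [hB, pairB_apply, pairB_apply]
      congr 1
      exact Finset.sum_congr rfl fun i _ => mul_comm _ _
    have hBrefl : B.IsRefl := fun v u h => by rw [hBsymm]; exact h
    have hBnd : B.Nondegenerate := by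
      refine (LinearMap.IsRefl.nondegenerate_iff_separatingLeft hBrefl).mpr ?_
      intro v hv
      funext i₀
      rw [Pi.zero_apply]
      by_contra hne
      have htrf := (traceForm_nondegenerate Fq Fqm).1 (v i₀)
      have h11 : ∃ y : Fqm, Algebra.trace Fq Fqm (v i₀ * y) ≠ 0 := by
        by_contra hy
        push_neg at hy
        exact hne (htrf fun y => by rw [Algebra.traceForm_apply]; exact hy y)
      obtain ⟨y, hy⟩ := h11
      apply hy
      have h12 := hv (Pi.single i₀ y)
      rw [hB, pairB_apply] at h12
      rw [← h12]
      congr 1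
      rw [Finset.sum_eq_single i₀]
      · simp
      · intro i _ hi; simp [Pi.single_apply, hi]
      · intro h; exact absurd (Finset.mem_univ i₀) h
    set S : Submodule Fq (Fin r → Fqm) := Submodule.span Fq (Set.range cols) with hS
    -- ker Φ is the orthogonal complement of S
    have hkerorth : LinearMap.ker Φ = B.orthogonal S := by
      ext v
      rw [LinearMap.mem_ker, LinearMap.BilinForm.mem_orthogonal_iff]
      constructor
      · intro hv u hu
        have hgen : ∀ u ∈ S, B u v = 0 := by
          intro u hu
          induction hu using Submodule.span_induction with
          | mem u hu =>
            obtain ⟨j, rfl⟩ := hu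
            have h13 := congrFun hv j
            rw [hΦ, LinearMap.pi_apply] at h13
            exact h13
          | zero => simp
          | add x y _ _ hx hy => rw [map_add, LinearMap.add_apply, hx, hy, add_zero]
          | smul a x _ hx => rw [map_smul, LinearMap.smul_apply, hx, smul_zero]
        exact hgen u hu
      · intro hv
        funext j
        have h14 : B (cols j) v = 0 := hv (cols j) (Submodule.subset_span ⟨j, rfl⟩)
        rw [hΦ, LinearMap.pi_apply]
        exact h14
    -- dimension bookkeeping
    have hdimV : Module.finrank Fq (Fin r → Fqm) = r * m := by
      rw [Module.finrank_pi_fintype, Finset.sum_const, Finset.card_univ, Fintype.card_fin,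
        hdeg, smul_eq_mul]
    have hStop : Submodule.span Fqm (Set.range cols) = (⊤ : Submodule Fqm (Fin r → Fqm)) := by
      set W : Matrix (Fin r) (Fin k) Fqm := Matrix.of w with hW
      have hrank1 : W.rank = r := by
        rw [Matrix.rank_eq_finrank_span_row]
        have h15 : Set.range W.row = Set.range w := rfl
        rw [h15, hwspan, hr]
      have hrank2 : W.rank = Module.finrank Fqm (Submodule.span Fqm (Set.range W.transpose)) :=
        Matrix.rank_eq_finrank_span_cols W
      have hWT : Set.range W.transpose = Set.range cols := rfl
      apply Submodule.eq_top_of_finrank_eq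
      rw [← hWT, ← hrank2, hrank1, Module.finrank_pi]
      simp
    have hSrank : r ≤ Module.finrank Fq S := by
      set d := Module.finrank Fq S with hd
      set bS := Module.finBasis Fq ↥S with hbS
      set g : Fin d → (Fin r → Fqm) := fun l => ((bS l : ↥S) : Fin r → Fqm) with hg
      have hgspan : S ≤ Submodule.restrictScalars Fq (Submodule.span Fqm (Set.range g)) := by
        intro x hx
        have h16 : (⟨x, hx⟩ : ↥S) ∈ Submodule.span Fq (Set.range bS) := by
          rw [bS.span_eq]; trivial
        have himg := Submodule.mem_map_of_mem (f := S.subtype) h16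
        rw [Submodule.map_span] at himg
        have h17 : S.subtype '' (Set.range bS) = Set.range g := by
          rw [← Set.range_comp]; rfl
        rw [h17] at himg
        have hle : Submodule.span Fq (Set.range g)
            ≤ Submodule.restrictScalars Fq (Submodule.span Fqm (Set.range g)) := by
          rw [Submodule.span_le]
          exact fun y hy => Submodule.subset_span hy
        exact hle himg
      have htop : Submodule.span Fqm (Set.range g) = ⊤ := by
        rw [← top_le_iff, ← hStop, Submodule.span_le]
        rintro _ ⟨j, rfl⟩
        exact hgspan (Submodule.subset_span ⟨j, rfl⟩)
      have h18 : Module.finrank Fqm (Submodule.span Fqm (Set.range g)) ≤ d := by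
        have := finrank_range_le_card (R := Fqm) g
        rw [Set.finrank] at this
        simpa using this
      rw [htop, finrank_top, Module.finrank_pi] at h18
      simpa using h18
    have hkerrank : Module.finrank Fq (LinearMap.ker Φ) ≤ r * m - r := by
      rw [hkerorth, LinearMap.BilinForm.finrank_orthogonal hBnd, hdimV]
      omega
    haveI : Fintype ↥(LinearMap.ker Φ) := Fintype.ofFinite _
    have hcard2 : Nat.card ↥(LinearMap.ker Φ) = q ^ Module.finrank Fq (LinearMap.ker Φ) := by
      rw [Nat.card_eq_fintype_card, Module.card_eq_pow_finrank (K := Fq), hq]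
    have hq1 : 1 ≤ q := le_trans one_le_two hqp.two_le
    have hfinal : r * m - r = r * (m - 1) := by
      obtain ⟨m', rfl⟩ : ∃ m', m = m' + 1 := ⟨m - 1, by omega⟩
      rw [Nat.succ_sub_one, Nat.mul_succ, Nat.add_sub_cancel]
    calc Nat.card ↥(Zbar Fq Fqm Q p) ≤ Nat.card ↥(LinearMap.ker Φ) := hcard1
      _ = q ^ Module.finrank Fq (LinearMap.ker Φ) := hcard2
      _ ≤ q ^ (r * m - r) := Nat.pow_le_pow_right hq1 hkerrank
      _ = q ^ (r * (m - 1)) := by rw [hfinal]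
end

section
/- Let q be a prime power, m,k positive integers with k ≥ 2, s ∈ {1,…,m−1} with gcd(s,m) = 1, and let p ∈ F_s be a nonzero form. Then the number of distinct cosets α + F_q^k (α ∈ F_{q^m}^k) on which p vanishes is at most q^{(k−2)(m−1)}. -/
open MvPolynomial

section Aux
variable {Fq Fqm : Type} [Field Fq] [Fintype Fq] [Field Fqm] [Algebra Fq Fqm]

lemma aux_fixed_mem_range (x : Fqm) (hx : x ^ (Fintype.card Fq) = x) :
    ∃ a : Fq, algebraMap Fq Fqm a = x := by
  classical
  set q := Fintype.card Fq with hq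
  have hq2 : 1 < q := Fintype.one_lt_card
  by_contra hc
  push_neg at hc
  set P : Polynomial Fqm := Polynomial.X ^ q - Polynomial.X with hP
  have hPdeg : P.natDegree = q := FiniteField.X_pow_card_sub_X_natDegree_eq _ hq2
  set Z : Finset Fqm := insert x (Finset.univ.image (algebraMap Fq Fqm)) with hZ
  have hcard : Z.card = q + 1 := by
    rw [hZ, Finset.card_insert_of_notMem]
    · rw [Finset.card_image_of_injective _ (algebraMap Fq Fqm).injective,
        Finset.card_univ]
    · simp only [Finset.mem_image, Finset.mem_univ, true_and]
      rintro ⟨a, ha⟩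
      exact hc a ha
  have hsub : Z.val ⊆ P.roots := by
    intro y hy
    have hy' : y ∈ Z := hy
    have hroot : y ^ q = y := by
      rw [hZ] at hy'
      rcases Finset.mem_insert.mp hy' with h | h
      · rw [h]; exact hx
      · rcases Finset.mem_image.mp h with ⟨a, _, ha⟩
        rw [← ha, ← map_pow, FiniteField.pow_card]
    have hP0 : P ≠ 0 := FiniteField.X_pow_card_sub_X_ne_zero _ hq2
    rw [Polynomial.mem_roots hP0]
    simp [hP, Polynomial.IsRoot, sub_eq_zero, hroot]
  have := Polynomial.card_le_degree_of_subset_roots hsub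
  omega

lemma aux_coset_eq {k : ℕ} (α α' : Fin k → Fqm)
    (h : ∀ i, ∃ b : Fq, algebraMap Fq Fqm b = α i - α' i) :
    coset Fq Fqm α = coset Fq Fqm α' := by
  choose b hb using h
  ext v
  constructor
  · rintro ⟨a, rfl⟩
    refine ⟨b + a, ?_⟩
    funext i
    simp only [Pi.add_apply, map_add, hb]
    ring
  · rintro ⟨a, rfl⟩
    refine ⟨a - b, ?_⟩
    funext i
    simp only [Pi.add_apply, Pi.sub_apply, map_sub, hb]
    ring

end Aux

lemma aux_pow_descent {Fqm : Type} [CommRing Fqm] (q s m : ℕ) (hm : 1 < m)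
    (hgcd : Nat.gcd s m = 1) (x : Fqm)
    (hxm : x ^ q ^ m = x) (hxs : x ^ q ^ s = x) : x ^ q = x := by
  have hmul : ∀ t, x ^ q ^ (s * t) = x := by
    intro t
    induction t with
    | zero => simp
    | succ t ih => rw [Nat.mul_succ, pow_add, pow_mul, ih, hxs]
  have hmulm : ∀ t, x ^ q ^ (m * t) = x := by
    intro t
    induction t with
    | zero => simp
    | succ t ih => rw [Nat.mul_succ, pow_add, pow_mul, ih, hxm]
  obtain ⟨a, -, ha⟩ := Nat.exists_mul_mod_eq_one_of_coprime hgcd hm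
  have hdiv : s * a = m * (s * a / m) + 1 := by
    conv_lhs => rw [← Nat.div_add_mod (s * a) m]
    rw [ha]
  have := hmul a
  rw [hdiv, pow_add, pow_mul, pow_one, hmulm] at this
  exact this

theorem statement_15
    (q m k s : ℕ) (hqp : IsPrimePow q) (hm : 0 < m) (hk : 2 ≤ k)
    (hs1 : 1 ≤ s) (hs2 : s ≤ m - 1) (hgcd : Nat.gcd s m = 1)
    (Fq Fqm : Type) [Field Fq] [Fintype Fq] [Field Fqm] [Algebra Fq Fqm]
    (hq : Fintype.card Fq = q) (hdeg : Module.finrank Fq Fqm = m)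
    (p : MvPolynomial (Fin k) Fqm) (hp : p ∈ formSpace Fqm k (q ^ s)) (hp0 : p ≠ 0) :
    Nat.card {S : Set (Fin k → Fqm) |
        (∃ α : Fin k → Fqm, S = coset Fq Fqm α) ∧ ∀ v ∈ S, eval v p = 0}
      ≤ q ^ ((k - 2) * (m - 1)) := by
  classical
  have hm2 : 2 ≤ m := by omega
  have hq2 : 1 < q := by rw [← hq]; exact Fintype.one_lt_card
  set Q := q ^ s with hQdef
  haveI : FiniteDimensional Fq Fqm :=
    FiniteDimensional.of_finrank_pos (by rw [hdeg]; omega)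
  haveI : Finite Fqm := Module.finite_of_finite Fq
  haveI : Fintype Fqm := Fintype.ofFinite Fqm
  have hcardFqm : Fintype.card Fqm = q ^ m := by
    rw [Module.card_eq_pow_finrank (K := Fq) (V := Fqm), hq, hdeg]
  -- characteristic
  set r := ringChar Fq with hr
  haveI : CharP Fq r := ringChar.charP Fq
  obtain ⟨n, hrprime, hqr⟩ := FiniteField.card Fq r
  rw [hq] at hqr
  haveI : Fact r.Prime := ⟨hrprime⟩
  haveI : CharP Fqm r := charP_of_injective_algebraMap (algebraMap Fq Fqm).injective r
  have hadd : ∀ x y : Fqm, (x + y) ^ Q = x ^ Q + y ^ Q := by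
    intro x y
    rw [hQdef, hqr, ← pow_mul]
    exact add_pow_char_pow x y (p := r) (n := ↑n * s)
  have hfixFq : ∀ a : Fq, (algebraMap Fq Fqm a) ^ Q = algebraMap Fq Fqm a := by
    intro a
    rw [← map_pow, hQdef, ← hq, FiniteField.pow_card_pow]
  have hker : ∀ x : Fqm, x ^ Q = x ↔ ∃ a : Fq, algebraMap Fq Fqm a = x := by
    intro x
    constructor
    · intro hx
      have hxm : x ^ q ^ m = x := by
        rw [← hcardFqm]; exact FiniteField.pow_card x
      have hxq : x ^ q = x := aux_pow_descent q s m (by omega) hgcd x hxm hx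
      exact aux_fixed_mem_range x (by rw [hq]; exact hxq)
    · rintro ⟨a, rfl⟩
      exact hfixFq a
  -- the linear map L
  set Lhat : Fqm →ₗ[Fq] Fqm :=
    { toFun := fun x => x ^ Q - x
      map_add' := by intro x y; rw [hadd]; ring
      map_smul' := by
        intro a x
        simp only [Algebra.smul_def, RingHom.id_apply, mul_pow, hfixFq]
        ring } with hLhat
  have hLapp : ∀ x : Fqm, Lhat x = x ^ Q - x := fun x => rfl
  have hkerL : LinearMap.ker Lhat = LinearMap.range (Algebra.linearMap Fq Fqm) := by
    ext x
    simp only [LinearMap.mem_ker, LinearMap.mem_range, Algebra.linearMap_apply, hLapp,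
      sub_eq_zero]
    exact hker x
  have h1 : Module.finrank Fq (LinearMap.range (Algebra.linearMap Fq Fqm)) = 1 := by
    rw [LinearMap.finrank_range_of_inj (algebraMap Fq Fqm).injective]
    exact Module.finrank_self Fq
  have h2 := LinearMap.finrank_range_add_finrank_ker Lhat
  rw [hkerL, h1, hdeg] at h2
  have hVrank : Module.finrank Fq (LinearMap.range Lhat) = m - 1 := by omega
  haveI : Fintype (LinearMap.range Lhat) := Fintype.ofFinite _
  have hcardV : Fintype.card (LinearMap.range Lhat) = q ^ (m - 1) := by
    rw [Module.card_eq_pow_finrank (K := Fq) (V := LinearMap.range Lhat), hq, hVrank]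
  -- representation of p
  have hset : {r : MvPolynomial (Fin k) Fqm | ∃ i j : Fin k, i < j ∧
      r = X i ^ Q * X j - X i * X j ^ Q} =
      Set.range (fun t : {t : Fin k × Fin k // t.1 < t.2} =>
        (X t.1.1 ^ Q * X t.1.2 - X t.1.1 * X t.1.2 ^ Q : MvPolynomial (Fin k) Fqm)) := by
    ext r
    constructor
    · rintro ⟨i, j, hij, rfl⟩; exact ⟨⟨(i, j), hij⟩, rfl⟩
    · rintro ⟨⟨⟨i, j⟩, hij⟩, rfl⟩; exact ⟨i, j, hij, rfl⟩
  rw [formSpace, hset, Submodule.mem_span_range_iff_exists_fun] at hp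
  obtain ⟨c, hc⟩ := hp
  set c' : Fin k × Fin k → Fqm := fun t => if h : t.1 < t.2 then c ⟨t, h⟩ else 0 with hc'
  have hc'0 : ∀ t : Fin k × Fin k, ¬ t.1 < t.2 → c' t = 0 := by
    intro t ht; rw [hc']; exact dif_neg ht
  have hpeq : p = ∑ t : Fin k × Fin k,
      c' t • (X t.1 ^ Q * X t.2 - X t.1 * X t.2 ^ Q) := by
    rw [← hc]
    rw [← Finset.sum_filter_of_ne (p := fun t : Fin k × Fin k => t.1 < t.2)
      (fun t _ hne => by
        by_contra hlt
        exact hne (by rw [hc'0 t hlt, zero_smul]))]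
    rw [Finset.sum_subtype (p := fun t : Fin k × Fin k => t.1 < t.2) _ (by simp) (fun t : Fin k × Fin k =>
      c' t • (X t.1 ^ Q * X t.2 - X t.1 * X t.2 ^ Q))]
    apply Finset.sum_congr rfl
    intro t _
    congr 1
    simp [hc', t.2]
  -- evaluation formula
  have heval : ∀ v : Fin k → Fqm, eval v p =
      ∑ t : Fin k × Fin k, c' t * (v t.1 ^ Q * v t.2 - v t.1 * v t.2 ^ Q) := by
    intro v
    rw [hpeq, map_sum]
    apply Finset.sum_congr rfl
    intro t _
    simp [smul_eq_mul]
  -- key column equations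
  set C : Fin k → Fin k → Fqm := fun i j => c' (i, j) - c' (j, i) with hCdef
  have key : ∀ α : Fin k → Fqm, (∀ v ∈ coset Fq Fqm α, eval v p = 0) →
      ∀ j : Fin k, ∑ i, C i j * (α i ^ Q - α i) = 0 := by
    intro α hα j
    have hvan : ∀ a : Fin k → Fq,
        eval (α + fun i => algebraMap Fq Fqm (a i)) p = 0 :=
      fun a => hα _ ⟨a, rfl⟩
    have hexp : ∀ a : Fin k → Fq,
        eval (α + fun i => algebraMap Fq Fqm (a i)) p = eval α p +
        ∑ t : Fin k × Fin k, c' t *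
          ((α t.1 ^ Q - α t.1) * algebraMap Fq Fqm (a t.2) -
            algebraMap Fq Fqm (a t.1) * (α t.2 ^ Q - α t.2)) := by
      intro a
      rw [heval, heval, ← Finset.sum_add_distrib]
      apply Finset.sum_congr rfl
      intro t _
      rw [← mul_add]
      congr 1
      have h1 : (α + fun i => algebraMap Fq Fqm (a i)) t.1
          = α t.1 + algebraMap Fq Fqm (a t.1) := rfl
      have h2 : (α + fun i => algebraMap Fq Fqm (a i)) t.2
          = α t.2 + algebraMap Fq Fqm (a t.2) := rfl
      rw [h1, h2, hadd, hadd, hfixFq, hfixFq]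
      ring
    have h0 : eval α p = 0 := by
      have := hexp 0
      rw [hvan 0] at this
      simp only [Pi.zero_apply, map_zero, mul_zero, zero_mul, sub_zero, zero_sub,
        mul_neg, neg_zero, Finset.sum_const_zero, add_zero] at this
      exact this.symm
    have hlin : ∀ a : Fin k → Fq,
        ∑ t : Fin k × Fin k, c' t *
          ((α t.1 ^ Q - α t.1) * algebraMap Fq Fqm (a t.2) -
            algebraMap Fq Fqm (a t.1) * (α t.2 ^ Q - α t.2)) = 0 := by
      intro a
      have := hexp a
      rw [hvan a, h0, zero_add] at this
      exact this.symm
    have := hlin (Pi.single j 1)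
    simp only [Pi.single_apply, apply_ite (algebraMap Fq Fqm), map_one, map_zero,
      mul_ite, mul_one, mul_zero, ite_mul, one_mul, zero_mul] at this
    rw [Fintype.sum_prod_type] at this
    simp only [mul_sub, Finset.sum_sub_distrib, mul_ite, mul_zero, mul_one,
      Finset.sum_ite_eq', Finset.sum_ite_eq, Finset.mem_univ, if_true] at this
    rw [hCdef]
    have hdbl : (∑ x : Fin k, ∑ x1 : Fin k,
        if x = j then c' (x, x1) * α x1 ^ Q - c' (x, x1) * α x1 else 0)
        = ∑ x1 : Fin k, (c' (j, x1) * α x1 ^ Q - c' (j, x1) * α x1) := by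
      rw [Finset.sum_comm]
      simp [Finset.sum_ite_eq']
    rw [hdbl] at this
    simp only [sub_mul, mul_sub, Finset.sum_sub_distrib]
    simp only [mul_sub, Finset.sum_sub_distrib] at this
    linear_combination this
    -- nonzero coefficient
  have hc'ne : ∃ t : Fin k × Fin k, c' t ≠ 0 := by
    by_contra h
    push_neg at h
    apply hp0
    rw [hpeq]
    simp [h]
  obtain ⟨t0, ht0⟩ := hc'ne
  have hlt0 : t0.1 < t0.2 := by
    by_contra h
    exact ht0 (hc'0 t0 h)
  set i0 := t0.1 with hi0
  set j0 := t0.2 with hj0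
  have hne0 : i0 ≠ j0 := ne_of_lt hlt0
  have hCij : C i0 j0 ≠ 0 := by
    have hz : c' (j0, i0) = 0 := hc'0 _ (lt_asymm hlt0)
    have he : c' (i0, j0) = c' t0 := by rw [hi0, hj0]
    rw [hCdef]
    simp only [hz, sub_zero]
    rwa [he]
  have hCdiag : ∀ i, C i i = 0 := fun i => sub_self _
  have hCskew : C j0 i0 = -C i0 j0 := by rw [hCdef]; ring
  set Scos := {S : Set (Fin k → Fqm) |
      (∃ α : Fin k → Fqm, S = coset Fq Fqm α) ∧ ∀ v ∈ S, eval v p = 0} with hScos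
  have hchoose : ∀ S : Scos, ∃ α : Fin k → Fqm, S.1 = coset Fq Fqm α := fun S => S.2.1
  choose alp halp using hchoose
  set β : Scos → Fin k → Fqm := fun S i => (alp S i) ^ Q - alp S i with hβ
  have hcol : ∀ S : Scos, ∀ j : Fin k, ∑ i, C i j * β S i = 0 := by
    intro S j
    exact key (alp S) (by rw [← halp S]; exact S.2.2) j
  set F : Scos → ({i : Fin k // ¬(i = i0 ∨ i = j0)} → LinearMap.range Lhat) :=
    fun S i => ⟨β S i.1, ⟨alp S i.1, rfl⟩⟩ with hF
  have hinj : Function.Injective F := by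
    intro S S' h
    have hoff : ∀ i : Fin k, ¬(i = i0 ∨ i = j0) → β S i = β S' i := by
      intro i hi
      have h2 := congrFun h ⟨i, hi⟩
      exact Subtype.ext_iff.mp h2
    have hbi0 : β S i0 = β S' i0 := by
      have e1 := hcol S j0
      have e2 := hcol S' j0
      have esplit : ∀ T : Scos, ∑ i, C i j0 * β T i =
          C i0 j0 * β T i0 + ∑ i ∈ (Finset.univ.erase i0).erase j0, C i j0 * β T i := by
        intro T
        rw [← Finset.sum_erase_add _ _ (Finset.mem_univ i0)]
        rw [← Finset.sum_erase_add _ _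
          (Finset.mem_erase.mpr ⟨Ne.symm hne0, Finset.mem_univ j0⟩)]
        rw [hCdiag j0, zero_mul, add_zero]
        ring
      rw [esplit S] at e1
      rw [esplit S'] at e2
      have hsums : ∑ i ∈ (Finset.univ.erase i0).erase j0, C i j0 * β S i
          = ∑ i ∈ (Finset.univ.erase i0).erase j0, C i j0 * β S' i := by
        apply Finset.sum_congr rfl
        intro i hi
        rw [Finset.mem_erase, Finset.mem_erase] at hi
        rw [hoff i (by tauto)]
      rw [hsums] at e1
      have hmm : C i0 j0 * β S i0 = C i0 j0 * β S' i0 := by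
        linear_combination e1 - e2
      exact mul_left_cancel₀ hCij hmm
    have hbj0 : β S j0 = β S' j0 := by
      have hC0' : C j0 i0 ≠ 0 := by rw [hCskew]; exact neg_ne_zero.mpr hCij
      have e1 := hcol S i0
      have e2 := hcol S' i0
      have esplit : ∀ T : Scos, ∑ i, C i i0 * β T i =
          C j0 i0 * β T j0 + ∑ i ∈ (Finset.univ.erase j0).erase i0, C i i0 * β T i := by
        intro T
        rw [← Finset.sum_erase_add _ _ (Finset.mem_univ j0)]
        rw [← Finset.sum_erase_add _ _
          (Finset.mem_erase.mpr ⟨hne0, Finset.mem_univ i0⟩)]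
        rw [hCdiag i0, zero_mul, add_zero]
        ring
      rw [esplit S] at e1
      rw [esplit S'] at e2
      have hsums : ∑ i ∈ (Finset.univ.erase j0).erase i0, C i i0 * β S i
          = ∑ i ∈ (Finset.univ.erase j0).erase i0, C i i0 * β S' i := by
        apply Finset.sum_congr rfl
        intro i hi
        rw [Finset.mem_erase, Finset.mem_erase] at hi
        rw [hoff i (by tauto)]
      rw [hsums] at e1
      have hmm : C j0 i0 * β S j0 = C j0 i0 * β S' j0 := by
        linear_combination e1 - e2
      exact mul_left_cancel₀ hC0' hmm
    have hall : ∀ i, β S i = β S' i := by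
      intro i
      by_cases hi : i = i0 ∨ i = j0
      · rcases hi with rfl | rfl
        · exact hbi0
        · exact hbj0
      · exact hoff i hi
    have hmem : ∀ i, ∃ b : Fq, algebraMap Fq Fqm b = alp S i - alp S' i := by
      intro i
      have hz : Lhat (alp S i - alp S' i) = 0 := by
        rw [map_sub, hLapp, hLapp]
        have h3 := hall i
        simp only [hβ] at h3
        linear_combination h3
      have h4 : alp S i - alp S' i ∈ LinearMap.ker Lhat := hz
      rw [hkerL] at h4
      obtain ⟨b, hb⟩ := h4
      exact ⟨b, hb⟩
    have hceq : coset Fq Fqm (alp S) = coset Fq Fqm (alp S') := aux_coset_eq _ _ hmem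
    exact Subtype.ext ((halp S).trans (hceq.trans (halp S').symm))
  have hbound := Nat.card_le_card_of_injective F hinj
  refine le_trans hbound ?_
  rw [Nat.card_eq_fintype_card, Fintype.card_fun, hcardV]
  have hsub : Fintype.card {i : Fin k // ¬(i = i0 ∨ i = j0)} = k - 2 := by
    rw [Fintype.card_subtype_compl]
    have h5 : Fintype.card {i : Fin k // i = i0 ∨ i = j0}
        = ({i0, j0} : Finset (Fin k)).card := by
      rw [← Fintype.card_coe]
      apply Fintype.card_congr
      apply Equiv.subtypeEquivRight
      intro i
      simp
    rw [h5, Finset.card_insert_of_notMem (by simp [hne0]), Finset.card_singleton,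
      Fintype.card_fin]
  rw [hsub, ← pow_mul, Nat.mul_comm]
end
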